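/- arXiv:2407.18577 — 6 statements merged into one kernel-verified Lean document; each statement's English description precedes it below -/
import Mathlib

section
/- Let p, q ≥ 1 and let Ω be a proper dually convex domain of Ein^{p,q}. Then for every maximal projectively parametrized lightlike geodesic α : I → Ω and all s, t ∈ I, one has δ^Ω(α(s), α(t)) = d_hyp(s, t). -/
noncomputable section

open scoped LinearAlgebra.Projectivization ENNReal
open Projectivization Filter Topology Set

variable {W : Type} [AddCommGroup W] [Module ℝ W] [TopologicalSpace W]

instance projTopology : TopologicalSpace (ℙ ℝ W) :=
  inferInstanceAs (TopologicalSpace (Quotient (projectivizationSetoid ℝ W)))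

/-- The null cone in projective space determined by a quadratic form `v ↦ Bf v v`. -/
def einSet (Bf : W → W → ℝ) : Set (ℙ ℝ W) := {x | Bf x.rep x.rep = 0}

/-- The lightcone of a point of the Einstein universe. -/
def lightcone (Bf : W → W → ℝ) (x : ℙ ℝ W) : Set (ℙ ℝ W) :=
  {y | y ∈ einSet Bf ∧ Bf x.rep y.rep = 0}

/-- A domain: nonempty connected open subset of the Einstein universe
(open and connected in the subspace topology of `einSet Bf`). -/
def IsEinDomain (Bf : W → W → ℝ) (Ω : Set (ℙ ℝ W)) : Prop :=
  Ω ⊆ einSet Bf ∧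
  IsOpen (Subtype.val ⁻¹' Ω : Set (einSet Bf)) ∧
  IsConnected (Subtype.val ⁻¹' Ω : Set (einSet Bf))

/-- A proper domain: some lightcone misses the closure. -/
def IsProperDomain (Bf : W → W → ℝ) (Ω : Set (ℙ ℝ W)) : Prop :=
  IsEinDomain Bf Ω ∧ ∃ x ∈ einSet Bf, closure Ω ∩ lightcone Bf x = ∅

/-- The projective transformation induced by a linear automorphism. -/
def projMap (g : W ≃ₗ[ℝ] W) : ℙ ℝ W → ℙ ℝ W :=
  Projectivization.map (g : W →ₗ[ℝ] W) g.injective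

/-- The conformal group of a domain. -/
def Conf (Bf : W → W → ℝ) (Ω : Set (ℙ ℝ W)) : Set (W ≃ₗ[ℝ] W) :=
  {g | (∀ v, Bf (g v) (g v) = Bf v v) ∧ projMap g '' Ω = Ω}

/-- Quasi-homogeneity of a domain. -/
def IsQuasiHomogeneous (Bf : W → W → ℝ) (Ω : Set (ℙ ℝ W)) : Prop :=
  ∃ K : Set (ℙ ℝ W), K ⊆ Ω ∧ IsCompact K ∧
    Ω = ⋃ g ∈ Conf Bf Ω, projMap g '' K

/-- Dual convexity: every frontier point admits a supporting lightcone. -/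
def IsDuallyConvex (Bf : W → W → ℝ) (Ω : Set (ℙ ℝ W)) : Prop :=
  ∀ a ∈ closure Ω \ Ω, ∃ b ∈ einSet Bf, a ∈ lightcone Bf b ∧ lightcone Bf b ∩ Ω = ∅

/-- The hyperbolic distance on the interval `(-1,1)`. -/
def dHyp (s t : ℝ) : ℝ := |Real.log (((1 + t) * (1 - s)) / ((1 - t) * (1 + s)))|

/-- The interval of parameters. -/
def II : Set ℝ := Set.Ioo (-1 : ℝ) 1

/-- A projectively parametrized lightlike geodesic with values in `Ω`. -/
def IsLightGeodesic (Bf : W → W → ℝ) (Ω : Set (ℙ ℝ W)) (α : ℝ → ℙ ℝ W) : Prop :=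
  ∃ (u w : W) (a b c d : ℝ),
    LinearIndependent ℝ ![u, w] ∧
    Bf u u = 0 ∧ Bf u w = 0 ∧ Bf w w = 0 ∧
    a * d - b * c ≠ 0 ∧
    ∀ t ∈ II, ∃ h : (a * t + b) • u + (c * t + d) • w ≠ 0,
      α t = Projectivization.mk ℝ ((a * t + b) • u + (c * t + d) • w) h ∧ α t ∈ Ω

/-- `IsChainCost Bf Ω x y N c` : there is a chain of index `N` from `x` to `y` in `Ω`
whose cost is `c`. -/
def IsChainCost (Bf : W → W → ℝ) (Ω : Set (ℙ ℝ W)) (x y : ℙ ℝ W) (N : ℕ) (c : ℝ) : Prop :=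
  ∃ (xs : Fin (N + 1) → ℙ ℝ W) (αs : Fin N → ℝ → ℙ ℝ W) (ss ts : Fin N → ℝ),
    xs 0 = x ∧ xs (Fin.last N) = y ∧
    (∀ i : Fin N, IsLightGeodesic Bf Ω (αs i) ∧ ss i ∈ II ∧ ts i ∈ II ∧
      αs i (ss i) = xs i.castSucc ∧ αs i (ts i) = xs i.succ) ∧
    c = ∑ i : Fin N, dHyp (ss i) (ts i)

/-- The Markowitz pseudodistance of `Ω`, with values in `[0,∞]`. -/
def markowitz (Bf : W → W → ℝ) (Ω : Set (ℙ ℝ W)) (x y : ℙ ℝ W) : ℝ≥0∞ :=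
  sInf {e | ∃ (N : ℕ) (c : ℝ), 1 ≤ N ∧ IsChainCost Bf Ω x y N c ∧ e = ENNReal.ofReal c}

/-- The Markowitz pseudodistance restricted to chains of index at most `Nmax`. -/
def markowitzN (Bf : W → W → ℝ) (Ω : Set (ℙ ℝ W)) (Nmax : ℕ) (x y : ℙ ℝ W) : ℝ≥0∞ :=
  sInf {e | ∃ (N : ℕ) (c : ℝ), 1 ≤ N ∧ N ≤ Nmax ∧ IsChainCost Bf Ω x y N c ∧
    e = ENNReal.ofReal c}

/-- The projectivization of a linear subspace. -/
def projSet (Pl : Submodule ℝ W) : Set (ℙ ℝ W) := {y | y.rep ∈ Pl}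

/-- A photon subspace: a totally isotropic plane. -/
def IsPhotonSub (Bf : W → W → ℝ) (Pl : Submodule ℝ W) : Prop :=
  Module.finrank ℝ Pl = 2 ∧ ∀ u ∈ Pl, ∀ w ∈ Pl, Bf u w = 0

/-- Photon-extremal points of the frontier of `Ω`. -/
def IsPhotonExtremal (Bf : W → W → ℝ) (Ω : Set (ℙ ℝ W)) (a : ℙ ℝ W) : Prop :=
  a ∈ closure Ω \ Ω ∧
  ∀ Pl : Submodule ℝ W, IsPhotonSub Bf Pl → a.rep ∈ Pl →
    ¬ ∃ U : Set (ℙ ℝ W), IsOpen U ∧ a ∈ U ∧ U ∩ projSet Pl ⊆ closure Ω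

/-- A maximal projectively parametrized lightlike geodesic in `Ω`: its image is
a connected component of `ℙ(Pl) ∩ Ω`. -/
def IsMaxLightGeodesic (Bf : W → W → ℝ) (Ω : Set (ℙ ℝ W)) (α : ℝ → ℙ ℝ W) : Prop :=
  ∃ (u w : W) (a b c d : ℝ),
    LinearIndependent ℝ ![u, w] ∧
    Bf u u = 0 ∧ Bf u w = 0 ∧ Bf w w = 0 ∧
    a * d - b * c ≠ 0 ∧
    (∀ t ∈ II, ∃ h : (a * t + b) • u + (c * t + d) • w ≠ 0,
      α t = Projectivization.mk ℝ ((a * t + b) • u + (c * t + d) • w) h ∧ α t ∈ Ω) ∧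
    α '' II = connectedComponentIn (projSet (Submodule.span ℝ {u, w}) ∩ Ω) (α 0)

/-- The coordinate bilinear form of signature `(p+1, q+1)` on `ℝⁿ`, `n = p+q+2`. -/
def bForm (p q : ℕ) (v w : Fin (p + q + 2) → ℝ) : ℝ :=
  ∑ i : Fin (p + q + 2), (if (i : ℕ) ≤ p then (-1 : ℝ) else 1) * v i * w i



namespace MyAux

lemma affine_pos {A B : ℝ} (h : ∀ x ∈ II, 0 < A * x + B) {s t : ℝ}
    (hs : s ∈ II) (ht : t ∈ II) (hst : s ≤ t) :
    (1 - t) * (A * s + B) ≤ (1 - s) * (A * t + B) ∧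
    (1 + s) * (A * t + B) ≤ (1 + t) * (A * s + B) := by
  obtain ⟨hs1, hs2⟩ := hs
  obtain ⟨ht1, ht2⟩ := ht
  have hc : Continuous fun x : ℝ => A * x + B := (continuous_const.mul continuous_id).add continuous_const
  have hf1 : 0 ≤ A * 1 + B := by
    by_contra hneg
    push_neg at hneg
    have h0 : 0 < A * 0 + B := h 0 (by constructor <;> norm_num)
    have := intermediate_value_Ioo' (by norm_num : (0:ℝ) ≤ 1) hc.continuousOn
    obtain ⟨x, hx, hfx⟩ := this ⟨hneg, h0⟩
    exact absurd hfx (ne_of_gt (h x ⟨by linarith [hx.1], hx.2⟩))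
  have hfm1 : 0 ≤ A * (-1) + B := by
    by_contra hneg
    push_neg at hneg
    have h0 : 0 < A * 0 + B := h 0 (by constructor <;> norm_num)
    have := intermediate_value_Ioo (by norm_num : (-1:ℝ) ≤ 0) hc.continuousOn
    obtain ⟨x, hx, hfx⟩ := this ⟨hneg, h0⟩
    exact absurd hfx (ne_of_gt (h x ⟨hx.1, by linarith [hx.2]⟩))
  constructor
  · nlinarith [mul_nonneg (sub_nonneg.2 hst) hf1]
  · nlinarith [mul_nonneg (sub_nonneg.2 hst) hfm1]

lemma affine_same_sign {A B : ℝ} (h : ∀ x ∈ II, A * x + B ≠ 0) {s t : ℝ}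
    (hs : s ∈ II) (ht : t ∈ II) :
    0 < (A * s + B) * (A * t + B) := by
  rcases lt_trichotomy ((A * s + B) * (A * t + B)) 0 with hlt | heq | hgt
  · exfalso
    have hc : Continuous fun x : ℝ => A * x + B := (continuous_const.mul continuous_id).add continuous_const
    rcases le_total s t with hst | hst
    · rcases (mul_neg_iff.1 hlt) with ⟨h1, h2⟩ | ⟨h1, h2⟩
      · obtain ⟨x, hx, hfx⟩ := intermediate_value_Ioo' hst hc.continuousOn ⟨h2, h1⟩
        exact h x ⟨lt_trans hs.1 hx.1, lt_trans hx.2 ht.2⟩ hfx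
      · obtain ⟨x, hx, hfx⟩ := intermediate_value_Ioo hst hc.continuousOn ⟨h1, h2⟩
        exact h x ⟨lt_trans hs.1 hx.1, lt_trans hx.2 ht.2⟩ hfx
    · rcases (mul_neg_iff.1 hlt) with ⟨h1, h2⟩ | ⟨h1, h2⟩
      · obtain ⟨x, hx, hfx⟩ := intermediate_value_Ioo hst hc.continuousOn ⟨h2, h1⟩
        exact h x ⟨lt_trans ht.1 hx.1, lt_trans hx.2 hs.2⟩ hfx
      · obtain ⟨x, hx, hfx⟩ := intermediate_value_Ioo' hst hc.continuousOn ⟨h1, h2⟩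
        exact h x ⟨lt_trans ht.1 hx.1, lt_trans hx.2 hs.2⟩ hfx
  · exact absurd (mul_eq_zero.1 heq) (by push_neg; exact ⟨h s hs, h t ht⟩)
  · exact hgt

lemma affine_abs_bound {A B : ℝ} (h : ∀ x ∈ II, A * x + B ≠ 0) {s t : ℝ}
    (hs : s ∈ II) (ht : t ∈ II) (hst : s ≤ t) :
    (1 - t) * |A * s + B| ≤ (1 - s) * |A * t + B| ∧
    (1 + s) * |A * t + B| ≤ (1 + t) * |A * s + B| := by
  rcases (h s hs).lt_or_gt with hneg | hpos
  · have hall : ∀ x ∈ II, 0 < (-A) * x + (-B) := by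
      intro x hx
      have := affine_same_sign h hs hx
      nlinarith
    have := affine_pos hall hs ht hst
    have e1 : |A * s + B| = (-A) * s + (-B) := by
      rw [abs_of_neg hneg]; ring
    have e2 : |A * t + B| = (-A) * t + (-B) := by
      have : A * t + B < 0 := by have := hall t ht; nlinarith
      rw [abs_of_neg this]; ring
    rw [e1, e2]; exact this
  · have hall : ∀ x ∈ II, 0 < A * x + B := by
      intro x hx
      have := affine_same_sign h hs hx
      nlinarith
    have := affine_pos hall hs ht hst
    rwa [abs_of_pos (hall s hs), abs_of_pos (hall t ht)]

end MyAux

namespace MyAux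

lemma log_le_log' {a b c d : ℝ} (ha : 0 < a) (hb : 0 < b) (hc : 0 < c) (hd : 0 < d)
    (h : a * b ≤ c * d) : Real.log a + Real.log b ≤ Real.log c + Real.log d := by
  rw [← Real.log_mul (ne_of_gt ha) (ne_of_gt hb), ← Real.log_mul (ne_of_gt hc) (ne_of_gt hd)]
  exact Real.log_le_log (by positivity) h

lemma affine_log_bound {A B : ℝ} (h : ∀ x ∈ II, A * x + B ≠ 0) {s t : ℝ}
    (hs : s ∈ II) (ht : t ∈ II) (hst : s ≤ t) :
    Real.log (1 - t) - Real.log (1 - s) ≤ Real.log (A * t + B) - Real.log (A * s + B) ∧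
    Real.log (A * t + B) - Real.log (A * s + B) ≤ Real.log (1 + t) - Real.log (1 + s) := by
  obtain ⟨h1, h2⟩ := affine_abs_bound h hs ht hst
  have p1 : (0:ℝ) < 1 - t := by linarith [ht.2]
  have p2 : (0:ℝ) < 1 - s := by linarith [hs.2]
  have p3 : (0:ℝ) < 1 + t := by linarith [ht.1]
  have p4 : (0:ℝ) < 1 + s := by linarith [hs.1]
  have p5 : (0:ℝ) < |A * s + B| := abs_pos.2 (h s hs)
  have p6 : (0:ℝ) < |A * t + B| := abs_pos.2 (h t ht)
  have e1 : Real.log (A * s + B) = Real.log |A * s + B| := (Real.log_abs _).symm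
  have e2 : Real.log (A * t + B) = Real.log |A * t + B| := (Real.log_abs _).symm
  constructor
  · have := log_le_log' p1 p5 p2 p6 h1
    rw [e1, e2]; linarith
  · have := log_le_log' p4 p6 p3 p5 h2
    rw [e1, e2]; linarith

lemma dHyp_eq_abs {s t : ℝ} (hs : s ∈ II) (ht : t ∈ II) :
    dHyp s t = |(Real.log (1 + t) - Real.log (1 - t)) -
      (Real.log (1 + s) - Real.log (1 - s))| := by
  have p1 : (0:ℝ) < 1 - t := by linarith [ht.2]
  have p2 : (0:ℝ) < 1 - s := by linarith [hs.2]
  have p3 : (0:ℝ) < 1 + t := by linarith [ht.1]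
  have p4 : (0:ℝ) < 1 + s := by linarith [hs.1]
  unfold dHyp
  rw [Real.log_div (by positivity) (by positivity),
    Real.log_mul (ne_of_gt p3) (ne_of_gt p2), Real.log_mul (ne_of_gt p1) (ne_of_gt p4)]
  congr 1; ring

lemma segment_bound {A B C D : ℝ} (hf : ∀ x ∈ II, A * x + B ≠ 0)
    (hg : ∀ x ∈ II, C * x + D ≠ 0) {s t : ℝ} (hs : s ∈ II) (ht : t ∈ II) :
    |(Real.log (A * t + B) - Real.log (C * t + D)) -
      (Real.log (A * s + B) - Real.log (C * s + D))| ≤ dHyp s t := by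
  rw [dHyp_eq_abs hs ht]
  rcases le_total s t with hst | hst
  · obtain ⟨hf1, hf2⟩ := affine_log_bound hf hs ht hst
    obtain ⟨hg1, hg2⟩ := affine_log_bound hg hs ht hst
    have p1 : (0:ℝ) < 1 - t := by linarith [ht.2]
    have p2 : (0:ℝ) < 1 - s := by linarith [hs.2]
    have p3 : (0:ℝ) < 1 + t := by linarith [ht.1]
    have p4 : (0:ℝ) < 1 + s := by linarith [hs.1]
    have m1 : Real.log (1 + s) ≤ Real.log (1 + t) :=
      Real.log_le_log p4 (by linarith)
    have m2 : Real.log (1 - t) ≤ Real.log (1 - s) :=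
      Real.log_le_log p1 (by linarith)
    exact abs_le_abs (by linarith) (by linarith)
  · obtain ⟨hf1, hf2⟩ := affine_log_bound hf ht hs hst
    obtain ⟨hg1, hg2⟩ := affine_log_bound hg ht hs hst
    have p1 : (0:ℝ) < 1 - t := by linarith [ht.2]
    have p2 : (0:ℝ) < 1 - s := by linarith [hs.2]
    have p3 : (0:ℝ) < 1 + t := by linarith [ht.1]
    have p4 : (0:ℝ) < 1 + s := by linarith [hs.1]
    have m1 : Real.log (1 + t) ≤ Real.log (1 + s) :=
      Real.log_le_log p3 (by linarith)
    have m2 : Real.log (1 - s) ≤ Real.log (1 - t) :=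
      Real.log_le_log p2 (by linarith)
    rw [← abs_neg, ← abs_neg (Real.log (1 + t) - Real.log (1 - t) -
      (Real.log (1 + s) - Real.log (1 - s)))]
    exact abs_le_abs (by linarith) (by linarith)

end MyAux

namespace MyAux

variable {p q : ℕ}

lemma bForm_smul_right (v x : Fin (p + q + 2) → ℝ) (r : ℝ) :
    bForm p q v (r • x) = r * bForm p q v x := by
  simp only [bForm, Pi.smul_apply, smul_eq_mul, Finset.mul_sum]
  exact Finset.sum_congr rfl fun i _ => by ring

lemma bForm_comb (v u w : Fin (p + q + 2) → ℝ) (r s : ℝ) :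
    bForm p q v (r • u + s • w) = r * bForm p q v u + s * bForm p q v w := by
  simp only [bForm, Pi.add_apply, Pi.smul_apply, smul_eq_mul, Finset.mul_sum,
    ← Finset.sum_add_distrib]
  exact Finset.sum_congr rfl fun i _ => by ring

/-- representative of mk is a nonzero multiple -/
lemma rep_mk_eq (v : Fin (p + q + 2) → ℝ) (hv : v ≠ 0) :
    ∃ c : ℝ, c ≠ 0 ∧ (Projectivization.mk ℝ v hv).rep = c • v := by
  obtain ⟨a, ha⟩ := Projectivization.exists_smul_eq_mk_rep ℝ v hv
  exact ⟨(a : ℝ), a.ne_zero, by rw [← ha]; rfl⟩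

/-- cross-ratio-type function -/
def crF (p q : ℕ) (vp vm : Fin (p + q + 2) → ℝ) (x : ℙ ℝ (Fin (p + q + 2) → ℝ)) : ℝ :=
  Real.log (bForm p q vp x.rep) - Real.log (bForm p q vm x.rep)

lemma crF_mk (vp vm v : Fin (p + q + 2) → ℝ) (hv : v ≠ 0)
    (h1 : bForm p q vp v ≠ 0) (h2 : bForm p q vm v ≠ 0) :
    crF p q vp vm (Projectivization.mk ℝ v hv) =
      Real.log (bForm p q vp v) - Real.log (bForm p q vm v) := by
  obtain ⟨c, hc, hrep⟩ := rep_mk_eq v hv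
  unfold crF
  rw [hrep, bForm_smul_right, bForm_smul_right, Real.log_mul hc h1, Real.log_mul hc h2]
  ring

end MyAux

namespace MyAux

variable {p q : ℕ}

lemma li_coeffs {u w : Fin (p + q + 2) → ℝ} (h : LinearIndependent ℝ ![u, w]) {x y : ℝ}
    (hxy : x • u + y • w = 0) : x = 0 ∧ y = 0 :=
  LinearIndependent.pair_iff.1 h x y hxy

lemma gamma_ne {u w : Fin (p + q + 2) → ℝ} (hind : LinearIndependent ℝ ![u, w])
    {x y : ℝ} (hxy : ¬(x = 0 ∧ y = 0)) : x • u + y • w ≠ 0 :=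
  fun h => hxy (li_coeffs hind h)

lemma mk'_continuous :
    Continuous (Projectivization.mk' ℝ : {v : Fin (p + q + 2) → ℝ // v ≠ 0} →
      ℙ ℝ (Fin (p + q + 2) → ℝ)) :=
  continuous_quotient_mk'

lemma endpoint_mem (Ω : Set (ℙ ℝ (Fin (p + q + 2) → ℝ)))
    (α : ℝ → ℙ ℝ (Fin (p + q + 2) → ℝ)) (u w : Fin (p + q + 2) → ℝ) (a b c d : ℝ)
    (hind : LinearIndependent ℝ ![u, w])
    (hdet : a * d - b * c ≠ 0)
    (hgeo : ∀ t ∈ II, ∃ h : (a * t + b) • u + (c * t + d) • w ≠ 0,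
      α t = Projectivization.mk ℝ ((a * t + b) • u + (c * t + d) • w) h ∧ α t ∈ Ω)
    (hmax : α '' II = connectedComponentIn (projSet (Submodule.span ℝ {u, w}) ∩ Ω) (α 0))
    (hne1 : (a * 1 + b) • u + (c * 1 + d) • w ≠ 0) :
    Projectivization.mk ℝ ((a * 1 + b) • u + (c * 1 + d) • w) hne1 ∈ closure Ω \ Ω := by
  set γ : ℝ → (Fin (p + q + 2) → ℝ) := fun t => (a * t + b) • u + (c * t + d) • w with hγdef
  have hγcont : Continuous γ := by
    apply Continuous.add
    · exact ((continuous_const.mul continuous_id).add continuous_const).smul continuous_const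
    · exact ((continuous_const.mul continuous_id).add continuous_const).smul continuous_const
  have hγII : ∀ t ∈ II, γ t ≠ 0 := fun t ht => (hgeo t ht).choose
  -- the sequence approaching 1
  have hseqmem : ∀ n : ℕ, (1 - ((n : ℝ) + 2)⁻¹) ∈ II := by
    intro n
    have h1 : (0:ℝ) < (n : ℝ) + 2 := by positivity
    have h2 : ((n : ℝ) + 2)⁻¹ ≤ 1/2 := by
      rw [inv_le_comm₀ h1 (by norm_num)]
      push_cast; linarith [Nat.cast_nonneg (α := ℝ) n]
    have h3 : (0:ℝ) < ((n : ℝ) + 2)⁻¹ := by positivity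
    constructor <;> [linarith; linarith]
  have hseqtend : Tendsto (fun n : ℕ => (1 - ((n : ℝ) + 2)⁻¹)) atTop (𝓝 1) := by
    have h0 : Tendsto (fun n : ℕ => ((n : ℝ) + 2)) atTop atTop :=
      tendsto_atTop_add_const_right _ 2 tendsto_natCast_atTop_atTop
    have h1 : Tendsto (fun n : ℕ => ((n : ℝ) + 2)⁻¹) atTop (𝓝 0) := h0.inv_tendsto_atTop
    have h2 : Tendsto (fun n : ℕ => 1 - ((n : ℝ) + 2)⁻¹) atTop (𝓝 (1 - 0)) :=
      tendsto_const_nhds.sub h1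
    simpa using h2
  constructor
  · -- in closure
    have htendγ : Tendsto (fun n : ℕ => γ (1 - ((n : ℝ) + 2)⁻¹)) atTop (𝓝 (γ 1)) :=
      (hγcont.tendsto 1).comp hseqtend
    have htendsub : Tendsto (fun n : ℕ =>
        (⟨γ (1 - ((n : ℝ) + 2)⁻¹), hγII _ (hseqmem n)⟩ :
          {v : Fin (p + q + 2) → ℝ // v ≠ 0})) atTop (𝓝 ⟨γ 1, hne1⟩) :=
      tendsto_subtype_rng.2 htendγ
    have htend := (mk'_continuous.tendsto _).comp htendsub
    refine mem_closure_of_tendsto htend (Eventually.of_forall fun n => ?_)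
    obtain ⟨h, heq, hmem⟩ := hgeo _ (hseqmem n)
    rw [heq] at hmem
    exact hmem
  · -- not in Ω
    intro hmem
    have hIcc : ∀ t : ℝ, t ∈ Icc (0:ℝ) 1 → γ t ≠ 0 := by
      intro t ht
      rcases eq_or_lt_of_le ht.2 with h1 | h1
      · subst h1; exact hne1
      · exact hγII t ⟨by linarith [ht.1], h1⟩
    haveI : ConnectedSpace (Icc (0:ℝ) 1) :=
      Subtype.connectedSpace (isConnected_Icc (by norm_num))
    set qm : Icc (0:ℝ) 1 → ℙ ℝ (Fin (p + q + 2) → ℝ) :=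
      fun t => Projectivization.mk' ℝ ⟨γ t.1, hIcc t.1 t.2⟩ with hqmdef
    have hqmcont : Continuous qm :=
      mk'_continuous.comp ((hγcont.comp continuous_subtype_val).subtype_mk _)
    have hC : IsConnected (range qm) := isConnected_range hqmcont
    have hrepmem : ∀ (v : Fin (p + q + 2) → ℝ) (hv : v ≠ 0), v ∈ Submodule.span ℝ {u, w} →
        (Projectivization.mk ℝ v hv).rep ∈ Submodule.span ℝ {u, w} := by
      intro v hv hvmem
      obtain ⟨e, he⟩ := Projectivization.exists_smul_eq_mk_rep ℝ v hv
      rw [← he]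
      exact Submodule.smul_mem _ _ hvmem
    have hγspan : ∀ t : ℝ, γ t ∈ Submodule.span ℝ {u, w} := by
      intro t
      exact Submodule.add_mem _
        (Submodule.smul_mem _ _ (Submodule.subset_span (Set.mem_insert _ _)))
        (Submodule.smul_mem _ _ (Submodule.subset_span
          (Set.mem_insert_of_mem _ (Set.mem_singleton _))))
    have hCsub : range qm ⊆ projSet (Submodule.span ℝ {u, w}) ∩ Ω := by
      rintro x ⟨t, rfl⟩
      constructor
      · have : (qm t).rep ∈ Submodule.span ℝ {u, w} := by
          simp only [hqmdef, mk'_eq_mk]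
          exact hrepmem _ _ (hγspan t.1)
        exact this
      · rcases eq_or_lt_of_le t.2.2 with h1 | h1
        · have : qm t = Projectivization.mk ℝ ((a * 1 + b) • u + (c * 1 + d) • w) hne1 := by
            rw [hqmdef]
            simp only [mk'_eq_mk]
            congr 1
            rw [h1]
          rw [this]; exact hmem
        · obtain ⟨h, heq, hΩ⟩ := hgeo t.1 ⟨by linarith [t.2.1], h1⟩
          have : qm t = α t.1 := by rw [hqmdef]; simp only [mk'_eq_mk]; rw [heq]
          rw [this]; exact hΩ
    have hα0 : α 0 ∈ range qm := by
      obtain ⟨h, heq, hΩ⟩ := hgeo 0 (by constructor <;> norm_num)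
      exact ⟨⟨0, by norm_num, by norm_num⟩, by simp only [hqmdef, mk'_eq_mk]; rw [heq]⟩
    have hsubcc := hC.isPreconnected.subset_connectedComponentIn hα0 hCsub
    have hin : Projectivization.mk ℝ ((a * 1 + b) • u + (c * 1 + d) • w) hne1 ∈ α '' II := by
      rw [hmax]
      apply hsubcc
      exact ⟨⟨1, by norm_num, le_refl 1⟩, by simp only [hqmdef, mk'_eq_mk]; rfl⟩
    obtain ⟨t, htII, hteq⟩ := hin
    obtain ⟨h, heq, -⟩ := hgeo t htII
    rw [heq] at hteq
    rw [Projectivization.mk_eq_mk_iff] at hteq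
    obtain ⟨e, he⟩ := hteq
    have hzero : ((a * t + b) - (e : ℝ) * (a * 1 + b)) • u +
        ((c * t + d) - (e : ℝ) * (c * 1 + d)) • w = 0 := by
      have : (e : ℝ) • ((a * 1 + b) • u + (c * 1 + d) • w) =
          (a * t + b) • u + (c * t + d) • w := he
      rw [smul_add, smul_smul, smul_smul] at this
      have h4 : ((a * t + b) - (e : ℝ) * (a * 1 + b)) • u +
          ((c * t + d) - (e : ℝ) * (c * 1 + d)) • w =
          ((a * t + b) • u + (c * t + d) • w) -
          (((e : ℝ) * (a * 1 + b)) • u + ((e : ℝ) * (c * 1 + d)) • w) := by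
        rw [sub_smul, sub_smul]; abel
      rw [h4, this, sub_self]
    obtain ⟨h1, h2⟩ := li_coeffs hind hzero
    have ht1 : t ≠ 1 := ne_of_lt htII.2
    have e1 : a * t + b = (e : ℝ) * (a * 1 + b) := by linarith [h1]
    have e2 : c * t + d = (e : ℝ) * (c * 1 + d) := by linarith [h2]
    have : (a * d - b * c) * (t - 1) = 0 := by
      linear_combination (c * 1 + d) * e1 - (a * 1 + b) * e2
    rcases mul_eq_zero.1 this with h | h
    · exact hdet h
    · exact ht1 (by linarith)

end MyAux

namespace MyAux

variable {p q : ℕ}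

lemma cone_ne {Ω : Set (ℙ ℝ (Fin (p + q + 2) → ℝ))} (hsub : Ω ⊆ einSet (bForm p q))
    {b : ℙ ℝ (Fin (p + q + 2) → ℝ)} (hdisj : lightcone (bForm p q) b ∩ Ω = ∅)
    {x : ℙ ℝ (Fin (p + q + 2) → ℝ)} (hx : x ∈ Ω) :
    bForm p q b.rep x.rep ≠ 0 := by
  intro h0
  have : x ∈ lightcone (bForm p q) b ∩ Ω := ⟨⟨hsub hx, h0⟩, hx⟩
  rw [hdisj] at this
  exact this

lemma geo_affine_ne {Ω : Set (ℙ ℝ (Fin (p + q + 2) → ℝ))} (hsub : Ω ⊆ einSet (bForm p q))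
    {b₀ : ℙ ℝ (Fin (p + q + 2) → ℝ)} (hdisj : lightcone (bForm p q) b₀ ∩ Ω = ∅)
    {α : ℝ → ℙ ℝ (Fin (p + q + 2) → ℝ)} {u w : Fin (p + q + 2) → ℝ} {a b c d : ℝ}
    (hgeo : ∀ t ∈ II, ∃ h : (a * t + b) • u + (c * t + d) • w ≠ 0,
      α t = Projectivization.mk ℝ ((a * t + b) • u + (c * t + d) • w) h ∧ α t ∈ Ω) :
    ∀ x ∈ II, (a * bForm p q b₀.rep u + c * bForm p q b₀.rep w) * x +
      (b * bForm p q b₀.rep u + d * bForm p q b₀.rep w) ≠ 0 := by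
  intro x hx
  obtain ⟨h, heq, hmem⟩ := hgeo x hx
  have h1 : bForm p q b₀.rep (α x).rep ≠ 0 := cone_ne hsub hdisj hmem
  rw [heq] at h1
  obtain ⟨e, he, hrep⟩ := rep_mk_eq _ h
  rw [hrep, bForm_smul_right] at h1
  have h2 : bForm p q b₀.rep ((a * x + b) • u + (c * x + d) • w) ≠ 0 := by
    intro h3; rw [h3, mul_zero] at h1; exact h1 rfl
  rw [bForm_comb] at h2
  intro h4
  apply h2
  linear_combination h4

lemma geo_crF_val {Ω : Set (ℙ ℝ (Fin (p + q + 2) → ℝ))} (hsub : Ω ⊆ einSet (bForm p q))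
    {bp bm : ℙ ℝ (Fin (p + q + 2) → ℝ)}
    (hdp : lightcone (bForm p q) bp ∩ Ω = ∅) (hdm : lightcone (bForm p q) bm ∩ Ω = ∅)
    {α : ℝ → ℙ ℝ (Fin (p + q + 2) → ℝ)} {u w : Fin (p + q + 2) → ℝ} {a b c d : ℝ}
    (hgeo : ∀ t ∈ II, ∃ h : (a * t + b) • u + (c * t + d) • w ≠ 0,
      α t = Projectivization.mk ℝ ((a * t + b) • u + (c * t + d) • w) h ∧ α t ∈ Ω)
    {r : ℝ} (hr : r ∈ II) :
    crF p q bp.rep bm.rep (α r) =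
      Real.log ((a * bForm p q bp.rep u + c * bForm p q bp.rep w) * r +
        (b * bForm p q bp.rep u + d * bForm p q bp.rep w)) -
      Real.log ((a * bForm p q bm.rep u + c * bForm p q bm.rep w) * r +
        (b * bForm p q bm.rep u + d * bForm p q bm.rep w)) := by
  obtain ⟨h, heq, hmem⟩ := hgeo r hr
  have hfp := geo_affine_ne hsub hdp hgeo r hr
  have hfm := geo_affine_ne hsub hdm hgeo r hr
  have hvp : bForm p q bp.rep ((a * r + b) • u + (c * r + d) • w) =
      (a * bForm p q bp.rep u + c * bForm p q bp.rep w) * r +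
      (b * bForm p q bp.rep u + d * bForm p q bp.rep w) := by
    rw [bForm_comb]; ring
  have hvm : bForm p q bm.rep ((a * r + b) • u + (c * r + d) • w) =
      (a * bForm p q bm.rep u + c * bForm p q bm.rep w) * r +
      (b * bForm p q bm.rep u + d * bForm p q bm.rep w) := by
    rw [bForm_comb]; ring
  rw [heq, crF_mk _ _ _ h (by rw [hvp]; exact hfp) (by rw [hvm]; exact hfm), hvp, hvm]

lemma geo_crF_bound {Ω : Set (ℙ ℝ (Fin (p + q + 2) → ℝ))} (hsub : Ω ⊆ einSet (bForm p q))
    {bp bm : ℙ ℝ (Fin (p + q + 2) → ℝ)}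
    (hdp : lightcone (bForm p q) bp ∩ Ω = ∅) (hdm : lightcone (bForm p q) bm ∩ Ω = ∅)
    {A : ℝ → ℙ ℝ (Fin (p + q + 2) → ℝ)} (hA : IsLightGeodesic (bForm p q) Ω A)
    {s t : ℝ} (hs : s ∈ II) (ht : t ∈ II) :
    |crF p q bp.rep bm.rep (A t) - crF p q bp.rep bm.rep (A s)| ≤ dHyp s t := by
  obtain ⟨u, w, a, b, c, d, hind, huu, huw, hww, hdet, hgeo⟩ := hA
  rw [geo_crF_val hsub hdp hdm hgeo ht, geo_crF_val hsub hdp hdm hgeo hs]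
  exact segment_bound (geo_affine_ne hsub hdp hgeo) (geo_affine_ne hsub hdm hgeo) hs ht

lemma chain_bound {Ω : Set (ℙ ℝ (Fin (p + q + 2) → ℝ))} (hsub : Ω ⊆ einSet (bForm p q))
    {bp bm : ℙ ℝ (Fin (p + q + 2) → ℝ)}
    (hdp : lightcone (bForm p q) bp ∩ Ω = ∅) (hdm : lightcone (bForm p q) bm ∩ Ω = ∅)
    {x y : ℙ ℝ (Fin (p + q + 2) → ℝ)} {N : ℕ} {c : ℝ}
    (hcc : IsChainCost (bForm p q) Ω x y N c) :
    |crF p q bp.rep bm.rep y - crF p q bp.rep bm.rep x| ≤ c := by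
  obtain ⟨xs, αs, ss, ts, h0, hN, hstep, hsum⟩ := hcc
  set g : ℕ → ℝ := fun k => if h : k < N + 1 then crF p q bp.rep bm.rep (xs ⟨k, h⟩) else 0
    with hgdef
  set D : ℕ → ℝ := fun k => if h : k < N then dHyp (ss ⟨k, h⟩) (ts ⟨k, h⟩) else 0 with hDdef
  have hstepb : ∀ k ∈ Finset.range N, |g (k + 1) - g k| ≤ D k := by
    intro k hk
    rw [Finset.mem_range] at hk
    obtain ⟨hgeoI, hssI, htsI, heq1, heq2⟩ := hstep ⟨k, hk⟩
    have e1 : g (k + 1) = crF p q bp.rep bm.rep (αs ⟨k, hk⟩ (ts ⟨k, hk⟩)) := by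
      rw [hgdef]
      simp only [dif_pos (by omega : k + 1 < N + 1)]
      rw [heq2]
      rfl
    have e2 : g k = crF p q bp.rep bm.rep (αs ⟨k, hk⟩ (ss ⟨k, hk⟩)) := by
      rw [hgdef]
      simp only [dif_pos (by omega : k < N + 1)]
      rw [heq1]
      rfl
    have e3 : D k = dHyp (ss ⟨k, hk⟩) (ts ⟨k, hk⟩) := by rw [hDdef]; simp [hk]
    rw [e1, e2, e3]
    exact geo_crF_bound hsub hdp hdm hgeoI hssI htsI
  have htel : ∑ k ∈ Finset.range N, (g (k + 1) - g k) = g N - g 0 :=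
    Finset.sum_range_sub g N
  have hgN : g N = crF p q bp.rep bm.rep y := by
    rw [hgdef]
    simp only [dif_pos (by omega : N < N + 1)]
    rw [show (⟨N, by omega⟩ : Fin (N + 1)) = Fin.last N from rfl, hN]
  have hg0 : g 0 = crF p q bp.rep bm.rep x := by
    rw [hgdef]
    simp only [dif_pos (by omega : 0 < N + 1)]
    rw [show (⟨0, by omega⟩ : Fin (N + 1)) = 0 from rfl, h0]
  have hsum2 : c = ∑ k ∈ Finset.range N, D k := by
    rw [hsum, ← Fin.sum_univ_eq_sum_range D N]
    apply Finset.sum_congr rfl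
    intro i _
    rw [hDdef]
    simp only [dif_pos i.isLt, Fin.eta]
  calc |crF p q bp.rep bm.rep y - crF p q bp.rep bm.rep x|
      = |∑ k ∈ Finset.range N, (g (k + 1) - g k)| := by rw [htel, hgN, hg0]
    _ ≤ ∑ k ∈ Finset.range N, |g (k + 1) - g k| := Finset.abs_sum_le_sum_abs _ _
    _ ≤ ∑ k ∈ Finset.range N, D k := Finset.sum_le_sum hstepb
    _ = c := hsum2.symm

end MyAux

/-- On a proper dually convex domain, maximal lightlike geodesics are
isometric embeddings of the hyperbolic interval. -/
theorem stmt_7 (p q : ℕ) (hp : 1 ≤ p) (hq : 1 ≤ q)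
    (Ω : Set (ℙ ℝ (Fin (p + q + 2) → ℝ)))
    (hΩ : IsProperDomain (bForm p q) Ω)
    (hdc : IsDuallyConvex (bForm p q) Ω)
    (α : ℝ → ℙ ℝ (Fin (p + q + 2) → ℝ))
    (hα : IsMaxLightGeodesic (bForm p q) Ω α) :
    ∀ s ∈ II, ∀ t ∈ II,
      markowitz (bForm p q) Ω (α s) (α t) = ENNReal.ofReal (dHyp s t) := by
  intro s hs t ht
  obtain ⟨⟨hsub, hopen, hconn⟩, hproper⟩ := hΩ
  obtain ⟨u, w, a, b, c, d, hind, huu, huw, hww, hdet, hgeo, hmax⟩ := hα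
  have hlight : IsLightGeodesic (bForm p q) Ω α :=
    ⟨u, w, a, b, c, d, hind, huu, huw, hww, hdet, hgeo⟩
  -- upper bound: the trivial one-step chain
  have hchain : IsChainCost (bForm p q) Ω (α s) (α t) 1 (dHyp s t) := by
    refine ⟨![α s, α t], ![α], ![s], ![t], rfl, rfl, ?_, ?_⟩
    · intro i
      fin_cases i
      exact ⟨hlight, hs, ht, rfl, rfl⟩
    · rw [Fin.sum_univ_one]
      rfl
  have hupper : markowitz (bForm p q) Ω (α s) (α t) ≤ ENNReal.ofReal (dHyp s t) :=
    sInf_le ⟨1, dHyp s t, le_refl 1, hchain, rfl⟩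
  -- the two endpoints of the maximal geodesic lie on the frontier
  have hne1 : (a * 1 + b) • u + (c * 1 + d) • w ≠ 0 := by
    apply MyAux.gamma_ne hind
    rintro ⟨h1, h2⟩
    apply hdet
    linear_combination a * h2 - c * h1
  have hap := MyAux.endpoint_mem Ω α u w a b c d hind hdet hgeo hmax hne1
  have hdet' : (-a) * d - b * (-c) ≠ 0 := by intro h; apply hdet; linarith
  have hgeo' : ∀ r ∈ II, ∃ h : ((-a) * r + b) • u + ((-c) * r + d) • w ≠ 0,
      (fun r => α (-r)) r =
        Projectivization.mk ℝ (((-a) * r + b) • u + ((-c) * r + d) • w) h ∧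
      (fun r => α (-r)) r ∈ Ω := by
    intro r hr
    have hr' : -r ∈ II := ⟨by linarith [hr.2], by linarith [hr.1]⟩
    obtain ⟨h, heq, hmem⟩ := hgeo (-r) hr'
    have hveq : (a * (-r) + b) • u + (c * (-r) + d) • w =
        ((-a) * r + b) • u + ((-c) * r + d) • w := by
      rw [show a * (-r) + b = (-a) * r + b from by ring,
          show c * (-r) + d = (-c) * r + d from by ring]
    refine ⟨fun hz => h (by rw [hveq]; exact hz), ?_, hmem⟩
    show α (-r) = _
    rw [heq, Projectivization.mk_eq_mk_iff]
    exact ⟨1, by rw [one_smul]; exact hveq.symm⟩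
  have hmax' : (fun r => α (-r)) '' II =
      connectedComponentIn (projSet (Submodule.span ℝ {u, w}) ∩ Ω)
        ((fun r => α (-r)) 0) := by
    have himg : (fun r => α (-r)) '' II = α '' II := by
      ext x
      constructor
      · rintro ⟨r, hr, rfl⟩
        exact ⟨-r, ⟨by linarith [hr.2], by linarith [hr.1]⟩, rfl⟩
      · rintro ⟨r, hr, rfl⟩
        refine ⟨-r, ⟨by linarith [hr.2], by linarith [hr.1]⟩, ?_⟩
        show α (- -r) = α r
        rw [neg_neg]
    have h00 : (fun r => α (-r)) 0 = α 0 := by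
      show α (-0) = α 0
      rw [neg_zero]
    rw [himg, hmax, h00]
  have hne1' : ((-a) * 1 + b) • u + ((-c) * 1 + d) • w ≠ 0 := by
    apply MyAux.gamma_ne hind
    rintro ⟨h1, h2⟩
    apply hdet
    linear_combination a * h2 - c * h1
  have ham := MyAux.endpoint_mem Ω (fun r => α (-r)) u w (-a) b (-c) d hind hdet'
    hgeo' hmax' hne1'
  -- supporting lightcones at the endpoints
  obtain ⟨bp, hbpein, hapcone, hdp⟩ := hdc _ hap
  obtain ⟨bm, hbmein, hamcone, hdm⟩ := hdc _ ham
  -- roots of the two affine functions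
  have hrootp : (a * 1 + b) * bForm p q bp.rep u + (c * 1 + d) * bForm p q bp.rep w = 0 := by
    obtain ⟨hein, hB⟩ := hapcone
    obtain ⟨e, he, hrep⟩ := MyAux.rep_mk_eq _ hne1
    rw [hrep, MyAux.bForm_smul_right] at hB
    have h2 := (mul_eq_zero.1 hB).resolve_left he
    rw [MyAux.bForm_comb] at h2
    exact h2
  have hrootm : ((-a) * 1 + b) * bForm p q bm.rep u +
      ((-c) * 1 + d) * bForm p q bm.rep w = 0 := by
    obtain ⟨hein, hB⟩ := hamcone
    obtain ⟨e, he, hrep⟩ := MyAux.rep_mk_eq _ hne1'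
    rw [hrep, MyAux.bForm_smul_right] at hB
    have h2 := (mul_eq_zero.1 hB).resolve_left he
    rw [MyAux.bForm_comb] at h2
    exact h2
  have hfp := MyAux.geo_affine_ne hsub hdp hgeo
  have hfm := MyAux.geo_affine_ne hsub hdm hgeo
  have h0II : (0:ℝ) ∈ II := by constructor <;> norm_num
  have hBp0 : b * bForm p q bp.rep u + d * bForm p q bp.rep w ≠ 0 := by
    have := hfp 0 h0II
    intro h; apply this; rw [h]; ring
  have hDm0 : b * bForm p q bm.rep u + d * bForm p q bm.rep w ≠ 0 := by
    have := hfm 0 h0II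
    intro h; apply this; rw [h]; ring
  -- explicit value of the cross-ratio function along α
  have hval : ∀ r ∈ II, MyAux.crF p q bp.rep bm.rep (α r) =
      (Real.log (b * bForm p q bp.rep u + d * bForm p q bp.rep w) + Real.log (1 - r)) -
      (Real.log (b * bForm p q bm.rep u + d * bForm p q bm.rep w) + Real.log (1 + r)) := by
    intro r hr
    rw [MyAux.geo_crF_val hsub hdp hdm hgeo hr]
    have e1 : (a * bForm p q bp.rep u + c * bForm p q bp.rep w) * r +
        (b * bForm p q bp.rep u + d * bForm p q bp.rep w) =
        (b * bForm p q bp.rep u + d * bForm p q bp.rep w) * (1 - r) := by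
      linear_combination r * hrootp
    have e2 : (a * bForm p q bm.rep u + c * bForm p q bm.rep w) * r +
        (b * bForm p q bm.rep u + d * bForm p q bm.rep w) =
        (b * bForm p q bm.rep u + d * bForm p q bm.rep w) * (1 + r) := by
      linear_combination (-r) * hrootm
    rw [e1, e2, Real.log_mul hBp0 (by linarith [hr.2] : (0:ℝ) < 1 - r).ne',
      Real.log_mul hDm0 (by linarith [hr.1] : (0:ℝ) < 1 + r).ne']
  -- lower bound
  have hlower : ENNReal.ofReal (dHyp s t) ≤ markowitz (bForm p q) Ω (α s) (α t) := by
    apply le_sInf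
    rintro e ⟨N, cc, hN1, hcc, rfl⟩
    apply ENNReal.ofReal_le_ofReal
    have hb := MyAux.chain_bound hsub hdp hdm hcc
    have heqd : |MyAux.crF p q bp.rep bm.rep (α t) - MyAux.crF p q bp.rep bm.rep (α s)|
        = dHyp s t := by
      rw [hval t ht, hval s hs, MyAux.dHyp_eq_abs hs ht, ← abs_neg]
      congr 1
      ring
    rw [heqd] at hb
    exact hb
  exact le_antisymm hupper hlower
end
end

section
/- Let p, q ≥ 1 and let Ω be a proper dually convex domain of Ein^{p,q}. Let K(Ω) = {ξ ∈ Ein^{p,q} : C(ξ) ∩ Ω = ∅}. Then for every maximal projectively parametrized lightlike geodesic α : I → Ω and all s, t ∈ I, one has d_hyp(s, t) = sup_{ξ₁, ξ₂ ∈ K(Ω)} log |[ξ₁ : α(s) : α(t) : ξ₂]| (all the cross-ratios occurring here are well defined and positive). -/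
noncomputable section

open scoped LinearAlgebra.Projectivization ENNReal
open Projectivization Filter Topology Set

variable {W : Type} [AddCommGroup W] [Module ℝ W] [TopologicalSpace W]

/-- The set of points whose lightcone misses `Ω`. -/
def KSet (Bf : W → W → ℝ) (Ω : Set (ℙ ℝ W)) : Set (ℙ ℝ W) :=
  {ξ | ξ ∈ einSet Bf ∧ lightcone Bf ξ ∩ Ω = ∅}

/-- The absolute cross-ratio `|[ξ₁ : x : y : ξ₂]|`. -/
def crossRatio (Bf : W → W → ℝ) (ξ₁ x y ξ₂ : ℙ ℝ W) : ℝ :=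
  |Bf ξ₁.rep x.rep * Bf ξ₂.rep y.rep| / |Bf ξ₂.rep x.rep * Bf ξ₁.rep y.rep|

lemma bForm_combo (p q : ℕ) (v u w : Fin (p + q + 2) → ℝ) (x y : ℝ) :
    bForm p q v (x • u + y • w) = x * bForm p q v u + y * bForm p q v w := by
  simp only [bForm, Finset.mul_sum, ← Finset.sum_add_distrib]
  refine Finset.sum_congr rfl fun i _ => ?_
  simp only [Pi.add_apply, Pi.smul_apply, smul_eq_mul]
  ring

lemma bForm_smul_right (p q : ℕ) (v w : Fin (p + q + 2) → ℝ) (c : ℝ) :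
    bForm p q v (c • w) = c * bForm p q v w := by
  simp only [bForm, Finset.mul_sum]
  refine Finset.sum_congr rfl fun i _ => ?_
  simp only [Pi.smul_apply, smul_eq_mul]
  ring

lemma rep_spec {n : ℕ} (v : Fin n → ℝ) (h : v ≠ 0) :
    ∃ k : ℝ, k ≠ 0 ∧ (Projectivization.mk ℝ v h).rep = k • v := by
  obtain ⟨a, ha⟩ := Projectivization.exists_smul_eq_mk_rep ℝ v h
  exact ⟨(a : ℝ), a.ne_zero, by rw [← ha, Units.smul_def]⟩

lemma beta_continuous {n : ℕ} (f : ℝ → Fin n → ℝ) (hf : Continuous f) (h : ∀ τ, f τ ≠ 0) :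
    Continuous (fun τ => Projectivization.mk ℝ (f τ) (h τ)) :=
  continuous_quotient_mk'.comp (hf.subtype_mk h)

lemma mediant {x1 x2 l1 l2 m1 m2 : ℝ} (hx1 : 0 ≤ x1) (hx2 : 0 ≤ x2)
    (hl1 : 0 < l1) (hl2 : 0 < l2) (hm1 : 0 < m1) (hm2 : 0 < m2)
    (hpos : 0 < m1 * x1 + m2 * x2) :
    (l1 * x1 + l2 * x2) / (m1 * x1 + m2 * x2) ≤ max (l1 / m1) (l2 / m2) := by
  rw [div_le_iff₀ hpos]
  have h1 : l1 / m1 ≤ max (l1 / m1) (l2 / m2) := le_max_left _ _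
  have h2 : l2 / m2 ≤ max (l1 / m1) (l2 / m2) := le_max_right _ _
  rw [div_le_iff₀ hm1] at h1
  rw [div_le_iff₀ hm2] at h2
  nlinarith [mul_le_mul_of_nonneg_right h1 hx1, mul_le_mul_of_nonneg_right h2 hx2]

lemma lineRatio {A B s t : ℝ} (hs1 : -1 < s) (hs2 : s < 1) (ht1 : -1 < t) (ht2 : t < 1)
    (h0 : ∀ τ, -1 < τ → τ < 1 → A * τ + B ≠ 0) :
    |A * s + B| / |A * t + B| ≤ max ((1 - s) / (1 - t)) ((1 + s) / (1 + t)) := by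
  have hB : B ≠ 0 := by simpa using h0 0 (by norm_num) (by norm_num)
  have hsign : 0 ≤ (B - A) * (A + B) := by
    by_contra hneg
    push_neg at hneg
    have hA : A ≠ 0 := by rintro rfl; nlinarith [sq_nonneg B]
    have hB2 : B ^ 2 < A ^ 2 := by nlinarith
    have habs : |B| < |A| := by
      refine lt_of_pow_lt_pow_left₀ 2 (abs_nonneg A) ?_
      rwa [sq_abs, sq_abs]
    have hmem : |(-B) / A| < 1 := by
      rw [abs_div, abs_neg]
      exact (div_lt_one (abs_pos.2 hA)).2 habs
    rw [abs_lt] at hmem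
    exact h0 (-B / A) hmem.1 hmem.2 (by field_simp; ring)
  have key : ∀ r, -1 < r → r < 1 →
      |A * r + B| = (1 - r) / 2 * |B - A| + (1 + r) / 2 * |A + B| := by
    intro r h1 h2
    rcases mul_nonneg_iff.1 hsign with ⟨h3, h4⟩ | ⟨h3, h4⟩
    · rw [abs_of_nonneg h3, abs_of_nonneg h4, abs_of_nonneg (by nlinarith)]
      ring
    · rw [abs_of_nonpos h3, abs_of_nonpos h4, abs_of_nonpos (by nlinarith)]
      ring
  have hpos : 0 < (1 - t) / 2 * |B - A| + (1 + t) / 2 * |A + B| := by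
    rw [← key t ht1 ht2]
    exact abs_pos.2 (h0 t ht1 ht2)
  rw [key s hs1 hs2, key t ht1 ht2]
  have hm := mediant (abs_nonneg (B - A)) (abs_nonneg (A + B))
    (by linarith : (0:ℝ) < (1 - s) / 2) (by linarith : (0:ℝ) < (1 + s) / 2)
    (by linarith : (0:ℝ) < (1 - t) / 2) (by linarith : (0:ℝ) < (1 + t) / 2) hpos
  have e1 : (1 - s) / 2 / ((1 - t) / 2) = (1 - s) / (1 - t) := by
    rw [div_div_div_comm]; norm_num
  have e2 : (1 + s) / 2 / ((1 + t) / 2) = (1 + s) / (1 + t) := by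
    rw [div_div_div_comm]; norm_num
  rwa [e1, e2] at hm

lemma dHyp_eq {s t : ℝ} (hs1 : -1 < s) (hs2 : s < 1) (ht1 : -1 < t) (ht2 : t < 1) :
    dHyp s t = Real.log (max ((1 - s) / (1 - t)) ((1 + s) / (1 + t)) *
      max ((1 - t) / (1 - s)) ((1 + t) / (1 + s))) := by
  have h1 : (0:ℝ) < 1 - s := by linarith
  have h2 : (0:ℝ) < 1 + s := by linarith
  have h3 : (0:ℝ) < 1 - t := by linarith
  have h4 : (0:ℝ) < 1 + t := by linarith
  set P := (1 - s) / (1 - t) with hPdef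
  set Q := (1 + s) / (1 + t) with hQdef
  have hP : 0 < P := div_pos h1 h3
  have hQ : 0 < Q := div_pos h2 h4
  have harg : (1 + t) * (1 - s) / ((1 - t) * (1 + s)) = P / Q := by
    rw [hPdef, hQdef]; field_simp
  have eP : (1 - t) / (1 - s) = P⁻¹ := by rw [hPdef, inv_div]
  have eQ : (1 + t) / (1 + s) = Q⁻¹ := by rw [hQdef, inv_div]
  rw [dHyp, harg, eP, eQ]
  rcases le_total P Q with h | h
  · rw [max_eq_right h, max_eq_left (inv_anti₀ hP h),
      Real.log_div hP.ne' hQ.ne', Real.log_mul hQ.ne' (inv_ne_zero hP.ne'),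
      Real.log_inv, abs_of_nonpos (by simpa using Real.log_le_log hP h)]
    ring
  · rw [max_eq_left h, max_eq_right (inv_anti₀ hQ h),
      Real.log_div hP.ne' hQ.ne', Real.log_mul hP.ne' (inv_ne_zero hQ.ne'),
      Real.log_inv, abs_of_nonneg (by simpa using Real.log_le_log hQ h)]
    ring

set_option maxHeartbeats 2000000 in
/-- Cross-ratio formula for the hyperbolic parameter of maximal
lightlike geodesics in a proper dually convex domain. -/
theorem stmt_8 (p q : ℕ) (hp : 1 ≤ p) (hq : 1 ≤ q)
    (Ω : Set (ℙ ℝ (Fin (p + q + 2) → ℝ)))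
    (hΩ : IsProperDomain (bForm p q) Ω)
    (hdc : IsDuallyConvex (bForm p q) Ω)
    (α : ℝ → ℙ ℝ (Fin (p + q + 2) → ℝ))
    (hα : IsMaxLightGeodesic (bForm p q) Ω α) :
    ∀ s ∈ II, ∀ t ∈ II,
      (∀ ξ₁ ∈ KSet (bForm p q) Ω, ∀ ξ₂ ∈ KSet (bForm p q) Ω,
        bForm p q ξ₁.rep (α s).rep ≠ 0 ∧ bForm p q ξ₂.rep (α t).rep ≠ 0 ∧
        bForm p q ξ₂.rep (α s).rep ≠ 0 ∧ bForm p q ξ₁.rep (α t).rep ≠ 0 ∧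
        0 < crossRatio (bForm p q) ξ₁ (α s) (α t) ξ₂) ∧
      dHyp s t = sSup {r : ℝ | ∃ ξ₁ ∈ KSet (bForm p q) Ω, ∃ ξ₂ ∈ KSet (bForm p q) Ω,
        r = Real.log (crossRatio (bForm p q) ξ₁ (α s) (α t) ξ₂)} := by
  obtain ⟨u, w, a, b, c, d, hindep, huu, huw, hww, hdet, hαdef, hmax⟩ := hα
  have hΩsub : Ω ⊆ einSet (bForm p q) := hΩ.1.1
  have hvne : ∀ τ : ℝ, (a * τ + b) • u + (c * τ + d) • w ≠ 0 := by
    intro τ h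
    obtain ⟨h1, h2⟩ := LinearIndependent.pair_iff.1 hindep _ _ h
    exact hdet (by linear_combination a * h2 - c * h1)
  set β : ℝ → ℙ ℝ (Fin (p + q + 2) → ℝ) :=
    fun τ => Projectivization.mk ℝ ((a * τ + b) • u + (c * τ + d) • w) (hvne τ) with hβdef
  have hβcont : Continuous β := beta_continuous _ (by fun_prop) hvne
  have hαβ : ∀ τ, τ ∈ II → α τ = β τ ∧ α τ ∈ Ω := by
    intro τ hτ
    obtain ⟨h, h1, h2⟩ := hαdef τ hτ
    exact ⟨h1, h2⟩
  have hrep : ∀ τ : ℝ, ∃ k : ℝ, k ≠ 0 ∧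
      (β τ).rep = k • ((a * τ + b) • u + (c * τ + d) • w) :=
    fun τ => rep_spec _ (hvne τ)
  have hform : ∀ (ξ : ℙ ℝ (Fin (p + q + 2) → ℝ)) (τ : ℝ),
      bForm p q ξ.rep ((a * τ + b) • u + (c * τ + d) • w) =
        (a * bForm p q ξ.rep u + c * bForm p q ξ.rep w) * τ +
        (b * bForm p q ξ.rep u + d * bForm p q ξ.rep w) := by
    intro ξ τ
    rw [bForm_combo]; ring
  have hKne : ∀ ξ ∈ KSet (bForm p q) Ω, ∀ τ, -1 < τ → τ < 1 →
      (a * bForm p q ξ.rep u + c * bForm p q ξ.rep w) * τ +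
      (b * bForm p q ξ.rep u + d * bForm p q ξ.rep w) ≠ 0 := by
    intro ξ hξ τ h1 h2 h0
    have hτII : τ ∈ II := ⟨h1, h2⟩
    obtain ⟨hab, hΩm⟩ := hαβ τ hτII
    obtain ⟨k, hk, hkrep⟩ := hrep τ
    have hz : bForm p q ξ.rep (α τ).rep = 0 := by
      rw [hab, hkrep, bForm_smul_right, hform, h0, mul_zero]
    have hlc : α τ ∈ lightcone (bForm p q) ξ := ⟨hΩsub hΩm, hz⟩
    exact Set.eq_empty_iff_forall_notMem.1 hξ.2 (α τ) ⟨hlc, hΩm⟩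
  -- endpoints are frontier points
  have hend : ∀ ε : ℝ, ε = 1 ∨ ε = -1 → β ε ∈ closure Ω \ Ω := by
    intro ε hε
    constructor
    · have h1 : β ε ∈ β '' closure II := by
        refine ⟨ε, ?_, rfl⟩
        rw [II, closure_Ioo (by norm_num : (-1 : ℝ) ≠ 1)]
        rcases hε with rfl | rfl <;> constructor <;> norm_num
      have h2 : β '' closure II ⊆ closure (β '' II) :=
        image_closure_subset_closure_image hβcont
      have h3 : β '' II ⊆ Ω := by
        rintro _ ⟨τ, hτ, rfl⟩
        rw [← (hαβ τ hτ).1]; exact (hαβ τ hτ).2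
      exact closure_mono h3 (h2 h1)
    · intro hmem
      have hJconn : IsPreconnected (insert ε II) := by
        rcases hε with rfl | rfl
        · rw [II, Set.Ioo_insert_right (by norm_num : (-1 : ℝ) < 1)]
          exact isPreconnected_Ioc
        · rw [II, Set.Ioo_insert_left (by norm_num : (-1 : ℝ) < 1)]
          exact isPreconnected_Ico
      have hJsub : β '' insert ε II ⊆ projSet (Submodule.span ℝ {u, w}) ∩ Ω := by
        rintro _ ⟨τ, hτ, rfl⟩
        refine ⟨?_, ?_⟩
        · obtain ⟨k, hk, hkrep⟩ := hrep τ
          show (β τ).rep ∈ Submodule.span ℝ {u, w}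
          rw [hkrep]
          refine Submodule.smul_mem _ _ (Submodule.add_mem _
            (Submodule.smul_mem _ _ ?_) (Submodule.smul_mem _ _ ?_))
          · exact Submodule.subset_span (Set.mem_insert _ _)
          · exact Submodule.subset_span (Set.mem_insert_of_mem _ rfl)
        · rcases Set.mem_insert_iff.1 hτ with rfl | hτ'
          · exact hmem
          · rw [← (hαβ τ hτ').1]; exact (hαβ τ hτ').2
      have h0II : (0 : ℝ) ∈ II := by constructor <;> norm_num
      have h0J : α 0 ∈ β '' insert ε II :=
        ⟨0, Set.mem_insert_of_mem _ h0II, ((hαβ 0 h0II).1).symm⟩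
      have hsubcc := (hJconn.image β hβcont.continuousOn).subset_connectedComponentIn
        h0J hJsub
      rw [← hmax] at hsubcc
      obtain ⟨τ₀, hτ₀, hτ₀eq⟩ := hsubcc ⟨ε, Set.mem_insert _ _, rfl⟩
      rw [(hαβ τ₀ hτ₀).1] at hτ₀eq
      obtain ⟨k, hkk⟩ :=
        (Projectivization.mk_eq_mk_iff' ℝ _ _ (hvne τ₀) (hvne ε)).1 hτ₀eq
      have hcoef : (a * τ₀ + b - k * (a * ε + b)) • u +
          (c * τ₀ + d - k * (c * ε + d)) • w = 0 := by
        have h2 : k • ((a * ε + b) • u + (c * ε + d) • w) -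
            ((a * τ₀ + b) • u + (c * τ₀ + d) • w) = 0 := by
          rw [hkk]; exact sub_self _
        rw [show (a * τ₀ + b - k * (a * ε + b)) • u +
            (c * τ₀ + d - k * (c * ε + d)) • w =
            -(k • ((a * ε + b) • u + (c * ε + d) • w) -
              ((a * τ₀ + b) • u + (c * τ₀ + d) • w)) from by module, h2, neg_zero]
      obtain ⟨h1, h2⟩ := LinearIndependent.pair_iff.1 hindep _ _ hcoef
      have hz : (a * d - b * c) * (τ₀ - ε) = 0 := by
        linear_combination (c * ε + d) * h1 - (a * ε + b) * h2
      rcases mul_eq_zero.1 hz with h | h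
      · exact hdet h
      · obtain ⟨hτ₀1, hτ₀2⟩ := hτ₀
        have : τ₀ = ε := by linarith [sub_eq_zero.1 h]
        rcases hε with rfl | rfl <;> simp [this] at hτ₀1 hτ₀2 <;> linarith
  -- supporting cones at the endpoints
  obtain ⟨ξP, hξPein, hξPlc, hξPempty⟩ := hdc (β 1) (hend 1 (Or.inl rfl))
  obtain ⟨ξM, hξMein, hξMlc, hξMempty⟩ := hdc (β (-1)) (hend (-1) (Or.inr rfl))
  have hKP : ξP ∈ KSet (bForm p q) Ω := ⟨hξPein, hξPempty⟩
  have hKM : ξM ∈ KSet (bForm p q) Ω := ⟨hξMein, hξMempty⟩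
  -- the coefficients for ξP and ξM
  set AP := a * bForm p q ξP.rep u + c * bForm p q ξP.rep w with hAPdef
  set BP := b * bForm p q ξP.rep u + d * bForm p q ξP.rep w with hBPdef
  set AM := a * bForm p q ξM.rep u + c * bForm p q ξM.rep w with hAMdef
  set BM := b * bForm p q ξM.rep u + d * bForm p q ξM.rep w with hBMdef
  have hvalP : AP * 1 + BP = 0 := by
    obtain ⟨k1, hk1, hk1rep⟩ := hrep 1
    have h0 := hξPlc.2
    rw [hk1rep, bForm_smul_right, hform] at h0
    exact ((mul_eq_zero.1 h0).resolve_left hk1)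
  have hvalM : AM * (-1) + BM = 0 := by
    obtain ⟨k1, hk1, hk1rep⟩ := hrep (-1)
    have h0 := hξMlc.2
    rw [hk1rep, bForm_smul_right, hform] at h0
    exact ((mul_eq_zero.1 h0).resolve_left hk1)
  have hBPne : BP ≠ 0 := by
    have := hKne ξP hKP 0 (by norm_num) (by norm_num)
    simpa using this
  have hBMne : BM ≠ 0 := by
    have := hKne ξM hKM 0 (by norm_num) (by norm_num)
    simpa using this
  have hAPne : AP ≠ 0 := fun h => hBPne (by linarith [hvalP, h] )
  have hAMne : AM ≠ 0 := fun h => hBMne (by linarith [hvalM, h] )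
  have hBPAP : BP = -AP := by linarith [hvalP]
  have hBMAM : BM = AM := by linarith [hvalM]
  -- main loop over s t
  intro s hs t ht
  obtain ⟨hs1, hs2⟩ := hs
  obtain ⟨ht1, ht2⟩ := ht
  have hsII : s ∈ II := ⟨hs1, hs2⟩
  have htII : t ∈ II := ⟨ht1, ht2⟩
  obtain ⟨ks, hks, hksrep⟩ := hrep s
  obtain ⟨kt, hkt, hktrep⟩ := hrep t
  have hαs : (α s).rep = ks • ((a * s + b) • u + (c * s + d) • w) := by
    rw [(hαβ s hsII).1]; exact hksrep
  have hαt : (α t).rep = kt • ((a * t + b) • u + (c * t + d) • w) := by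
    rw [(hαβ t htII).1]; exact hktrep
  have hvals : ∀ ξ : ℙ ℝ (Fin (p + q + 2) → ℝ),
      bForm p q ξ.rep (α s).rep =
        ks * ((a * bForm p q ξ.rep u + c * bForm p q ξ.rep w) * s +
          (b * bForm p q ξ.rep u + d * bForm p q ξ.rep w)) := by
    intro ξ; rw [hαs, bForm_smul_right, hform]
  have hvalt : ∀ ξ : ℙ ℝ (Fin (p + q + 2) → ℝ),
      bForm p q ξ.rep (α t).rep =
        kt * ((a * bForm p q ξ.rep u + c * bForm p q ξ.rep w) * t +
          (b * bForm p q ξ.rep u + d * bForm p q ξ.rep w)) := by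
    intro ξ; rw [hαt, bForm_smul_right, hform]
  have hKs : ∀ ξ ∈ KSet (bForm p q) Ω, bForm p q ξ.rep (α s).rep ≠ 0 := by
    intro ξ hξ
    rw [hvals]
    exact mul_ne_zero hks (hKne ξ hξ s hs1 hs2)
  have hKt : ∀ ξ ∈ KSet (bForm p q) Ω, bForm p q ξ.rep (α t).rep ≠ 0 := by
    intro ξ hξ
    rw [hvalt]
    exact mul_ne_zero hkt (hKne ξ hξ t ht1 ht2)
  constructor
  · intro ξ₁ hξ₁ ξ₂ hξ₂
    refine ⟨hKs ξ₁ hξ₁, hKt ξ₂ hξ₂, hKs ξ₂ hξ₂, hKt ξ₁ hξ₁, ?_⟩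
    exact div_pos (abs_pos.2 (mul_ne_zero (hKs ξ₁ hξ₁) (hKt ξ₂ hξ₂)))
      (abs_pos.2 (mul_ne_zero (hKs ξ₂ hξ₂) (hKt ξ₁ hξ₁)))
  -- the sup formula
  have h1s : (0:ℝ) < 1 - s := by linarith
  have h2s : (0:ℝ) < 1 + s := by linarith
  have h1t : (0:ℝ) < 1 - t := by linarith
  have h2t : (0:ℝ) < 1 + t := by linarith
  -- upper bound
  have hub : ∀ r ∈ {r : ℝ | ∃ ξ₁ ∈ KSet (bForm p q) Ω, ∃ ξ₂ ∈ KSet (bForm p q) Ω,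
      r = Real.log (crossRatio (bForm p q) ξ₁ (α s) (α t) ξ₂)}, r ≤ dHyp s t := by
    rintro r ⟨ξ₁, hξ₁, ξ₂, hξ₂, rfl⟩
    set A1 := a * bForm p q ξ₁.rep u + c * bForm p q ξ₁.rep w with hA1
    set B1 := b * bForm p q ξ₁.rep u + d * bForm p q ξ₁.rep w with hB1
    set A2 := a * bForm p q ξ₂.rep u + c * bForm p q ξ₂.rep w with hA2
    set B2 := b * bForm p q ξ₂.rep u + d * bForm p q ξ₂.rep w with hB2
    have h01 : ∀ τ, -1 < τ → τ < 1 → A1 * τ + B1 ≠ 0 := fun τ hτ1 hτ2 =>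
      hKne ξ₁ hξ₁ τ hτ1 hτ2
    have h02 : ∀ τ, -1 < τ → τ < 1 → A2 * τ + B2 ≠ 0 := fun τ hτ1 hτ2 =>
      hKne ξ₂ hξ₂ τ hτ1 hτ2
    have n1s : A1 * s + B1 ≠ 0 := h01 s hs1 hs2
    have n1t : A1 * t + B1 ≠ 0 := h01 t ht1 ht2
    have n2s : A2 * s + B2 ≠ 0 := h02 s hs1 hs2
    have n2t : A2 * t + B2 ≠ 0 := h02 t ht1 ht2
    have hCR : crossRatio (bForm p q) ξ₁ (α s) (α t) ξ₂ =
        (|A1 * s + B1| * |A2 * t + B2|) / (|A2 * s + B2| * |A1 * t + B1|) := by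
      rw [crossRatio, hvals ξ₁, hvalt ξ₂, hvals ξ₂, hvalt ξ₁]
      rw [show ks * (A1 * s + B1) * (kt * (A2 * t + B2)) =
          (ks * kt) * ((A1 * s + B1) * (A2 * t + B2)) from by ring,
        show ks * (A2 * s + B2) * (kt * (A1 * t + B1)) =
          (ks * kt) * ((A2 * s + B2) * (A1 * t + B1)) from by ring,
        abs_mul (ks * kt), abs_mul (ks * kt),
        mul_div_mul_left _ _ (abs_ne_zero.2 (mul_ne_zero hks hkt)),
        abs_mul, abs_mul]
    set M1 := max ((1 - s) / (1 - t)) ((1 + s) / (1 + t)) with hM1def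
    set M2 := max ((1 - t) / (1 - s)) ((1 + t) / (1 + s)) with hM2def
    have hM1pos : 0 < M1 := lt_max_of_lt_left (div_pos h1s h1t)
    have hM2pos : 0 < M2 := lt_max_of_lt_left (div_pos h1t h1s)
    have hb1 : |A1 * s + B1| / |A1 * t + B1| ≤ M1 := lineRatio hs1 hs2 ht1 ht2 h01
    have hb2 : |A2 * t + B2| / |A2 * s + B2| ≤ M2 := lineRatio ht1 ht2 hs1 hs2 h02
    have hb1' := (div_le_iff₀ (abs_pos.2 n1t)).1 hb1
    have hb2' := (div_le_iff₀ (abs_pos.2 n2s)).1 hb2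
    have hle : (|A1 * s + B1| * |A2 * t + B2|) / (|A2 * s + B2| * |A1 * t + B1|) ≤
        M1 * M2 := by
      rw [div_le_iff₀ (mul_pos (abs_pos.2 n2s) (abs_pos.2 n1t))]
      nlinarith [mul_le_mul hb1' hb2' (abs_nonneg (A2 * t + B2))
        (by positivity : (0:ℝ) ≤ M1 * |A1 * t + B1|), abs_nonneg (A1 * s + B1),
        abs_nonneg (A2 * t + B2)]
    have hCRpos : 0 < crossRatio (bForm p q) ξ₁ (α s) (α t) ξ₂ := by
      rw [hCR]
      exact div_pos (mul_pos (abs_pos.2 n1s) (abs_pos.2 n2t))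
        (mul_pos (abs_pos.2 n2s) (abs_pos.2 n1t))
    calc Real.log (crossRatio (bForm p q) ξ₁ (α s) (α t) ξ₂) ≤ Real.log (M1 * M2) :=
          Real.log_le_log hCRpos (le_trans (le_of_eq hCR) hle)
      _ = dHyp s t := (dHyp_eq hs1 hs2 ht1 ht2).symm
  -- the supremum is attained
  have hvMs : bForm p q ξM.rep (α s).rep = ks * (AM * (s + 1)) := by
    rw [hvals ξM, ← hAMdef, ← hBMdef, hBMAM]; ring
  have hvMt : bForm p q ξM.rep (α t).rep = kt * (AM * (t + 1)) := by
    rw [hvalt ξM, ← hAMdef, ← hBMdef, hBMAM]; ring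
  have hvPs : bForm p q ξP.rep (α s).rep = ks * (AP * (s - 1)) := by
    rw [hvals ξP, ← hAPdef, ← hBPdef, hBPAP]; ring
  have hvPt : bForm p q ξP.rep (α t).rep = kt * (AP * (t - 1)) := by
    rw [hvalt ξP, ← hAPdef, ← hBPdef, hBPAP]; ring
  have hCR1 : crossRatio (bForm p q) ξM (α s) (α t) ξP =
      ((1 + s) * (1 - t)) / ((1 - s) * (1 + t)) := by
    rw [crossRatio, hvMs, hvPt, hvPs, hvMt]
    rw [show ks * (AM * (s + 1)) * (kt * (AP * (t - 1))) =
        (ks * kt * AM * AP) * ((s + 1) * (t - 1)) from by ring,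
      show ks * (AP * (s - 1)) * (kt * (AM * (t + 1))) =
        (ks * kt * AM * AP) * ((s - 1) * (t + 1)) from by ring,
      abs_mul (ks * kt * AM * AP), abs_mul (ks * kt * AM * AP),
      mul_div_mul_left _ _ (abs_ne_zero.2
        (mul_ne_zero (mul_ne_zero (mul_ne_zero hks hkt) hAMne) hAPne)),
      abs_mul, abs_mul, abs_of_pos (by linarith : (0:ℝ) < s + 1),
      abs_of_neg (by linarith : t - 1 < 0), abs_of_neg (by linarith : s - 1 < 0),
      abs_of_pos (by linarith : (0:ℝ) < t + 1)]
    ring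
  have hCR2 : crossRatio (bForm p q) ξP (α s) (α t) ξM =
      ((1 - s) * (1 + t)) / ((1 + s) * (1 - t)) := by
    rw [crossRatio, hvPs, hvMt, hvMs, hvPt]
    rw [show ks * (AP * (s - 1)) * (kt * (AM * (t + 1))) =
        (ks * kt * AM * AP) * ((s - 1) * (t + 1)) from by ring,
      show ks * (AM * (s + 1)) * (kt * (AP * (t - 1))) =
        (ks * kt * AM * AP) * ((s + 1) * (t - 1)) from by ring,
      abs_mul (ks * kt * AM * AP), abs_mul (ks * kt * AM * AP),
      mul_div_mul_left _ _ (abs_ne_zero.2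
        (mul_ne_zero (mul_ne_zero (mul_ne_zero hks hkt) hAMne) hAPne)),
      abs_mul, abs_mul, abs_of_pos (by linarith : (0:ℝ) < s + 1),
      abs_of_neg (by linarith : t - 1 < 0), abs_of_neg (by linarith : s - 1 < 0),
      abs_of_pos (by linarith : (0:ℝ) < t + 1)]
    ring
  have hlogneg : Real.log (((1 + s) * (1 - t)) / ((1 - s) * (1 + t))) =
      -Real.log (((1 - s) * (1 + t)) / ((1 + s) * (1 - t))) := by
    rw [← Real.log_inv, inv_div]
  have hd : dHyp s t = max (Real.log (crossRatio (bForm p q) ξP (α s) (α t) ξM))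
      (Real.log (crossRatio (bForm p q) ξM (α s) (α t) ξP)) := by
    rw [hCR1, hCR2, hlogneg, dHyp,
      show (1 + t) * (1 - s) / ((1 - t) * (1 + s)) =
        ((1 - s) * (1 + t)) / ((1 + s) * (1 - t)) from by ring]
    exact abs_eq_max_neg
  have hmemS : dHyp s t ∈ {r : ℝ | ∃ ξ₁ ∈ KSet (bForm p q) Ω, ∃ ξ₂ ∈ KSet (bForm p q) Ω,
      r = Real.log (crossRatio (bForm p q) ξ₁ (α s) (α t) ξ₂)} := by
    rw [hd]
    rcases le_total (Real.log (crossRatio (bForm p q) ξM (α s) (α t) ξP))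
        (Real.log (crossRatio (bForm p q) ξP (α s) (α t) ξM)) with h | h
    · rw [max_eq_left h]; exact ⟨ξP, hKP, ξM, hKM, rfl⟩
    · rw [max_eq_right h]; exact ⟨ξM, hKM, ξP, hKP, rfl⟩
  exact le_antisymm (le_csSup ⟨dHyp s t, hub⟩ hmemS) (csSup_le ⟨_, hmemS⟩ hub)
end
end

section
/- Let n ≥ 3 and let Ω ⊆ ℝⁿ be a nonempty connected open set in Minkowski space admitting a supporting lightcone at every boundary point, i.e. for every point a of the frontier of Ω at least one of the following holds: (i) there exists z ∈ ℝⁿ with q_L(a − z) = 0 and q_L(y − z) ≠ 0 for all y ∈ Ω; or (ii) there exist u ∈ ℝⁿ with u ≠ 0 and q_L(u) = 0, and c ∈ ℝ, such that ⟨a, u⟩ = c and ⟨y, u⟩ ≠ c for all y ∈ Ω. Then Ω is causally convex: for all x, y ∈ Ω, J⁺(x) ∩ J⁻(y) ⊆ Ω. -/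
noncomputable section

open Set

/-- The Lorentzian bilinear form on `ℝⁿ` (here `n = m + 3 ≥ 3`). -/
def mink (m : ℕ) (z z' : Fin (m + 3) → ℝ) : ℝ :=
  ∑ i : Fin (m + 3), (if (i : ℕ) = 0 then (-1 : ℝ) else 1) * z i * z' i

/-- The Lorentzian quadratic form. -/
def qL (m : ℕ) (z : Fin (m + 3) → ℝ) : ℝ := mink m z z

/-- The chronological future of a point. -/
def Iplus (m : ℕ) (x : Fin (m + 3) → ℝ) : Set (Fin (m + 3) → ℝ) :=
  {z | qL m (z - x) < 0 ∧ x 0 < z 0}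

/-- The chronological past of a point. -/
def Iminus (m : ℕ) (x : Fin (m + 3) → ℝ) : Set (Fin (m + 3) → ℝ) :=
  {z | qL m (z - x) < 0 ∧ z 0 < x 0}

/-- The causal future of a point. -/
def Jplus (m : ℕ) (x : Fin (m + 3) → ℝ) : Set (Fin (m + 3) → ℝ) :=
  {z | qL m (z - x) ≤ 0 ∧ x 0 ≤ z 0}

/-- The causal past of a point. -/
def Jminus (m : ℕ) (x : Fin (m + 3) → ℝ) : Set (Fin (m + 3) → ℝ) :=
  {z | qL m (z - x) ≤ 0 ∧ z 0 ≤ x 0}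

namespace Stmt14Aux

variable {m : ℕ}

lemma mink_split (v w : Fin (m + 3) → ℝ) :
    mink m v w = -(v 0 * w 0) + ∑ i ∈ Finset.univ.erase 0, v i * w i := by
  rw [mink, ← Finset.add_sum_erase _ _ (Finset.mem_univ (0 : Fin (m+3)))]
  congr 1
  · simp
  · apply Finset.sum_congr rfl
    intro i hi
    have : (i : ℕ) ≠ 0 := by
      intro h
      exact (Finset.mem_erase.1 hi).1 (Fin.ext (by simpa using h))
    simp [this]

lemma mink_comm (v w : Fin (m + 3) → ℝ) : mink m v w = mink m w v := by
  unfold mink; exact Finset.sum_congr rfl fun i _ => by ring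

lemma mink_sub_left (v w u : Fin (m + 3) → ℝ) :
    mink m (v - w) u = mink m v u - mink m w u := by
  unfold mink
  rw [← Finset.sum_sub_distrib]
  exact Finset.sum_congr rfl fun i _ => by simp only [Pi.sub_apply]; split <;> ring

lemma mink_add_left (v w u : Fin (m + 3) → ℝ) :
    mink m (v + w) u = mink m v u + mink m w u := by
  unfold mink
  rw [← Finset.sum_add_distrib]
  exact Finset.sum_congr rfl fun i _ => by simp only [Pi.add_apply]; split <;> ring

lemma mink_smul_left (a : ℝ) (v u : Fin (m + 3) → ℝ) :
    mink m (a • v) u = a * mink m v u := by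
  unfold mink
  rw [Finset.mul_sum]
  exact Finset.sum_congr rfl fun i _ => by
    simp only [Pi.smul_apply, smul_eq_mul]; split <;> ring

lemma mink_neg_right (v u : Fin (m + 3) → ℝ) : mink m v (-u) = -mink m v u := by
  unfold mink
  rw [← Finset.sum_neg_distrib]
  exact Finset.sum_congr rfl fun i _ => by simp only [Pi.neg_apply]; split <;> ring

lemma qL_neg (v : Fin (m + 3) → ℝ) : qL m (-v) = qL m v := by
  unfold qL
  rw [show (-v) = (-1 : ℝ) • v by funext i; simp, mink_smul_left, mink_comm, mink_smul_left]
  ring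

lemma qL_add (v w : Fin (m + 3) → ℝ) :
    qL m (v + w) = qL m v + 2 * mink m v w + qL m w := by
  unfold qL
  rw [mink_add_left, mink_comm v (v+w), mink_comm w (v+w), mink_add_left, mink_add_left,
    mink_comm w v]
  ring

lemma qL_smul (a : ℝ) (v : Fin (m + 3) → ℝ) : qL m (a • v) = a ^ 2 * qL m v := by
  unfold qL
  rw [mink_smul_left, mink_comm, mink_smul_left]
  ring

lemma qL_zero : qL m 0 = 0 := by simp [qL, mink]

/-- Reverse Cauchy–Schwarz: two future-pointing causal vectors have
nonpositive Lorentzian inner product. -/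
lemma revCS {v w : Fin (m + 3) → ℝ} (hv0 : 0 ≤ v 0) (hw0 : 0 ≤ w 0)
    (hv : qL m v ≤ 0) (hw : qL m w ≤ 0) : mink m v w ≤ 0 := by
  rw [mink_split]
  have hv' : ∑ i ∈ Finset.univ.erase (0 : Fin (m+3)), v i * v i ≤ v 0 * v 0 := by
    have := hv; rw [qL, mink_split] at this; linarith
  have hw' : ∑ i ∈ Finset.univ.erase (0 : Fin (m+3)), w i * w i ≤ w 0 * w 0 := by
    have := hw; rw [qL, mink_split] at this; linarith
  have hcs := Finset.sum_mul_sq_le_sq_mul_sq (Finset.univ.erase (0 : Fin (m+3))) v w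
  have hvnn : (0:ℝ) ≤ ∑ i ∈ Finset.univ.erase (0 : Fin (m+3)), v i ^ 2 :=
    Finset.sum_nonneg fun i _ => sq_nonneg _
  have hwnn : (0:ℝ) ≤ ∑ i ∈ Finset.univ.erase (0 : Fin (m+3)), w i ^ 2 :=
    Finset.sum_nonneg fun i _ => sq_nonneg _
  have hveq : ∑ i ∈ Finset.univ.erase (0 : Fin (m+3)), v i ^ 2
      = ∑ i ∈ Finset.univ.erase (0 : Fin (m+3)), v i * v i :=
    Finset.sum_congr rfl fun i _ => by ring
  have hweq : ∑ i ∈ Finset.univ.erase (0 : Fin (m+3)), w i ^ 2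
      = ∑ i ∈ Finset.univ.erase (0 : Fin (m+3)), w i * w i :=
    Finset.sum_congr rfl fun i _ => by ring
  rw [hveq] at hcs hvnn
  rw [hweq] at hcs hwnn
  nlinarith [hcs, hvnn, hwnn, mul_nonneg hv0 hw0]

/-- Sum of future causal vectors is future causal. -/
lemma FC_add {v w : Fin (m + 3) → ℝ} (hv : qL m v ≤ 0) (hv0 : 0 ≤ v 0)
    (hw : qL m w ≤ 0) (hw0 : 0 ≤ w 0) : qL m (v + w) ≤ 0 := by
  rw [qL_add]
  linarith [revCS hv0 hw0 hv hw]

/-- Push-up: future timelike plus future causal is future timelike. -/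
lemma pushup {v w : Fin (m + 3) → ℝ} (hv : qL m v < 0) (hv0 : 0 < v 0)
    (hw : qL m w ≤ 0) (hw0 : 0 ≤ w 0) : qL m (v + w) < 0 := by
  rw [qL_add]
  linarith [revCS hv0.le hw0 hv.le hw]

/-- Nonnegative combination of future causal vectors is future causal. -/
lemma FC_comb {v w : Fin (m + 3) → ℝ} (hv : qL m v ≤ 0) (hv0 : 0 ≤ v 0)
    (hw : qL m w ≤ 0) (hw0 : 0 ≤ w 0) {a b : ℝ} (ha : 0 ≤ a) (hb : 0 ≤ b) :
    qL m (a • v + b • w) ≤ 0 := by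
  have hm : mink m (a • v) (b • w) = a * (b * mink m v w) := by
    rw [mink_smul_left, mink_comm, mink_smul_left, mink_comm]
  rw [qL_add, hm, qL_smul, qL_smul]
  have h1 := revCS hv0 hw0 hv hw
  nlinarith [sq_nonneg a, sq_nonneg b, mul_nonneg ha hb]

/-- A timelike vector has nonzero time component. -/
lemma time_ne {v : Fin (m + 3) → ℝ} (hv : qL m v < 0) : v 0 ≠ 0 := by
  intro h
  rw [qL, mink_split, h] at hv
  have : (0:ℝ) ≤ ∑ i ∈ Finset.univ.erase (0 : Fin (m+3)), v i * v i :=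
    Finset.sum_nonneg fun i _ => mul_self_nonneg _
  linarith

/-- A nonzero null vector has nonzero time component. -/
lemma null_time_ne {u : Fin (m + 3) → ℝ} (hu : qL m u = 0) (hne : u ≠ 0) : u 0 ≠ 0 := by
  intro h
  apply hne
  rw [qL, mink_split, h] at hu
  have hz : ∑ i ∈ Finset.univ.erase (0 : Fin (m+3)), u i * u i = 0 := by linarith
  have hall := (Finset.sum_eq_zero_iff_of_nonneg (fun i _ => mul_self_nonneg (u i))).1 hz
  funext i
  by_cases hi : i = 0
  · rw [hi, h]; rfl
  · have := mul_self_eq_zero.1 (hall i (Finset.mem_erase.2 ⟨hi, Finset.mem_univ i⟩))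
    simpa using this

lemma cont_qL_sub (z : Fin (m + 3) → ℝ) :
    Continuous (fun w : Fin (m+3) → ℝ => qL m (w - z)) := by
  unfold qL mink
  apply continuous_finset_sum
  intro i _
  exact (continuous_const.mul ((continuous_apply i).sub continuous_const)).mul
    ((continuous_apply i).sub continuous_const)

lemma cont_mink_left (u : Fin (m + 3) → ℝ) :
    Continuous (fun w : Fin (m+3) → ℝ => mink m w u) := by
  unfold mink
  apply continuous_finset_sum
  intro i _
  exact (continuous_const.mul (continuous_apply i)).mul continuous_const

/-- Sign constancy of a nonvanishing continuous function on a preconnected set. -/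
lemma same_sign {Ω : Set (Fin (m+3) → ℝ)} (hconn : IsPreconnected Ω)
    {g : (Fin (m+3) → ℝ) → ℝ} (hg : Continuous g) (hne : ∀ w ∈ Ω, g w ≠ 0)
    {x y : Fin (m+3) → ℝ} (hx : x ∈ Ω) (hy : y ∈ Ω) : 0 < g x * g y := by
  rcases lt_or_gt_of_ne (hne x hx) with h1 | h1 <;> rcases lt_or_gt_of_ne (hne y hy) with h2 | h2
  · exact mul_pos_of_neg_of_neg h1 h2
  · exfalso
    obtain ⟨w, hw, hgw⟩ := hconn.intermediate_value hx hy hg.continuousOn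
      (a := x) (b := y) (f := g) ⟨le_of_lt h1, le_of_lt h2⟩
    exact hne w hw hgw
  · exfalso
    obtain ⟨w, hw, hgw⟩ := hconn.intermediate_value hy hx hg.continuousOn
      (a := y) (b := x) (f := g) ⟨le_of_lt h2, le_of_lt h1⟩
    exact hne w hw hgw
  · exact mul_pos h1 h2

lemma convex_Jplus (x : Fin (m + 3) → ℝ) : Convex ℝ (Jplus m x) := by
  intro p1 hp1 p2 hp2 a b ha hb hab
  obtain ⟨hq1, ht1⟩ := hp1
  obtain ⟨hq2, ht2⟩ := hp2
  have hrep : a • p1 + b • p2 - x = a • (p1 - x) + b • (p2 - x) := by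
    funext i
    simp only [Pi.add_apply, Pi.sub_apply, Pi.smul_apply, smul_eq_mul]
    linear_combination (x i) * hab
  constructor
  · rw [hrep]
    exact FC_comb hq1 (by simp only [Pi.sub_apply]; linarith)
      hq2 (by simp only [Pi.sub_apply]; linarith) ha hb
  · show x 0 ≤ (a • p1 + b • p2) 0
    simp only [Pi.add_apply, Pi.smul_apply, smul_eq_mul]
    have hx0 : a * x 0 + b * x 0 = x 0 := by linear_combination (x 0) * hab
    linarith [mul_le_mul_of_nonneg_left ht1 ha, mul_le_mul_of_nonneg_left ht2 hb]

lemma convex_Jminus (y : Fin (m + 3) → ℝ) : Convex ℝ (Jminus m y) := by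
  intro p1 hp1 p2 hp2 a b ha hb hab
  obtain ⟨hq1, ht1⟩ := hp1
  obtain ⟨hq2, ht2⟩ := hp2
  have hrep : a • p1 + b • p2 - y = -(a • (y - p1) + b • (y - p2)) := by
    funext i
    simp only [Pi.add_apply, Pi.sub_apply, Pi.smul_apply, Pi.neg_apply, smul_eq_mul]
    linear_combination (y i) * hab
  constructor
  · show qL m (a • p1 + b • p2 - y) ≤ 0
    rw [hrep, qL_neg]
    have hq1' : qL m (y - p1) ≤ 0 := by
      rw [show y - p1 = -(p1 - y) by funext i; simp, qL_neg]; exact hq1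
    have hq2' : qL m (y - p2) ≤ 0 := by
      rw [show y - p2 = -(p2 - y) by funext i; simp, qL_neg]; exact hq2
    exact FC_comb hq1' (by simp only [Pi.sub_apply]; linarith)
      hq2' (by simp only [Pi.sub_apply]; linarith) ha hb
  · show (a • p1 + b • p2) 0 ≤ y 0
    simp only [Pi.add_apply, Pi.smul_apply, smul_eq_mul]
    have hy0 : a * y 0 + b * y 0 = y 0 := by linear_combination (y 0) * hab
    linarith [mul_le_mul_of_nonneg_left ht1 ha, mul_le_mul_of_nonneg_left ht2 hb]

end Stmt14Aux

open Stmt14Aux in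
/-- A nonempty connected open subset of Minkowski space admitting a
supporting lightcone at every boundary point is causally convex. -/
theorem stmt_14 (m : ℕ) (Ω : Set (Fin (m + 3) → ℝ))
    (hopen : IsOpen Ω) (hconn : IsConnected Ω)
    (hsupp : ∀ a ∈ frontier Ω,
      (∃ z : Fin (m + 3) → ℝ, qL m (a - z) = 0 ∧ ∀ y ∈ Ω, qL m (y - z) ≠ 0) ∨
      (∃ (u : Fin (m + 3) → ℝ) (c : ℝ), u ≠ 0 ∧ qL m u = 0 ∧ mink m a u = c ∧
        ∀ y ∈ Ω, mink m y u ≠ c)) :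
    ∀ x ∈ Ω, ∀ y ∈ Ω, Jplus m x ∩ Jminus m y ⊆ Ω := by
  intro x hx y hy p hp
  obtain ⟨⟨hpx, hpx0⟩, hpy, hpy0⟩ := hp
  by_contra hpΩ
  -- the causal diamond
  set D : Set (Fin (m+3) → ℝ) := Jplus m x ∩ Jminus m y with hDdef
  have hpD : p ∈ D := ⟨⟨hpx, hpx0⟩, hpy, hpy0⟩
  -- x and y are in D
  have hyx : qL m (y - x) ≤ 0 := by
    have := FC_add hpx (by simp only [Pi.sub_apply]; linarith)
      (show qL m (y - p) ≤ 0 by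
        rw [show y - p = -(p - y) by funext i; simp, qL_neg]; exact hpy)
      (by simp only [Pi.sub_apply]; linarith)
    rwa [show p - x + (y - p) = y - x by funext i; simp only [Pi.add_apply, Pi.sub_apply]; ring] at this
  have hxy0 : x 0 ≤ y 0 := le_trans hpx0 hpy0
  have hxD : x ∈ D := by
    refine ⟨⟨by rw [sub_self]; exact le_of_eq qL_zero, le_refl _⟩, ?_, hxy0⟩
    rw [show x - y = -(y - x) by funext i; simp, qL_neg]; exact hyx
  have hDconv : Convex ℝ D := (convex_Jplus x).inter (convex_Jminus y)
  have hDpre : IsPreconnected D := hDconv.isPreconnected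
  -- find a frontier point in D
  obtain ⟨a, haD, hafr⟩ : ∃ a, a ∈ D ∧ a ∈ frontier Ω := by
    by_contra hno
    push_neg at hno
    have hpcl : p ∉ closure Ω := by
      intro h
      exact hno p hpD ⟨h, by rwa [hopen.interior_eq]⟩
    have hsub : D ⊆ Ω ∪ (closure Ω)ᶜ := by
      intro d hd
      by_cases h : d ∈ closure Ω
      · left
        by_contra hdo
        exact hno d hd ⟨h, by rwa [hopen.interior_eq]⟩
      · right; exact h
    obtain ⟨w, -, hw1, hw2⟩ := hDpre Ω (closure Ω)ᶜ hopen isClosed_closure.isOpen_compl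
      hsub ⟨x, hxD, hx⟩ ⟨p, hpD, hpcl⟩
    exact hw2 (subset_closure hw1)
  obtain ⟨⟨hax, hax0⟩, hay, hay0⟩ := haD
  rcases hsupp a hafr with ⟨z, haz, hnez⟩ | ⟨u, c, hune, hqu, hau, hnec⟩
  · -- supporting lightcone case
    rcases lt_or_gt_of_ne (hnez x hx) with hgx | hgx
    · -- Ω is inside the cone
      have hgy : qL m (y - z) < 0 := by
        have := same_sign hconn.isPreconnected (cont_qL_sub z) hnez hx hy
        nlinarith
      have hallneg : ∀ w ∈ Ω, qL m (w - z) < 0 := by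
        intro w hw
        have := same_sign hconn.isPreconnected (cont_qL_sub z) hnez hx hw
        nlinarith
      have hne0 : ∀ w ∈ Ω, w 0 - z 0 ≠ 0 := by
        intro w hw
        have := time_ne (hallneg w hw)
        simpa using this
      have hcont0 : Continuous (fun w : Fin (m+3) → ℝ => w 0 - z 0) :=
        (continuous_apply 0).sub continuous_const
      rcases lt_or_gt_of_ne (hne0 x hx) with hx0 | hx0
      · -- x (and hence y) strictly in the past of z
        have hy0 : y 0 - z 0 < 0 := by
          have := same_sign hconn.isPreconnected hcont0 hne0 hx hy
          nlinarith
        have hzylt : qL m (z - y) < 0 := by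
          rw [show z - y = -(y - z) by funext i; simp, qL_neg]; exact hgy
        have := pushup hzylt (by simp only [Pi.sub_apply]; linarith)
          (show qL m (y - a) ≤ 0 by
            rw [show y - a = -(a - y) by funext i; simp, qL_neg]; exact hay)
          (by simp only [Pi.sub_apply]; linarith)
        rw [show z - y + (y - a) = z - a by
          funext i; simp only [Pi.add_apply, Pi.sub_apply]; ring] at this
        have h2 : qL m (a - z) < 0 := by
          rw [show a - z = -(z - a) by funext i; simp, qL_neg]; exact this
        linarith
      · -- x strictly in the future of z
        have := pushup hgx (by simp only [Pi.sub_apply]; linarith) hax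
          (by simp only [Pi.sub_apply]; linarith)
        rw [show x - z + (a - x) = a - z by funext i; simp only [Pi.add_apply, Pi.sub_apply]; ring] at this
        exact absurd haz (by linarith)
    · -- Ω is outside the cone (spacelike to z)
      have hgy : qL m (y - z) > 0 := by
        have := same_sign hconn.isPreconnected (cont_qL_sub z) hnez hx hy
        nlinarith
      rcases le_or_gt (z 0) (a 0) with hza | hza
      · -- a in the causal future of z : y ∈ J⁺(z), contradiction
        have := FC_add (le_of_eq haz) (by simp only [Pi.sub_apply]; linarith)
          (show qL m (y - a) ≤ 0 by
            rw [show y - a = -(a - y) by funext i; simp, qL_neg]; exact hay)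
          (by simp only [Pi.sub_apply]; linarith)
        rw [show a - z + (y - a) = y - z by funext i; simp only [Pi.add_apply, Pi.sub_apply]; ring] at this
        linarith
      · -- a in the causal past of z : x ∈ J⁻(z), contradiction
        have hza' : qL m (z - a) = 0 := by
          rw [show z - a = -(a - z) by funext i; simp, qL_neg]; exact haz
        have := FC_add hax (by simp only [Pi.sub_apply]; linarith)
          (le_of_eq hza') (by simp only [Pi.sub_apply]; linarith)
        rw [show a - x + (z - a) = z - x by funext i; simp only [Pi.add_apply, Pi.sub_apply]; ring] at this
        have : qL m (x - z) ≤ 0 := by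
          rw [show x - z = -(z - x) by funext i; simp, qL_neg]; exact this
        linarith
  · -- supporting null hyperplane case
    have hu0 : u 0 ≠ 0 := null_time_ne hqu hune
    set g : (Fin (m+3) → ℝ) → ℝ := fun w => mink m w u - c with hgdef
    have hgcont : Continuous g := (cont_mink_left u).sub continuous_const
    have hgne : ∀ w ∈ Ω, g w ≠ 0 := fun w hw => sub_ne_zero_of_ne (hnec w hw)
    rcases lt_or_gt_of_ne (hgne x hx) with hgx | hgx
    · -- mink · u < c on Ω
      rcases lt_or_gt_of_ne hu0 with hu0' | hu0'
      · -- u past-pointing : contradiction via y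
        have hgy : g y < 0 := by
          have := same_sign hconn.isPreconnected hgcont hgne hx hy
          nlinarith
        have h1 : mink m (y - a) (-u) ≤ 0 :=
          revCS (by simp only [Pi.sub_apply]; linarith)
            (by simp only [Pi.neg_apply]; linarith)
            (show qL m (y - a) ≤ 0 by
              rw [show y - a = -(a - y) by funext i; simp, qL_neg]; exact hay)
            (by rw [qL_neg]; exact le_of_eq hqu)
        rw [mink_neg_right, neg_nonpos, mink_sub_left] at h1
        have : c ≤ mink m y u := by rw [← hau]; linarith
        simp only [hgdef] at hgy
        linarith
      · -- u future-pointing : contradiction via x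
        have h1 : mink m (a - x) u ≤ 0 :=
          revCS (by simp only [Pi.sub_apply]; linarith) (le_of_lt hu0') hax (le_of_eq hqu)
        rw [mink_sub_left] at h1
        have : c ≤ mink m x u := by rw [← hau]; linarith
        simp only [hgdef] at hgx
        linarith
    · -- mink · u > c on Ω
      rcases lt_or_gt_of_ne hu0 with hu0' | hu0'
      · -- u past-pointing : contradiction via x
        have h1 : mink m (a - x) (-u) ≤ 0 :=
          revCS (by simp only [Pi.sub_apply]; linarith)
            (by simp only [Pi.neg_apply]; linarith) hax (by rw [qL_neg]; exact le_of_eq hqu)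
        rw [mink_neg_right, neg_nonpos, mink_sub_left] at h1
        have : mink m x u ≤ c := by rw [← hau]; linarith
        simp only [hgdef] at hgx
        linarith
      · -- u future-pointing : contradiction via y
        have hgy : g y > 0 := by
          have := same_sign hconn.isPreconnected hgcont hgne hx hy
          nlinarith
        have h1 : mink m (y - a) u ≤ 0 :=
          revCS (by simp only [Pi.sub_apply]; linarith) (le_of_lt hu0')
            (show qL m (y - a) ≤ 0 by
              rw [show y - a = -(a - y) by funext i; simp, qL_neg]; exact hay)
            (le_of_eq hqu)
        rw [mink_sub_left] at h1
        have : mink m y u ≤ c := by rw [← hau]; linarith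
        simp only [hgdef] at hgy
        linarith
end
end

section
/- Let n ≥ 3 and let Ω ⊆ ℝⁿ be a nonempty bounded connected open subset of Minkowski space. Then for every x ∈ Ω there exist a photon-extremal point a of Ω with a ∈ I⁻(x) and a photon-extremal point b of Ω with b ∈ I⁺(x). -/
noncomputable section

open Set

/-- A photon-extremal point of the frontier of `Ω`: for every lightlike affine line `ℓ`
through `a`, `a` is not interior to `ℓ ∩ closure Ω` relative to `ℓ`. -/
def IsPhotonExtremalMink (m : ℕ) (Ω : Set (Fin (m + 3) → ℝ)) (a : Fin (m + 3) → ℝ) :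
    Prop :=
  a ∈ frontier Ω ∧
  ∀ u : Fin (m + 3) → ℝ, u ≠ 0 → qL m u = 0 →
    ¬ ∃ ε : ℝ, 0 < ε ∧ ∀ t : ℝ, |t| < ε → a + t • u ∈ closure Ω

namespace StmtAux

lemma mink_eq (m : ℕ) (v w : Fin (m + 3) → ℝ) :
    mink m v w = -(v 0 * w 0) + ∑ i ∈ Finset.univ.erase (0 : Fin (m + 3)), v i * w i := by
  rw [mink, ← Finset.add_sum_erase _ _ (Finset.mem_univ (0 : Fin (m + 3)))]
  congr 1
  · norm_num
  · refine Finset.sum_congr rfl fun i hi => ?_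
    have h : (i : ℕ) ≠ 0 := by
      exact fun h' => (Finset.mem_erase.mp hi).1 (Fin.ext (by rw [h']; simp))
    rw [if_neg h, one_mul]

lemma qL_eq (m : ℕ) (v : Fin (m + 3) → ℝ) :
    qL m v = -(v 0 * v 0) + ∑ i ∈ Finset.univ.erase (0 : Fin (m + 3)), v i * v i :=
  mink_eq m v v

lemma mink_nonpos {m : ℕ} {v w : Fin (m + 3) → ℝ}
    (hv : qL m v ≤ 0) (hw : qL m w ≤ 0) (h0 : 0 ≤ v 0 * w 0) :
    mink m v w ≤ 0 := by
  set S := ∑ i ∈ Finset.univ.erase (0 : Fin (m + 3)), v i * w i with hS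
  set A := ∑ i ∈ Finset.univ.erase (0 : Fin (m + 3)), v i * v i with hA
  set B := ∑ i ∈ Finset.univ.erase (0 : Fin (m + 3)), w i * w i with hB
  have hAn : 0 ≤ A := Finset.sum_nonneg fun i _ => mul_self_nonneg _
  have hBn : 0 ≤ B := Finset.sum_nonneg fun i _ => mul_self_nonneg _
  have hcs : S ^ 2 ≤ A * B := by
    have := Finset.sum_mul_sq_le_sq_mul_sq (Finset.univ.erase (0 : Fin (m + 3))) v w
    simpa [hS, hA, hB, sq, Finset.mul_sum] using this
  have hvA : A ≤ v 0 * v 0 := by have := qL_eq m v; linarith [hv, this.symm.trans_le hv]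
  have hwB : B ≤ w 0 * w 0 := by have := qL_eq m w; linarith [hw, this.symm.trans_le hw]
  have hP2 : S ^ 2 ≤ (v 0 * w 0) ^ 2 := by nlinarith
  have hSle : S ≤ v 0 * w 0 := by nlinarith [sq_nonneg (S - v 0 * w 0), sq_nonneg (S + v 0 * w 0)]
  rw [mink_eq]
  linarith

lemma qL_add (m : ℕ) (v w : Fin (m + 3) → ℝ) :
    qL m (v + w) = qL m v + 2 * mink m v w + qL m w := by
  simp only [qL, mink, Pi.add_apply]
  rw [Finset.mul_sum, ← Finset.sum_add_distrib, ← Finset.sum_add_distrib]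
  exact Finset.sum_congr rfl fun i _ => by ring

lemma qL_smul (m : ℕ) (t : ℝ) (v : Fin (m + 3) → ℝ) :
    qL m (t • v) = t ^ 2 * qL m v := by
  simp only [qL, mink, Pi.smul_apply, smul_eq_mul]
  rw [Finset.mul_sum]
  exact Finset.sum_congr rfl fun i _ => by ring

lemma eq_zero_of_qL {m : ℕ} {v : Fin (m + 3) → ℝ} (hv : qL m v ≤ 0) (h0 : v 0 = 0) :
    v = 0 := by
  have h := qL_eq m v
  rw [h0] at h
  have hsum : ∑ i ∈ Finset.univ.erase (0 : Fin (m + 3)), v i * v i ≤ 0 := by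
    simp only [mul_zero, neg_zero, zero_add] at h; linarith [h.symm.trans_le hv]
  have hz := (Finset.sum_eq_zero_iff_of_nonneg
    (fun i _ => mul_self_nonneg (v i))).mp
    (le_antisymm hsum (Finset.sum_nonneg fun i _ => mul_self_nonneg _))
  funext i
  by_cases hi : i = (0 : Fin (m + 3))
  · simpa [hi] using h0
  · have := hz i (Finset.mem_erase.mpr ⟨hi, Finset.mem_univ i⟩)
    simpa [mul_self_eq_zero] using this

lemma continuous_qL (m : ℕ) : Continuous (qL m) := by
  unfold qL mink
  exact continuous_finset_sum _ fun i _ =>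
    (continuous_const.mul (continuous_apply i)).mul (continuous_apply i)

lemma key (m : ℕ) (Ω : Set (Fin (m + 3) → ℝ))
    (hbdd : Bornology.IsBounded Ω) (hopen : IsOpen Ω)
    (s : ℝ) (hs : s = 1 ∨ s = -1) (x : Fin (m + 3) → ℝ) (hx : x ∈ Ω) :
    ∃ b, IsPhotonExtremalMink m Ω b ∧ qL m (b - x) < 0 ∧ 0 < s * (b 0 - x 0) := by
  have hs2 : s * s = 1 := by rcases hs with h | h <;> rw [h] <;> norm_num
  have hs0 : s ≠ 0 := by rcases hs with h | h <;> rw [h] <;> norm_num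
  -- the (signed) timelike unit direction
  set e : Fin (m + 3) → ℝ := fun i => if (i : ℕ) = 0 then s else 0 with he
  have he0 : e 0 = s := by simp [he]
  have hqe : qL m e = -1 := by
    rw [qL, mink, Finset.sum_eq_single (0 : Fin (m + 3))]
    · norm_num [he]
      linear_combination hs2
    · intro i _ hi
      have h : (i : ℕ) ≠ 0 := fun h' => hi (Fin.ext (by rw [h']; simp))
      simp [he, h, hi]
    · simp
  have hnorm : ∀ t : ℝ, 0 ≤ t → ‖t • e‖ ≤ t := by
    intro t ht
    refine (pi_norm_le_iff_of_nonneg ht).mpr fun i => ?_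
    have habs : |e i| ≤ 1 := by
      by_cases h : (i : ℕ) = 0 <;> rcases hs with h' | h' <;> simp [he, h, h'] <;> split_ifs <;> norm_num
    calc ‖(t • e) i‖ = |t| * |e i| := by simp [abs_mul]
    _ ≤ t * 1 := by
        apply mul_le_mul (le_of_eq (abs_of_nonneg ht)) habs (abs_nonneg _) ht
    _ = t := mul_one t
  obtain ⟨ε, hε, hball⟩ := Metric.isOpen_iff.mp hopen x hx
  set δ : ℝ := ε / 2 with hδ
  have hδpos : 0 < δ := half_pos hε
  set x' : Fin (m + 3) → ℝ := x + δ • e with hx'def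
  have hx' : x' ∈ Ω := by
    apply hball
    rw [Metric.mem_ball, dist_eq_norm]
    have : x' - x = δ • e := by rw [hx'def]; abel
    rw [this]
    exact lt_of_le_of_lt (hnorm δ hδpos.le) (half_lt_self hε)
  -- the causal cone at x'
  set C : Set (Fin (m + 3) → ℝ) :=
    {z | qL m (z - x') ≤ 0} ∩ {z | 0 ≤ s * ((z - x') 0)} with hC
  have hCclosed : IsClosed C := by
    apply IsClosed.inter
    · exact isClosed_le ((continuous_qL m).comp (continuous_id.sub continuous_const))
        continuous_const
    · exact isClosed_le continuous_const
        (continuous_const.mul (((continuous_apply 0).comp (continuous_id.sub continuous_const))))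
  set K : Set (Fin (m + 3) → ℝ) := closure Ω ∩ C with hK
  have hKcompact : IsCompact K :=
    (Metric.isCompact_of_isClosed_isBounded isClosed_closure hbdd.closure).inter_right hCclosed
  have hq0 : qL m (0 : Fin (m + 3) → ℝ) = 0 := by simp [qL, mink]
  have hKne : K.Nonempty := by
    refine ⟨x', subset_closure hx', ?_, ?_⟩
    · simp [sub_self, hq0]
    · simp [sub_self]
  obtain ⟨b, hbK, hbmax⟩ := hKcompact.exists_isMaxOn hKne
    ((continuous_const.mul (continuous_apply 0)).continuousOn : ContinuousOn (fun z => s * z 0) K)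
  obtain ⟨hbcl, hbq, hbt⟩ := hbK
  simp only [Set.mem_setOf_eq] at hbq hbt
  -- the addition law for the causal cone at b
  have cone_add : ∀ w : Fin (m + 3) → ℝ, qL m w ≤ 0 → 0 ≤ s * w 0 →
      qL m ((b - x') + w) ≤ 0 ∧ 0 ≤ s * (((b - x') + w) 0) := by
    intro w hw hsw
    have hbt' : 0 ≤ s * ((b - x') 0) := hbt
    have h0 : 0 ≤ (b - x') 0 * w 0 := by nlinarith [mul_nonneg hbt' hsw]
    have hm := mink_nonpos hbq hw h0
    constructor
    · rw [qL_add]; linarith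
    · simp only [Pi.add_apply, mul_add]
      exact add_nonneg hbt' hsw
  have hclaim : ∀ c ∈ closure Ω, qL m (c - b) ≤ 0 → 0 ≤ s * ((c - b) 0) →
      s * c 0 ≤ s * b 0 := by
    intro c hc h1 h2
    have hdecomp : (b - x') + (c - b) = c - x' := by abel
    have hc' := cone_add (c - b) h1 h2
    rw [hdecomp] at hc'
    exact hbmax ⟨hc, hc'.1, hc'.2⟩
  -- b is a boundary point
  have hbnot : b ∉ Ω := by
    intro hbΩ
    obtain ⟨r, hr, hball'⟩ := Metric.isOpen_iff.mp hopen b hbΩ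
    set t : ℝ := r / 2 with htdef
    have htpos : 0 < t := half_pos hr
    set c : Fin (m + 3) → ℝ := b + t • e with hcdef
    have hcΩ : c ∈ Ω := by
      apply hball'
      rw [Metric.mem_ball, dist_eq_norm]
      have : c - b = t • e := by rw [hcdef]; abel
      rw [this]
      exact lt_of_le_of_lt (hnorm t htpos.le) (half_lt_self hr)
    have hcb : c - b = t • e := by rw [hcdef]; abel
    have h1 : qL m (c - b) ≤ 0 := by rw [hcb, qL_smul, hqe]; nlinarith [sq_nonneg t]
    have h2 : 0 ≤ s * ((c - b) 0) := by
      rw [hcb]; simp only [Pi.smul_apply, smul_eq_mul, he0]; nlinarith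
    have := hclaim c (subset_closure hcΩ) h1 h2
    have hc0 : c 0 = b 0 + t * s := by simp [hcdef, he0]
    rw [hc0] at this
    nlinarith
  have hbfr : b ∈ frontier Ω := by
    rw [frontier, hopen.interior_eq]
    exact ⟨hbcl, hbnot⟩
  -- b is photon-extremal
  refine ⟨b, ⟨hbfr, ?_⟩, ?_, ?_⟩
  · intro u hu hqu hex
    obtain ⟨ε', hε', hline⟩ := hex
    have hu0 : u 0 ≠ 0 := fun h0 => hu (eq_zero_of_qL (le_of_eq hqu) h0)
    have hsu : s * u 0 ≠ 0 := mul_ne_zero hs0 hu0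
    obtain ⟨t, htabs, htpos⟩ : ∃ t : ℝ, |t| < ε' ∧ 0 < t * (s * u 0) := by
      rcases hsu.lt_or_gt with h | h
      · refine ⟨-(ε' / 2), ?_, by nlinarith [half_pos hε']⟩
        rw [abs_neg, abs_of_pos (half_pos hε')]
        exact half_lt_self hε'
      · refine ⟨ε' / 2, ?_, by nlinarith [half_pos hε']⟩
        rw [abs_of_pos (half_pos hε')]
        exact half_lt_self hε'
    have hc : b + t • u ∈ closure Ω := hline t htabs
    have hcb : (b + t • u) - b = t • u := by abel
    have h1 : qL m ((b + t • u) - b) ≤ 0 := by rw [hcb, qL_smul, hqu]; simp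
    have h2 : 0 ≤ s * (((b + t • u) - b) 0) := by
      rw [hcb]; simp only [Pi.smul_apply, smul_eq_mul]; nlinarith
    have := hclaim _ hc h1 h2
    have hc0 : (b + t • u) 0 = b 0 + t * u 0 := by simp
    rw [hc0] at this
    nlinarith
  -- b ∈ I^{±}(x)
  · have hdecomp : b - x = (b - x') + δ • e := by rw [hx'def]; abel
    rw [hdecomp, qL_add]
    have hqde : qL m (δ • e) = -(δ ^ 2) := by rw [qL_smul, hqe]; ring
    have hde0 : (δ • e) 0 = δ * s := by simp [he0]
    have h0 : 0 ≤ (b - x') 0 * ((δ • e) 0) := by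
      rw [hde0]; nlinarith [mul_nonneg hδpos.le hbt]
    have hm := mink_nonpos hbq (by rw [hqde]; nlinarith [sq_nonneg δ] : qL m (δ • e) ≤ 0) h0
    rw [hqde]
    nlinarith [pow_pos hδpos 2]
  · have hx0 : x' 0 = x 0 + δ * s := by simp [hx'def, he0]
    have hbt' : 0 ≤ s * (b 0 - x' 0) := by simpa using hbt
    rw [hx0] at hbt'
    nlinarith

end StmtAux

/-- A bounded domain of Minkowski space has photon-extremal boundary
points in the past and in the future of each of its points. -/
theorem stmt_15 (m : ℕ) (Ω : Set (Fin (m + 3) → ℝ))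
    (hbdd : Bornology.IsBounded Ω) (hopen : IsOpen Ω) (hconn : IsConnected Ω) :
    ∀ x ∈ Ω,
      (∃ a, IsPhotonExtremalMink m Ω a ∧ a ∈ Iminus m x) ∧
      (∃ b, IsPhotonExtremalMink m Ω b ∧ b ∈ Iplus m x) := by
  intro x hx
  constructor
  · obtain ⟨a, ha, hq, hlt⟩ := StmtAux.key m Ω hbdd hopen (-1) (Or.inr rfl) x hx
    exact ⟨a, ha, hq, by linarith⟩
  · obtain ⟨b, hb, hq, hlt⟩ := StmtAux.key m Ω hbdd hopen 1 (Or.inl rfl) x hx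
    exact ⟨b, hb, hq, by linarith⟩
end
end

section
/- Let p ≥ 1, q ≥ 1, and let Ω be a proper domain of Ein^{p,q}. Let u₀ ∈ ℝⁿ be a nonzero vector with Q(u₀) = 0 spanning a point ξ₀ ∈ Ein^{p,q} such that closure(Ω) ∩ C(ξ₀) = ∅, and let Ω̃ = {v ∈ ℝⁿ : Q(v) = 0, span(v) ∈ Ω, and B(u₀, v) > 0}. Then the convex hull of Ω̃ in ℝⁿ is an open subset of ℝⁿ. -/
noncomputable section

open scoped LinearAlgebra.Projectivization ENNReal
open Projectivization Filter Topology Set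

variable {W : Type} [AddCommGroup W] [Module ℝ W] [TopologicalSpace W]

namespace Stmt16

variable {p q : ℕ}

lemma bForm_symm (x y : Fin (p+q+2) → ℝ) : bForm p q x y = bForm p q y x :=
  Finset.sum_congr rfl fun i _ => by ring

lemma bForm_add_right (x y z : Fin (p+q+2) → ℝ) :
    bForm p q x (y + z) = bForm p q x y + bForm p q x z := by
  simp only [bForm, Pi.add_apply, ← Finset.sum_add_distrib]
  exact Finset.sum_congr rfl fun i _ => by ring

lemma bForm_smul_right (a : ℝ) (x y : Fin (p+q+2) → ℝ) :
    bForm p q x (a • y) = a * bForm p q x y := by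
  simp only [bForm, Pi.smul_apply, smul_eq_mul, Finset.mul_sum]
  exact Finset.sum_congr rfl fun i _ => by ring

lemma bForm_sub_right (x y z : Fin (p+q+2) → ℝ) :
    bForm p q x (y - z) = bForm p q x y - bForm p q x z := by
  simp only [bForm, Pi.sub_apply, ← Finset.sum_sub_distrib]
  exact Finset.sum_congr rfl fun i _ => by ring

lemma bForm_zero_right (x : Fin (p+q+2) → ℝ) : bForm p q x 0 = 0 := by
  simp [bForm]

lemma bForm_expand (a b c d e f : ℝ) (x y z : Fin (p+q+2) → ℝ) :
    bForm p q (a•x + b•y + c•z) (d•x + e•y + f•z) =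
      a*d * bForm p q x x + (a*e + b*d) * bForm p q x y + (a*f + c*d) * bForm p q x z
      + b*e * bForm p q y y + (b*f + c*e) * bForm p q y z + c*f * bForm p q z z := by
  simp only [bForm, Pi.add_apply, Pi.smul_apply, smul_eq_mul, Finset.mul_sum,
    ← Finset.sum_add_distrib]
  exact Finset.sum_congr rfl fun i _ => by ring

lemma bForm_single_right (x : Fin (p+q+2) → ℝ) (j : Fin (p+q+2)) (c : ℝ) :
    bForm p q x (Pi.single j c) = (if (j:ℕ) ≤ p then (-1:ℝ) else 1) * x j * c := by
  rw [bForm, Finset.sum_eq_single j]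
  · rw [Pi.single_eq_same]
  · intro i _ hij; rw [Pi.single_eq_of_ne hij, mul_zero]
  · intro h; exact absurd (Finset.mem_univ j) h

/-- Existence of an orthogonal vector with prescribed sign of `Q`. -/
lemma exists_orth (v : Fin (p+q+2) → ℝ) (i j : Fin (p+q+2)) (hij : i ≠ j) (e : ℝ)
    (hi : (if (i:ℕ) ≤ p then (-1:ℝ) else 1) = e)
    (hj : (if (j:ℕ) ≤ p then (-1:ℝ) else 1) = e) :
    ∃ w, bForm p q v w = 0 ∧ 0 < e * bForm p q w w := by
  have he : e ≠ 0 := by rcases ite_eq_or_eq ((i:ℕ) ≤ p) (-1:ℝ) 1 with h | h <;>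
    rw [h] at hi <;> rw [← hi] <;> norm_num
  by_cases h0 : v i = 0 ∧ v j = 0
  · refine ⟨Pi.single i 1, ?_, ?_⟩
    · rw [bForm_single_right, hi, h0.1]; ring
    · rw [bForm_symm, bForm_single_right, hi, Pi.single_eq_same]
      have := mul_self_pos.mpr he
      nlinarith
  · refine ⟨(v j) • (Pi.single i 1 : Fin (p+q+2) → ℝ)
      - (v i) • (Pi.single j 1 : Fin (p+q+2) → ℝ), ?_, ?_⟩
    · rw [bForm_sub_right, bForm_smul_right, bForm_smul_right, bForm_single_right,
        bForm_single_right, hi, hj]; ring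
    · rw [bForm_sub_right, bForm_smul_right, bForm_smul_right, bForm_single_right,
        bForm_single_right, hi, hj]
      have hwi : ((v j) • (Pi.single i 1 : Fin (p+q+2) → ℝ)
          - (v i) • (Pi.single j 1 : Fin (p+q+2) → ℝ)) i = v j := by
        have h2 : (Pi.single j 1 : Fin (p+q+2) → ℝ) i = 0 := Pi.single_eq_of_ne hij 1
        simp only [Pi.sub_apply, Pi.smul_apply, Pi.single_eq_same, smul_eq_mul, h2]
        ring
      have hwj : ((v j) • (Pi.single i 1 : Fin (p+q+2) → ℝ)
          - (v i) • (Pi.single j 1 : Fin (p+q+2) → ℝ)) j = -v i := by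
        have h2 : (Pi.single i 1 : Fin (p+q+2) → ℝ) j = 0 := Pi.single_eq_of_ne (Ne.symm hij) 1
        simp only [Pi.sub_apply, Pi.smul_apply, Pi.single_eq_same, smul_eq_mul, h2]
        ring
      rw [hwi, hwj]
      have h1 : v i ≠ 0 ∨ v j ≠ 0 := by tauto
      have := mul_self_pos.mpr he
      rcases h1 with h | h <;> nlinarith [mul_self_pos.mpr h, mul_self_nonneg (v i),
        mul_self_nonneg (v j)]

lemma mk_congr {x y : Fin (p+q+2) → ℝ} (hx : x ≠ 0) (h : x = y) :
    Projectivization.mk ℝ x hx = Projectivization.mk ℝ y (h ▸ hx) := by subst h; rfl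

lemma mk_mem_einSet (x : Fin (p+q+2) → ℝ) (hx : x ≠ 0) (hQ : bForm p q x x = 0) :
    Projectivization.mk ℝ x hx ∈ einSet (bForm p q) := by
  obtain ⟨a, ha⟩ := exists_smul_eq_mk_rep ℝ x hx
  show bForm p q (Projectivization.mk ℝ x hx).rep (Projectivization.mk ℝ x hx).rep = 0
  rw [← ha, Units.smul_def]
  have h1 : (a:ℝ) • x = (a:ℝ)•x + (0:ℝ)•x + (0:ℝ)•x := by module
  rw [h1, bForm_expand, hQ]; ring

/-- The lightlike curve through `v` in direction `w`. -/
def cfun (p q : ℕ) (u₀ v w : Fin (p+q+2) → ℝ) (t : ℝ) : Fin (p+q+2) → ℝ :=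
  v + t • w + (-(t^2 * bForm p q w w)
    / (2*(bForm p q u₀ v + t * bForm p q u₀ w))) • u₀

lemma cfun_Bu {u₀ v w : Fin (p+q+2) → ℝ} (hu₀iso : bForm p q u₀ u₀ = 0) (t : ℝ) :
    bForm p q u₀ (cfun p q u₀ v w t) = bForm p q u₀ v + t * bForm p q u₀ w := by
  rw [cfun, bForm_add_right, bForm_add_right, bForm_smul_right, bForm_smul_right, hu₀iso]
  ring

lemma cfun_Q {u₀ v w : Fin (p+q+2) → ℝ} (hu₀iso : bForm p q u₀ u₀ = 0)
    (hvQ : bForm p q v v = 0) (hw : bForm p q v w = 0) (t : ℝ)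
    (hD : bForm p q u₀ v + t * bForm p q u₀ w ≠ 0) :
    bForm p q (cfun p q u₀ v w t) (cfun p q u₀ v w t) = 0 := by
  have h1 : cfun p q u₀ v w t = (1:ℝ)•v + t•w
      + (-(t^2 * bForm p q w w) / (2*(bForm p q u₀ v + t * bForm p q u₀ w)))•u₀ := by
    rw [cfun]; module
  rw [h1, bForm_expand, hvQ, hu₀iso, hw,
    show bForm p q v u₀ = bForm p q u₀ v from bForm_symm _ _,
    show bForm p q w u₀ = bForm p q u₀ w from bForm_symm _ _]
  field_simp
  ring

/-- The curve stays in the cone over `Ω` for small time. -/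
lemma curve_mem (p q : ℕ) (Ω : Set (ℙ ℝ (Fin (p+q+2) → ℝ)))
    (hopen : IsOpen (Subtype.val ⁻¹' Ω : Set (einSet (bForm p q))))
    (u₀ v w : Fin (p+q+2) → ℝ) (hu₀iso : bForm p q u₀ u₀ = 0)
    (hv0 : v ≠ 0) (hvQ : bForm p q v v = 0)
    (hvΩ : Projectivization.mk ℝ v hv0 ∈ Ω)
    (hvB : 0 < bForm p q u₀ v) (hw : bForm p q v w = 0) :
    ∃ δ > 0, ∀ t : ℝ, |t| < δ → cfun p q u₀ v w t ∈
      {x : Fin (p+q+2) → ℝ | ∃ h : x ≠ 0, bForm p q x x = 0 ∧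
        Projectivization.mk ℝ x h ∈ Ω ∧ 0 < bForm p q u₀ x} := by
  set O : Set ℝ := {t | 0 < bForm p q u₀ v + t * bForm p q u₀ w} with hO
  have hOopen : IsOpen O := isOpen_lt continuous_const (by fun_prop)
  have hne : ∀ t : O, cfun p q u₀ v w t.1 ≠ 0 := by
    intro t hc
    have h2 := cfun_Bu (v := v) (w := w) hu₀iso t.1
    rw [hc, bForm_zero_right] at h2
    have h3 : (0:ℝ) < bForm p q u₀ v + t.1 * bForm p q u₀ w := t.2
    linarith
  have hcont : ContinuousOn (cfun p q u₀ v w) O := by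
    apply ContinuousOn.add
    apply ContinuousOn.add
    · exact continuousOn_const
    · exact continuousOn_id.smul continuousOn_const
    · refine ContinuousOn.fun_smul ?_ continuousOn_const
      refine ContinuousOn.div (by fun_prop) (by fun_prop) ?_
      intro t ht
      have h3 : (0:ℝ) < bForm p q u₀ v + t * bForm p q u₀ w := ht
      positivity
  have hfc : Continuous (fun t : O => Projectivization.mk ℝ (cfun p q u₀ v w t.1) (hne t)) :=
    continuous_quotient_mk'.comp (Continuous.subtype_mk hcont.restrict _)
  obtain ⟨U, hUopen, hUeq⟩ := isOpen_induced_iff.mp hopen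
  have hUiff : ∀ x (hx : x ∈ einSet (bForm p q)), (x ∈ Ω ↔ x ∈ U) := by
    intro x hx
    exact (Set.ext_iff.mp hUeq ⟨x, hx⟩).symm
  have h0O : (0:ℝ) ∈ O := by
    show (0:ℝ) < bForm p q u₀ v + 0 * bForm p q u₀ w
    simpa using hvB
  have hc0 : cfun p q u₀ v w 0 = v := by
    rw [cfun]; norm_num
  have hf0U : Projectivization.mk ℝ (cfun p q u₀ v w 0) (hne ⟨0, h0O⟩) ∈ U := by
    rw [mk_congr _ hc0]
    exact (hUiff _ (mk_mem_einSet v _ hvQ)).mp hvΩ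
  have hGopen : IsOpen (Subtype.val ''
      ((fun t : O => Projectivization.mk ℝ (cfun p q u₀ v w t.1) (hne t)) ⁻¹' U)) :=
    hOopen.isOpenMap_subtype_val _ (hUopen.preimage hfc)
  obtain ⟨δ, hδ, hball⟩ := Metric.isOpen_iff.mp hGopen 0 ⟨⟨0, h0O⟩, hf0U, rfl⟩
  refine ⟨δ, hδ, fun t ht => ?_⟩
  obtain ⟨⟨t', ht'O⟩, ht'U, ht'eq⟩ := hball (by simpa [Real.dist_eq] using ht)
  simp only at ht'eq
  subst ht'eq
  have hD : (0:ℝ) < bForm p q u₀ v + t' * bForm p q u₀ w := ht'O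
  have hQc := cfun_Q (v := v) (w := w) hu₀iso hvQ hw t' (ne_of_gt hD)
  refine ⟨hne ⟨t', ht'O⟩, hQc, ?_, ?_⟩
  · exact (hUiff _ (mk_mem_einSet _ _ hQc)).mpr ht'U
  · rw [cfun_Bu hu₀iso]; exact hD


/-- The cone over `Ω` on the positive side of `u₀`. -/
def tset (p q : ℕ) (Ω : Set (ℙ ℝ (Fin (p+q+2) → ℝ))) (u₀ : Fin (p+q+2) → ℝ) :
    Set (Fin (p+q+2) → ℝ) :=
  {x | ∃ h : x ≠ 0, bForm p q x x = 0 ∧ Projectivization.mk ℝ x h ∈ Ω ∧ 0 < bForm p q u₀ x}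

lemma combo_mem {C : Set (Fin (p+q+2) → ℝ)} (hC : Convex ℝ C) {v w u₀ : Fin (p+q+2) → ℝ}
    {t βc γ μ b : ℝ}
    (hc : v + t•w + βc•u₀ ∈ C) (hM : v + γ•u₀ ∈ C) (hv : v ∈ C)
    (h0 : 0 ≤ μ) (h1 : μ ≤ 1/2) (hμ : βc + 2*μ*γ = t*b) :
    v + (t/2)•(w + b•u₀) ∈ C := by
  have hY : (2*μ)•(v+γ•u₀) + (1-2*μ)•v ∈ C := hC hM hv (by linarith) (by linarith) (by ring)
  have hX : (1/2:ℝ)•(v+t•w+βc•u₀) + (1/2:ℝ)•((2*μ)•(v+γ•u₀) + (1-2*μ)•v) ∈ C :=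
    hC hc hY (by norm_num) (by norm_num) (by norm_num)
  have heq : v + (t/2)•(w + b•u₀)
      = (1/2:ℝ)•(v+t•w+βc•u₀) + (1/2:ℝ)•((2*μ)•(v+γ•u₀) + (1-2*μ)•v) := by
    match_scalars
    · ring
    · ring
    · linear_combination -hμ/2
  rw [heq]; exact hX

lemma midpoint_mem {Ω : Set (ℙ ℝ (Fin (p+q+2) → ℝ))} {u₀ v w' : Fin (p+q+2) → ℝ}
    (hB₀ : 0 < bForm p q u₀ v) (hQ'0 : bForm p q w' w' ≠ 0)
    {δ : ℝ} (hδ : 0 < δ)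
    (hmem : ∀ t : ℝ, |t| < δ → cfun p q u₀ v w' t ∈ tset p q Ω u₀) :
    ∃ γ : ℝ, v + γ • u₀ ∈ convexHull ℝ (tset p q Ω u₀) ∧
      0 < -γ * bForm p q w' w' := by
  set B₀ := bForm p q u₀ v with hB₀def
  set B' := bForm p q u₀ w' with hB'def
  set Q' := bForm p q w' w' with hQ'def
  set τ := min (δ/2) (B₀ / (2*(|B'|+1))) with hτdef
  have hτpos : 0 < τ := lt_min (by linarith) (by positivity)
  have hτδ : |τ| < δ := by rw [abs_of_pos hτpos]; calc τ ≤ δ/2 := min_le_left _ _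
    _ < δ := by linarith
  have hτδ' : |(-τ)| < δ := by rwa [abs_neg]
  have hτle : τ ≤ B₀ / (2*(|B'|+1)) := min_le_right _ _
  have habs : τ * (|B'|+1) ≤ B₀/2 := by
    rw [le_div_iff₀ (by positivity)] at hτle; nlinarith [abs_nonneg B']
  have hD1 : 0 < B₀ + τ * B' := by nlinarith [le_abs_self B', neg_abs_le B', abs_nonneg B']
  have hD2 : 0 < B₀ + (-τ) * B' := by nlinarith [le_abs_self B', neg_abs_le B', abs_nonneg B']
  set γ := (-(τ^2*Q')/(2*(B₀+τ*B')) + -((-τ)^2*Q')/(2*(B₀+(-τ)*B')))/2 with hγdef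
  refine ⟨γ, ?_, ?_⟩
  · have hcomb := (convex_convexHull ℝ (tset p q Ω u₀))
      (subset_convexHull ℝ _ (hmem τ hτδ)) (subset_convexHull ℝ _ (hmem (-τ) hτδ'))
      (by norm_num : (0:ℝ) ≤ 1/2) (by norm_num : (0:ℝ) ≤ 1/2) (by norm_num)
    have heq : v + γ•u₀
        = (1/2:ℝ)•(cfun p q u₀ v w' τ) + (1/2:ℝ)•(cfun p q u₀ v w' (-τ)) := by
      rw [cfun, cfun, hγdef]
      match_scalars <;> ring
    rw [heq]; exact hcomb
  · have heq2 : -γ * Q'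
        = (τ^2*Q'^2/(2*(B₀+τ*B')) + τ^2*Q'^2/(2*(B₀+(-τ)*B')))/2 := by
      rw [hγdef]; field_simp; ring
    rw [heq2]
    have hτ' : τ ≠ 0 := ne_of_gt hτpos
    positivity

set_option maxHeartbeats 1000000 in
lemma core (p q : ℕ) (hp : 1 ≤ p) (hq : 1 ≤ q) (Ω : Set (ℙ ℝ (Fin (p+q+2) → ℝ)))
    (hopen : IsOpen (Subtype.val ⁻¹' Ω : Set (einSet (bForm p q))))
    (u₀ : Fin (p+q+2) → ℝ) (hu₀iso : bForm p q u₀ u₀ = 0)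
    (v : Fin (p+q+2) → ℝ) (hv : v ∈ tset p q Ω u₀) (d : Fin (p+q+2) → ℝ) :
    ∃ ε : ℝ, 0 < ε ∧ v + ε • d ∈ convexHull ℝ (tset p q Ω u₀) := by
  obtain ⟨hv0, hvQ, hvΩ, hvB⟩ := hv
  have hB₀pos : 0 < bForm p q u₀ v := hvB
  set B₀ := bForm p q u₀ v with hB₀def
  set b := bForm p q v d / B₀ with hbdef
  set w := d - b • u₀ with hwdef
  have hw : bForm p q v w = 0 := by
    rw [hwdef, bForm_sub_right, bForm_smul_right,
      show bForm p q v u₀ = B₀ from bForm_symm _ _, hbdef]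
    field_simp
    ring
  have hd : d = w + b • u₀ := by rw [hwdef]; abel
  -- positive and negative orthogonal vectors
  obtain ⟨wp, hwp0, hwpQ'⟩ := exists_orth (p := p) (q := q) v ⟨p+1, by omega⟩ ⟨p+2, by omega⟩
    (by simp [Fin.ext_iff])
    1 (by rw [show ((⟨p+1, by omega⟩ : Fin (p+q+2)) : ℕ) = p+1 from rfl, if_neg (by omega)])
    (by rw [show ((⟨p+2, by omega⟩ : Fin (p+q+2)) : ℕ) = p+2 from rfl, if_neg (by omega)])
  obtain ⟨wm, hwm0, hwmQ'⟩ := exists_orth (p := p) (q := q) v ⟨0, by omega⟩ ⟨1, by omega⟩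
    (by simp [Fin.ext_iff])
    (-1) (by rw [show ((⟨0, by omega⟩ : Fin (p+q+2)) : ℕ) = 0 from rfl, if_pos (by omega)])
    (by rw [show ((⟨1, by omega⟩ : Fin (p+q+2)) : ℕ) = 1 from rfl, if_pos (by omega)])
  have hwpQ : 0 < bForm p q wp wp := by linarith
  have hwmQ : bForm p q wm wm < 0 := by linarith
  -- curves
  obtain ⟨δ, hδ, hmem⟩ := curve_mem p q Ω hopen u₀ v w hu₀iso hv0 hvQ hvΩ hvB hw
  obtain ⟨δp, hδp, hmemp⟩ := curve_mem p q Ω hopen u₀ v wp hu₀iso hv0 hvQ hvΩ hvB hwp0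
  obtain ⟨δm, hδm, hmemm⟩ := curve_mem p q Ω hopen u₀ v wm hu₀iso hv0 hvQ hvΩ hvB hwm0
  have hCconv : Convex ℝ (convexHull ℝ (tset p q Ω u₀)) := convex_convexHull _ _
  have hsub : tset p q Ω u₀ ⊆ convexHull ℝ (tset p q Ω u₀) := subset_convexHull _ _
  obtain ⟨γp, hγpC, hγpneg⟩ := midpoint_mem hB₀pos (ne_of_gt hwpQ) hδp hmemp
  obtain ⟨γm, hγmC, hγmneg⟩ := midpoint_mem hB₀pos (ne_of_lt hwmQ) hδm hmemm
  have hγp : γp < 0 := by nlinarith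
  have hγm : 0 < γm := by nlinarith
  set η := min (-γp) γm with hηdef
  have hη : 0 < η := lt_min (by linarith) hγm
  set B' := bForm p q u₀ w with hB'def
  set Qw := bForm p q w w with hQwdef
  set t := min (min (δ/2) (B₀/(2*(|B'|+1)))) (min 1 (η*B₀/(abs b * B₀ + abs Qw + 1))) with htdef
  have htpos : 0 < t := by
    apply lt_min (lt_min (by linarith) (by positivity)) (lt_min one_pos (by positivity))
  have ht1 : t ≤ δ/2 := le_trans (min_le_left _ _) (min_le_left _ _)
  have ht2 : t ≤ B₀/(2*(|B'|+1)) := le_trans (min_le_left _ _) (min_le_right _ _)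
  have ht3 : t ≤ 1 := le_trans (min_le_right _ _) (min_le_left _ _)
  have ht4 : t ≤ η*B₀/(abs b * B₀ + abs Qw + 1) := le_trans (min_le_right _ _) (min_le_right _ _)
  have habs : t * (|B'|+1) ≤ B₀/2 := by
    rw [le_div_iff₀ (by positivity)] at ht2; linarith
  have hDw : B₀/2 ≤ B₀ + t * B' := by
    have h9 : -(t*|B'|) ≤ t*B' := by
      have h10 := neg_abs_le (t*B')
      rw [abs_mul, abs_of_pos htpos] at h10
      exact h10
    have h11 : t*|B'| + t ≤ B₀/2 := by linarith [habs]
    linarith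
  have hDwpos : 0 < B₀ + t * B' := by linarith
  have hmemt := hmem t (by rw [abs_of_pos htpos]; linarith)
  clear_value B₀ b w B' Qw t
  set βc := -(t^2*Qw)/(2*(B₀+t*B')) with hβcdef
  clear_value βc
  have hcfun : cfun p q u₀ v w t = v + t•w + βc•u₀ := by
    rw [cfun, ← hQwdef, ← hB₀def, ← hB'def, ← hβcdef]
  have hc' : v + t•w + βc•u₀ ∈ convexHull ℝ (tset p q Ω u₀) := hcfun ▸ hsub hmemt
  have hvC : v ∈ convexHull ℝ (tset p q Ω u₀) := hsub ⟨hv0, hvQ, hvΩ, hB₀def ▸ hvB⟩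
  set g := t*b - βc with hgdef
  clear_value g
  clear hmem hmemp hmemm hmemt hcfun
  have hβabs : |βc| ≤ t * |Qw| / B₀ := by
    have h1 : |βc| = t^2 * |Qw| / (2*(B₀+t*B')) := by
      rw [hβcdef, abs_div, abs_neg, abs_mul,
        abs_of_pos (show (0:ℝ) < 2*(B₀+t*B') by linarith),
        abs_of_nonneg (sq_nonneg t)]
    rw [h1, div_le_div_iff₀ (by linarith) hB₀pos]
    nlinarith [abs_nonneg Qw, mul_nonneg (mul_nonneg htpos.le (abs_nonneg Qw))
      (show (0:ℝ) ≤ 2*(B₀+t*B') - B₀ by linarith),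
      mul_nonneg (mul_nonneg (mul_nonneg htpos.le
        (show (0:ℝ) ≤ 1 - t by linarith)) (abs_nonneg Qw)) hB₀pos.le]
  have hgle : |g| ≤ η := by
    have h5 : |g| ≤ t*|b| + |βc| := by
      rw [hgdef]; calc |t*b - βc| ≤ |t*b| + |βc| := abs_sub _ _
        _ = t*|b| + |βc| := by rw [abs_mul, abs_of_pos htpos]
    have h6 : t * (abs b + abs Qw/B₀) ≤ η := by
      rw [le_div_iff₀ (by positivity)] at ht4
      rw [← mul_le_mul_iff_of_pos_right hB₀pos]
      have hex : t*(abs b + abs Qw/B₀)*B₀ = t*(abs b * B₀ + abs Qw) := by field_simp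
      rw [hex]
      nlinarith [htpos.le]
    have h7 : t*(abs b) + t*(abs Qw)/B₀ = t*(abs b + abs Qw/B₀) := by ring
    calc |g| ≤ t*|b| + |βc| := h5
      _ ≤ t*(abs b) + t*(abs Qw)/B₀ := by linarith [hβabs]
      _ ≤ η := by rw [h7]; exact h6
  refine ⟨t/2, by linarith, ?_⟩
  rw [hd]
  by_cases hsign : 0 ≤ g
  · have hμ0 : 0 ≤ g/(2*γm) := by positivity
    have hμ1 : g/(2*γm) ≤ 1/2 := by
      rw [div_le_iff₀ (by linarith : (0:ℝ) < 2*γm)]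
      have h8 : g ≤ γm :=
        le_trans (le_abs_self g) (le_trans hgle (min_le_right (-γp) γm))
      linarith
    have hμeq : βc + 2*(g/(2*γm))*γm = t*b := by
      rw [hgdef]; field_simp [hγm.ne']; ring
    exact combo_mem hCconv hc' hγmC hvC hμ0 hμ1 hμeq
  · push_neg at hsign
    have hμ0 : 0 ≤ g/(2*γp) := by
      rw [div_nonneg_iff]; right; constructor <;> linarith
    have hμ1 : g/(2*γp) ≤ 1/2 := by
      rw [div_le_iff_of_neg (by linarith : 2*γp < 0)]
      have h8 : γp ≤ g := by
        have := neg_abs_le g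
        have h9 : η ≤ -γp := min_le_left _ _
        linarith
      linarith
    have hμeq : βc + 2*(g/(2*γp))*γp = t*b := by
      rw [hgdef]; field_simp [hγp.ne]; ring
    exact combo_mem hCconv hc' hγpC hvC hμ0 hμ1 hμeq

end Stmt16

/-- The convex hull of the cone over a proper domain is open. -/
theorem stmt_16 (p q : ℕ) (hp : 1 ≤ p) (hq : 1 ≤ q)
    (Ω : Set (ℙ ℝ (Fin (p + q + 2) → ℝ)))
    (hΩ : IsProperDomain (bForm p q) Ω)
    (u₀ : Fin (p + q + 2) → ℝ) (hu₀ : u₀ ≠ 0) (hu₀iso : bForm p q u₀ u₀ = 0)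
    (hmiss : closure Ω ∩ lightcone (bForm p q) (Projectivization.mk ℝ u₀ hu₀) = ∅) :
    IsOpen (convexHull ℝ {v : Fin (p + q + 2) → ℝ |
      ∃ h : v ≠ 0, bForm p q v v = 0 ∧ Projectivization.mk ℝ v h ∈ Ω ∧
        0 < bForm p q u₀ v}) := by
  show IsOpen (convexHull ℝ (Stmt16.tset p q Ω u₀))
  rcases Set.eq_empty_or_nonempty (Stmt16.tset p q Ω u₀) with hS | ⟨v₀, hv₀⟩
  · rw [hS, convexHull_empty]; exact isOpen_empty
  · have hopen : IsOpen (Subtype.val ⁻¹' Ω : Set (einSet (bForm p q))) := hΩ.1.2.1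
    have hcore := fun v hv d => Stmt16.core p q hp hq Ω hopen u₀ hu₀iso v hv d
    have hCconv : Convex ℝ (convexHull ℝ (Stmt16.tset p q Ω u₀)) := convex_convexHull _ _
    have hspan : affineSpan ℝ (convexHull ℝ (Stmt16.tset p q Ω u₀)) = ⊤ := by
      rw [affineSpan_convexHull, eq_top_iff]
      rintro x -
      obtain ⟨ε, hε, hmem⟩ := hcore v₀ hv₀ (x - v₀)
      have h1 : v₀ ∈ affineSpan ℝ (Stmt16.tset p q Ω u₀) := subset_affineSpan _ _ hv₀
      have h2 : v₀ + ε•(x - v₀) ∈ affineSpan ℝ (Stmt16.tset p q Ω u₀) := by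
        rw [← affineSpan_convexHull]; exact subset_affineSpan _ _ hmem
      have h3 := AffineSubspace.smul_vsub_vadd_mem
        (affineSpan ℝ (Stmt16.tset p q Ω u₀)) ε⁻¹ h2 h1 h1
      have h4 : ε⁻¹ • (v₀ + ε•(x - v₀) -ᵥ v₀) +ᵥ v₀ = x := by
        rw [vsub_eq_sub, vadd_eq_add]
        rw [show v₀ + ε•(x - v₀) - v₀ = ε•(x - v₀) by abel, smul_smul,
          inv_mul_cancel₀ (ne_of_gt hε), one_smul]
        abel
      rwa [h4] at h3
    obtain ⟨y, hy⟩ := (hCconv.interior_nonempty_iff_affineSpan_eq_top).mpr hspan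
    have hSsub : Stmt16.tset p q Ω u₀ ⊆ interior (convexHull ℝ (Stmt16.tset p q Ω u₀)) := by
      intro v hv
      obtain ⟨ε, hε, hb⟩ := hcore v hv (v - y)
      have h1 : (0:ℝ) < 1 + ε := by linarith
      have hcombo := hCconv.combo_interior_closure_mem_interior hy (subset_closure hb)
        (show 0 < ε/(1+ε) by positivity) (show (0:ℝ) ≤ 1/(1+ε) by positivity)
        (by field_simp <;> ring)
      have heq : (ε/(1+ε))•y + (1/(1+ε))•(v + ε•(v - y)) = v := by
        match_scalars <;> (field_simp <;> ring)
      rwa [heq] at hcombo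
    have hfin := convexHull_min hSsub hCconv.interior
    have h5 : interior (convexHull ℝ (Stmt16.tset p q Ω u₀))
        = convexHull ℝ (Stmt16.tset p q Ω u₀) :=
      Set.Subset.antisymm interior_subset hfin
    rw [← h5]; exact isOpen_interior
end
end

section
/- Let p, q ≥ 1 and let Ω be a proper domain of Ein^{p,q}. Let u₀ ∈ ℝⁿ be a nonzero vector with Q(u₀) = 0 spanning a point ξ₀ ∈ Ein^{p,q} such that closure(Ω) ∩ C(ξ₀) = ∅, and set S = {v ∈ ℝⁿ : Q(v) = 0, span(v) ∈ closure(Ω), and B(u₀, v) = 1} (a compact set) and K = the convex hull of S in ℝⁿ. Then: (1) every extreme point e of K lies in S, the point span(e) lies in the frontier of Ω, and span(e) is photon-extremal; (2) there exist extreme points e₁, …, eₙ of K forming a basis of ℝⁿ; in particular, there exist photon-extremal points x₁, …, xₙ ∈ ∂Ω whose representative vectors span ℝⁿ. -/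
noncomputable section

open scoped LinearAlgebra.Projectivization ENNReal
open Projectivization Filter Topology Set

variable {W : Type} [AddCommGroup W] [Module ℝ W] [TopologicalSpace W]

/-- The affine lift `S` of the closure of `Ω`, normalized by `B(u₀, ·) = 1`. -/
def liftSet (p q : ℕ) (Ω : Set (ℙ ℝ (Fin (p + q + 2) → ℝ)))
    (u₀ : Fin (p + q + 2) → ℝ) : Set (Fin (p + q + 2) → ℝ) :=
  {v | ∃ h : v ≠ 0, bForm p q v v = 0 ∧
    Projectivization.mk ℝ v h ∈ closure Ω ∧ bForm p q u₀ v = 1}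


namespace Stmt17Aux

/-! ### Algebraic lemmas about `bForm` -/

variable {p q : ℕ}

lemma bForm_symm (v w : Fin (p+q+2) → ℝ) : bForm p q v w = bForm p q w v := by
  unfold bForm; apply Finset.sum_congr rfl; intros; ring

lemma bForm_add_right (u v w : Fin (p+q+2) → ℝ) :
    bForm p q u (v + w) = bForm p q u v + bForm p q u w := by
  unfold bForm; rw [← Finset.sum_add_distrib]
  apply Finset.sum_congr rfl; intros; simp only [Pi.add_apply]; split <;> ring

lemma bForm_smul_right (a : ℝ) (u v : Fin (p+q+2) → ℝ) :
    bForm p q u (a • v) = a * bForm p q u v := by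
  unfold bForm; rw [Finset.mul_sum]
  apply Finset.sum_congr rfl; intros; simp only [Pi.smul_apply, smul_eq_mul]; ring

lemma bForm_add_left (u v w : Fin (p+q+2) → ℝ) :
    bForm p q (u + v) w = bForm p q u w + bForm p q v w := by
  rw [bForm_symm, bForm_add_right, bForm_symm w u, bForm_symm w v]

lemma bForm_smul_left (a : ℝ) (u v : Fin (p+q+2) → ℝ) :
    bForm p q (a • u) v = a * bForm p q u v := by
  rw [bForm_symm, bForm_smul_right, bForm_symm]

lemma bForm_sub_right (u v w : Fin (p+q+2) → ℝ) :
    bForm p q u (v - w) = bForm p q u v - bForm p q u w := by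
  have := bForm_add_right (p := p) (q := q) u (v - w) w; simp at this; linarith

lemma bForm_sub_left (u v w : Fin (p+q+2) → ℝ) :
    bForm p q (u - v) w = bForm p q u w - bForm p q v w := by
  rw [bForm_symm, bForm_sub_right, bForm_symm w u, bForm_symm w v]

lemma bForm_zero_right (u : Fin (p+q+2) → ℝ) : bForm p q u 0 = 0 := by
  unfold bForm; simp

lemma continuous_bForm_right (u : Fin (p+q+2) → ℝ) :
    Continuous (fun v => bForm p q u v) := by
  unfold bForm
  exact continuous_finset_sum _ fun i _ => (continuous_const.mul (continuous_apply i))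

lemma continuous_bForm_self : Continuous (fun v : Fin (p+q+2) → ℝ => bForm p q v v) := by
  unfold bForm
  exact continuous_finset_sum _ fun i _ =>
    ((continuous_const.mul (continuous_apply i)).mul (continuous_apply i))

lemma bForm_single (v : Fin (p+q+2) → ℝ) (i : Fin (p+q+2)) :
    bForm p q v (Pi.single i 1) = (if (i : ℕ) ≤ p then (-1:ℝ) else 1) * v i := by
  unfold bForm
  rw [Finset.sum_eq_single i]
  · simp
  · intro j _ hj; rw [Pi.single_eq_of_ne hj]; ring
  · simp

/-! ### Projectivization lemmas -/

lemma continuous_mk : Continuous (fun v : {w : Fin (p+q+2) → ℝ // w ≠ 0} =>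
    Projectivization.mk ℝ v.1 v.2) :=
  continuous_quotient_mk'

lemma exists_smul_rep (v : Fin (p+q+2) → ℝ) (hv : v ≠ 0) :
    ∃ a : ℝˣ, (Projectivization.mk ℝ v hv).rep = (a : ℝ) • v := by
  obtain ⟨a, ha⟩ := Projectivization.exists_smul_eq_mk_rep ℝ v hv
  exact ⟨a, by rw [← ha]; rfl⟩

lemma mk_smul_eq (v : Fin (p+q+2) → ℝ) (hv : v ≠ 0) (a : ℝ) (ha : a ≠ 0)
    (hav : a • v ≠ 0) : Projectivization.mk ℝ (a • v) hav = Projectivization.mk ℝ v hv := by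
  rw [Projectivization.mk_eq_mk_iff]
  exact ⟨Units.mk0 a ha, rfl⟩

lemma mk_congr (v w : Fin (p+q+2) → ℝ) (hv : v ≠ 0) (hw : w ≠ 0) (h : v = w) :
    Projectivization.mk ℝ v hv = Projectivization.mk ℝ w hw := by subst h; rfl

lemma mem_einSet_mk (v : Fin (p+q+2) → ℝ) (hv : v ≠ 0) :
    (Projectivization.mk ℝ v hv ∈ einSet (bForm p q)) ↔ bForm p q v v = 0 := by
  obtain ⟨a, ha⟩ := exists_smul_rep v hv
  unfold einSet
  simp only [Set.mem_setOf_eq, ha, bForm_smul_left, bForm_smul_right]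
  constructor
  · intro h
    have ha0 : (a : ℝ) ≠ 0 := a.ne_zero
    have : ((a:ℝ) * (a:ℝ)) * bForm p q v v = 0 := by linarith [h]
    rcases mul_eq_zero.1 this with h' | h'
    · exact absurd h' (by positivity)
    · exact h'
  · intro h; rw [h]; ring

lemma add_smul_ne_zero (e w : Fin (p+q+2) → ℝ) (he : e ≠ 0)
    (hnc : ∀ c : ℝ, w ≠ c • e) (t : ℝ) : e + t • w ≠ 0 := by
  intro h
  rcases eq_or_ne t 0 with rfl | hs
  · simp at h; exact he h
  · apply hnc (-(t⁻¹))
    have h1 : t • w = -e := eq_neg_of_add_eq_zero_right h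
    calc w = t⁻¹ • (t • w) := (inv_smul_smul₀ hs w).symm
    _ = t⁻¹ • (-e) := by rw [h1]
    _ = (-(t⁻¹)) • e := by rw [smul_neg, neg_smul]

/-! ### Compactness of convex hulls of compact sets in `ℝⁿ` -/

lemma isCompact_convexHull' {n : ℕ} {S : Set (Fin n → ℝ)} (hne : S.Nonempty)
    (hS : IsCompact S) : IsCompact (convexHull ℝ S) := by
  classical
  obtain ⟨s₀, hs₀⟩ := hne
  set m := n + 1 with hm
  set φ : (Fin m → ℝ) × (Fin m → (Fin n → ℝ)) → (Fin n → ℝ) :=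
    fun fg => ∑ i, fg.1 i • fg.2 i with hφ
  have hφc : Continuous φ := by
    apply continuous_finset_sum
    intro i _
    exact ((continuous_apply i).comp continuous_fst).smul
      ((continuous_apply i).comp continuous_snd)
  have hT : IsCompact ((stdSimplex ℝ (Fin m)) ×ˢ (Set.pi Set.univ fun _ : Fin m => S)) :=
    (isCompact_stdSimplex _ _).prod (isCompact_univ_pi fun _ => hS)
  have himg : φ '' ((stdSimplex ℝ (Fin m)) ×ˢ (Set.pi Set.univ fun _ : Fin m => S))
      = convexHull ℝ S := by
    apply Set.Subset.antisymm
    · rintro x ⟨⟨f, g⟩, ⟨⟨hf0, hf1⟩, hg⟩, rfl⟩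
      exact (convex_convexHull ℝ S).sum_mem (fun i _ => hf0 i) hf1
        (fun i _ => subset_convexHull ℝ S (hg i (Set.mem_univ i)))
    · intro x hx
      obtain ⟨ι, hι, z, w, hzS, hai, hw0, hw1, hwz⟩ :=
        eq_pos_convex_span_of_mem_convexHull hx
      have hcard : Fintype.card ι ≤ m := by
        calc Fintype.card ι ≤ Module.finrank ℝ (vectorSpan ℝ (Set.range z)) + 1 :=
              hai.card_le_finrank_succ
        _ ≤ Module.finrank ℝ (Fin n → ℝ) + 1 := Nat.add_le_add_right (Submodule.finrank_le _) 1
        _ = m := by simp [hm]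
      obtain ⟨e⟩ := Function.Embedding.nonempty_of_card_le (β := Fin m) (by simpa using hcard)
      set f : Fin m → ℝ := Function.extend e w 0 with hf
      set g : Fin m → (Fin n → ℝ) := Function.extend e z (fun _ => s₀) with hg
      have hfe : ∀ i, f (e i) = w i := fun i => e.injective.extend_apply w 0 i
      have hge : ∀ i, g (e i) = z i := fun i => e.injective.extend_apply z _ i
      have hf' : ∀ j, j ∉ Finset.univ.image e → f j = 0 := by
        intro j hj
        rw [hf, Function.extend_apply']
        · rfl
        · rintro ⟨i, rfl⟩; exact hj (Finset.mem_image_of_mem e (Finset.mem_univ i))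
      refine ⟨⟨f, g⟩, ⟨⟨?_, ?_⟩, ?_⟩, ?_⟩
      · intro j
        show 0 ≤ f j
        by_cases hj : j ∈ Finset.univ.image e
        · obtain ⟨i, _, rfl⟩ := Finset.mem_image.1 hj
          rw [hfe]; exact (hw0 i).le
        · rw [hf' j hj]
      · show ∑ j, f j = 1
        rw [← Finset.sum_subset (Finset.subset_univ (Finset.univ.image e))
          (fun j _ hj => hf' j hj)]
        rw [Finset.sum_image (fun a _ b _ h => e.injective h)]
        simpa [hfe] using hw1
      · intro j _
        show g j ∈ S
        by_cases hj : j ∈ Finset.univ.image e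
        · obtain ⟨i, _, rfl⟩ := Finset.mem_image.1 hj
          rw [hge]; exact hzS (Set.mem_range_self i)
        · rw [hg, Function.extend_apply']
          · exact hs₀
          · rintro ⟨i, rfl⟩; exact hj (Finset.mem_image_of_mem e (Finset.mem_univ i))
      · show ∑ j, f j • g j = x
        rw [← Finset.sum_subset (Finset.subset_univ (Finset.univ.image e))
          (fun j _ hj => by rw [hf' j hj, zero_smul])]
        rw [Finset.sum_image (fun a _ b _ h => e.injective h)]
        simp only [hfe, hge]
        exact hwz
  rw [← himg]
  exact hT.image hφc

/-! ### Compactness of the lift -/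

lemma liftSet_isCompact (p q : ℕ) (Ω : Set (ℙ ℝ (Fin (p + q + 2) → ℝ)))
    (u₀ : Fin (p + q + 2) → ℝ) (hu₀ : u₀ ≠ 0)
    (hmiss : closure Ω ∩ lightcone (bForm p q) (Projectivization.mk ℝ u₀ hu₀) = ∅) :
    IsCompact (liftSet p q Ω u₀) := by
  apply Metric.isCompact_of_isClosed_isBounded
  · -- closed
    apply IsSeqClosed.isClosed
    intro u v hmem huv
    choose h hQ hcl hB using hmem
    have hBv : bForm p q u₀ v = 1 := by
      have h1 : Filter.Tendsto (fun k => bForm p q u₀ (u k)) atTop (𝓝 (bForm p q u₀ v)) :=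
        ((continuous_bForm_right u₀).tendsto v).comp huv
      have h2 : (fun k => bForm p q u₀ (u k)) = fun _ => (1:ℝ) := funext fun k => hB k
      rw [h2] at h1
      exact tendsto_nhds_unique h1 tendsto_const_nhds
    have hv0 : v ≠ 0 := by
      intro h0; rw [h0, bForm_zero_right] at hBv; norm_num at hBv
    have hQv : bForm p q v v = 0 := by
      have h1 : Filter.Tendsto (fun k => bForm p q (u k) (u k)) atTop (𝓝 (bForm p q v v)) :=
        (continuous_bForm_self.tendsto v).comp huv
      have h2 : (fun k => bForm p q (u k) (u k)) = fun _ => (0:ℝ) := funext fun k => hQ k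
      rw [h2] at h1
      exact tendsto_nhds_unique h1 tendsto_const_nhds
    have hclv : Projectivization.mk ℝ v hv0 ∈ closure Ω := by
      have hsub : Filter.Tendsto (fun k => (⟨u k, h k⟩ : {w : Fin (p+q+2) → ℝ // w ≠ 0}))
          atTop (𝓝 ⟨v, hv0⟩) := by
        rw [tendsto_subtype_rng]; exact huv
      have hmk : Filter.Tendsto (fun k => Projectivization.mk ℝ (u k) (h k)) atTop
          (𝓝 (Projectivization.mk ℝ v hv0)) := (continuous_mk.tendsto _).comp hsub
      exact isClosed_closure.mem_of_tendsto hmk (Filter.Eventually.of_forall hcl)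
    exact ⟨hv0, hQv, hclv, hBv⟩
  · -- bounded
    by_contra hb
    rw [isBounded_iff_forall_norm_le] at hb; push_neg at hb
    choose v hvS hvn using fun k : ℕ => hb (k : ℝ)
    have hnpos : ∀ k, (0:ℝ) < ‖v k‖ := fun k =>
      lt_of_le_of_lt (Nat.cast_nonneg k) (hvn k)
    set w : ℕ → (Fin (p+q+2) → ℝ) := fun k => ‖v k‖⁻¹ • v k with hw
    have hwsph : ∀ k, w k ∈ Metric.sphere (0 : Fin (p+q+2) → ℝ) 1 := by
      intro k
      simp only [Metric.mem_sphere, dist_zero_right, hw, norm_smul, norm_inv, norm_norm]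
      exact inv_mul_cancel₀ (ne_of_gt (hnpos k))
    obtain ⟨winf, hwinfsph, φ, hφ, hconv⟩ :=
      (isCompact_sphere (0 : Fin (p+q+2) → ℝ) 1).tendsto_subseq hwsph
    have hwinf0 : winf ≠ 0 := by
      intro h0
      rw [h0] at hwinfsph
      simp at hwinfsph
    -- properties of members
    choose hS0 hSQ hScl hSB using hvS
    have hQw : ∀ k, bForm p q (w k) (w k) = 0 := by
      intro k
      rw [hw]; simp only [bForm_smul_left, bForm_smul_right, hSQ k]; ring
    have hBw : ∀ k, bForm p q u₀ (w k) = ‖v k‖⁻¹ := by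
      intro k
      rw [hw]; simp only [bForm_smul_right, hSB k]; ring
    have hQwinf : bForm p q winf winf = 0 := by
      have h1 : Filter.Tendsto (fun k => bForm p q (w (φ k)) (w (φ k))) atTop
          (𝓝 (bForm p q winf winf)) := (continuous_bForm_self.tendsto _).comp hconv
      have h2 : (fun k => bForm p q (w (φ k)) (w (φ k))) = fun _ => (0:ℝ) :=
        funext fun k => hQw (φ k)
      rw [h2] at h1
      exact tendsto_nhds_unique h1 tendsto_const_nhds
    have hBwinf : bForm p q u₀ winf = 0 := by
      have h1 : Filter.Tendsto (fun k => bForm p q u₀ (w (φ k))) atTop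
          (𝓝 (bForm p q u₀ winf)) := ((continuous_bForm_right u₀).tendsto _).comp hconv
      have h3 : Filter.Tendsto (fun k => ‖v (φ k)‖) atTop atTop := by
        apply tendsto_atTop_mono (fun k => le_of_lt (lt_of_le_of_lt (Nat.cast_le.2 hφ.le_apply) (hvn (φ k))))
        exact tendsto_natCast_atTop_atTop
      have h4 : Filter.Tendsto (fun k => bForm p q u₀ (w (φ k))) atTop (𝓝 0) := by
        simp only [hBw]
        exact h3.inv_tendsto_atTop
      exact tendsto_nhds_unique h1 h4
    have hwinfcl : Projectivization.mk ℝ winf hwinf0 ∈ closure Ω := by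
      have hwk0 : ∀ k, w (φ k) ≠ 0 := by
        intro k h0
        have := hwsph (φ k); rw [h0] at this; simp at this
      have hsub : Filter.Tendsto (fun k => (⟨w (φ k), hwk0 k⟩ : {x : Fin (p+q+2) → ℝ // x ≠ 0}))
          atTop (𝓝 ⟨winf, hwinf0⟩) := by
        rw [tendsto_subtype_rng]; exact hconv
      have hmk : Filter.Tendsto (fun k => Projectivization.mk ℝ (w (φ k)) (hwk0 k)) atTop
          (𝓝 (Projectivization.mk ℝ winf hwinf0)) := (continuous_mk.tendsto _).comp hsub
      apply isClosed_closure.mem_of_tendsto hmk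
      apply Filter.Eventually.of_forall
      intro k
      have : Projectivization.mk ℝ (w (φ k)) (hwk0 k)
          = Projectivization.mk ℝ (v (φ k)) (hS0 (φ k)) := by
        apply mk_smul_eq
        exact inv_ne_zero (ne_of_gt (hnpos (φ k)))
      rw [this]
      exact hScl (φ k)
    -- contradiction with hmiss
    have hmem : Projectivization.mk ℝ winf hwinf0 ∈
        closure Ω ∩ lightcone (bForm p q) (Projectivization.mk ℝ u₀ hu₀) := by
      refine ⟨hwinfcl, (mem_einSet_mk winf hwinf0).2 hQwinf, ?_⟩
      obtain ⟨a, ha⟩ := exists_smul_rep u₀ hu₀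
      obtain ⟨b, hbr⟩ := exists_smul_rep winf hwinf0
      rw [ha, hbr, bForm_smul_left, bForm_smul_right, hBwinf]
      ring
    rw [hmiss] at hmem
    exact hmem

/-! ### Indefiniteness of the form on the orthogonal complement of a hyperbolic pair -/

lemma bForm_exists_sign (p q : ℕ) (i j : Fin (p+q+2)) (hij : i ≠ j) (σ : ℝ)
    (hσi : (if (i:ℕ) ≤ p then (-1:ℝ) else 1) = σ)
    (hσj : (if (j:ℕ) ≤ p then (-1:ℝ) else 1) = σ)
    (e u₀ : Fin (p+q+2) → ℝ) (he : bForm p q e e = 0) (hu : bForm p q u₀ u₀ = 0)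
    (heu : bForm p q u₀ e = 1) :
    ∃ x, bForm p q u₀ x = 0 ∧ bForm p q e x = 0 ∧ 0 < σ * bForm p q x x := by
  by_contra hcon
  push_neg at hcon
  have hσ2 : σ * σ = 1 := by
    rcases ite_eq_iff.1 hσi with ⟨-, h⟩ | ⟨-, h⟩ <;> rw [← h] <;> norm_num
  set Ei : Fin (p+q+2) → ℝ := Pi.single i 1 with hEi
  set Ej : Fin (p+q+2) → ℝ := Pi.single j 1 with hEj
  have hQi : bForm p q Ei Ei = σ := by
    rw [hEi, bForm_single]; simp [hσi]
  have hQj : bForm p q Ej Ej = σ := by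
    rw [hEj, bForm_single]; simp [hσj]
  have hQij : bForm p q Ei Ej = 0 := by
    rw [bForm_single, hEi, Pi.single_eq_of_ne (Ne.symm hij)]; ring
  have hQji : bForm p q Ej Ei = 0 := by rw [bForm_symm]; exact hQij
  set ai := bForm p q u₀ Ei with hai
  set aj := bForm p q u₀ Ej with haj
  have heu' : bForm p q e u₀ = 1 := by rw [bForm_symm]; exact heu
  have key : ∀ a b : ℝ,
      a^2 + b^2 ≤ 2 * σ * (bForm p q u₀ (a • Ei + b • Ej)) * (bForm p q e (a • Ei + b • Ej)) := by
    intro a b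
    set z := a • Ei + b • Ej with hz
    set A := bForm p q u₀ z with hA
    set B := bForm p q e z with hB
    set v := z - A • e - B • u₀ with hv
    have h1 : bForm p q u₀ v = 0 := by
      rw [hv]
      simp only [bForm_sub_right, bForm_smul_right, heu, hu, ← hA]
      ring
    have h2 : bForm p q e v = 0 := by
      rw [hv]
      simp only [bForm_sub_right, bForm_smul_right, he, heu', ← hB]
      ring
    have h1' : bForm p q v u₀ = 0 := by rw [bForm_symm]; exact h1
    have h2' : bForm p q v e = 0 := by rw [bForm_symm]; exact h2
    have h3 : σ * bForm p q v v ≤ 0 := hcon v h1 h2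
    have h4 : bForm p q z z = bForm p q v v + 2 * A * B := by
      have hzv : z = v + A • e + B • u₀ := by rw [hv]; module
      rw [hzv]
      simp only [bForm_add_left, bForm_add_right, bForm_smul_left, bForm_smul_right,
        he, hu, heu, heu', h1, h2, h1', h2']
      ring
    have h5 : bForm p q z z = σ * (a^2 + b^2) := by
      rw [hz]
      simp only [bForm_add_left, bForm_add_right, bForm_smul_left, bForm_smul_right,
        hQi, hQj, hQij, hQji]
      ring
    have h6 : σ * bForm p q z z = a^2 + b^2 := by
      rw [h5]; rw [← mul_assoc, hσ2]; ring
    have h7 : σ * bForm p q z z = σ * bForm p q v v + 2 * σ * A * B := by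
      rw [h4]; ring
    have h8 : a^2 + b^2 ≤ 2 * σ * A * B := by linarith
    calc a^2 + b^2 ≤ 2 * σ * A * B := h8
    _ = 2 * σ * (bForm p q u₀ (a • Ei + b • Ej)) * (bForm p q e (a • Ei + b • Ej)) := by
        rw [hA, hB, hz]
  have hA1 : bForm p q u₀ (aj • Ei + (-ai) • Ej) = 0 := by
    simp only [bForm_add_right, bForm_smul_right, ← hai, ← haj]
    ring
  have h0 : ai = 0 ∧ aj = 0 := by
    have := key aj (-ai)
    rw [hA1] at this
    constructor <;> nlinarith [this]
  have h1 : bForm p q u₀ ((1:ℝ) • Ei + (0:ℝ) • Ej) = 0 := by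
    simp only [bForm_add_right, bForm_smul_right, ← hai, ← haj, h0.1]
    ring
  have := key 1 0
  rw [h1] at this
  nlinarith [this]

lemma exists_null_perp (p q : ℕ) (hp : 1 ≤ p) (hq : 1 ≤ q)
    (e u₀ : Fin (p+q+2) → ℝ) (he : bForm p q e e = 0) (hu : bForm p q u₀ u₀ = 0)
    (heu : bForm p q u₀ e = 1) :
    ∃ w, w ≠ 0 ∧ bForm p q u₀ w = 0 ∧ bForm p q e w = 0 ∧ bForm p q w w = 0 := by
  obtain ⟨x, hx1, hx2, hx3⟩ := bForm_exists_sign p q ⟨0, by omega⟩ ⟨1, by omega⟩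
    (by simp [Fin.ext_iff]) (-1) (by simp) (by simp [hp]) e u₀ he hu heu
  obtain ⟨y, hy1, hy2, hy3⟩ := bForm_exists_sign p q ⟨p+1, by omega⟩ ⟨p+2, by omega⟩
    (by simp [Fin.ext_iff]) 1 (by simp) (by simp) e u₀ he hu heu
  have hxneg : bForm p q x x < 0 := by nlinarith [hx3]
  have hypos : 0 < bForm p q y y := by nlinarith [hy3]
  set f : ℝ → ℝ := fun t => bForm p q (x + t • (y - x)) (x + t • (y - x)) with hf
  have hfc : ContinuousOn f (Set.Icc 0 1) := by
    apply Continuous.continuousOn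
    apply continuous_bForm_self.comp
    exact continuous_const.add (continuous_id.smul continuous_const)
  have hf0 : f 0 = bForm p q x x := by simp [hf]
  have hf1 : f 1 = bForm p q y y := by simp [hf]
  have h0mem : (0:ℝ) ∈ Set.Ioo (f 0) (f 1) := by
    rw [hf0, hf1]; exact ⟨hxneg, hypos⟩
  obtain ⟨t, htIoo, htf⟩ := intermediate_value_Ioo (by norm_num : (0:ℝ) ≤ 1) hfc h0mem
  set w := x + t • (y - x) with hw
  have hw0 : w ≠ 0 := by
    intro h0
    have hy : y = (-(t⁻¹ * (1 - t))) • x := by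
      have ht0 : t ≠ 0 := ne_of_gt htIoo.1
      have h1 : t • y = -((1-t) • x) := by
        have h2 : x + t • (y - x) = 0 := h0
        rw [smul_sub] at h2
        rw [← sub_eq_zero]
        calc t • y - -((1-t) • x) = x + (t • y - t • x) := by module
        _ = 0 := h2
      calc y = t⁻¹ • (t • y) := (inv_smul_smul₀ ht0 y).symm
      _ = t⁻¹ • (-((1-t) • x)) := by rw [h1]
      _ = (-(t⁻¹ * (1 - t))) • x := by rw [smul_neg, smul_smul, neg_smul]
    have : bForm p q y y = (-(t⁻¹ * (1 - t)))^2 * bForm p q x x := by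
      rw [hy, bForm_smul_left, bForm_smul_right]; ring
    nlinarith [sq_nonneg (-(t⁻¹ * (1 - t)))]
  refine ⟨w, hw0, ?_, ?_, htf⟩
  · rw [hw, bForm_add_right, bForm_smul_right, bForm_sub_right, hx1, hy1]; ring
  · rw [hw, bForm_add_right, bForm_smul_right, bForm_sub_right, hx2, hy2]; ring

/-! ### Extreme points of the hull of the lift -/

lemma extreme_spec (p q : ℕ) (hp : 1 ≤ p) (hq : 1 ≤ q)
    (Ω : Set (ℙ ℝ (Fin (p + q + 2) → ℝ)))
    (hΩ : IsProperDomain (bForm p q) Ω)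
    (u₀ : Fin (p + q + 2) → ℝ) (hu₀ : u₀ ≠ 0) (hu₀iso : bForm p q u₀ u₀ = 0)
    (e : Fin (p + q + 2) → ℝ)
    (hext : e ∈ Set.extremePoints ℝ (convexHull ℝ (liftSet p q Ω u₀))) :
    ∃ he : e ≠ 0, e ∈ liftSet p q Ω u₀ ∧
      Projectivization.mk ℝ e he ∈ closure Ω \ Ω ∧
      IsPhotonExtremal (bForm p q) Ω (Projectivization.mk ℝ e he) := by
  have hS : e ∈ liftSet p q Ω u₀ := extremePoints_convexHull_subset hext
  obtain ⟨he0, hQe, hclos, hBu0e⟩ := hS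
  -- the key exclusion principle: no photon direction through e stays in the closure
  have key : ∀ w : Fin (p+q+2) → ℝ, (∀ c : ℝ, w ≠ c • e) →
      bForm p q e w = 0 → bForm p q w w = 0 →
      (∀ᶠ t in 𝓝 (0:ℝ), ∀ hh : e + t • w ≠ 0,
        Projectivization.mk ℝ (e + t • w) hh ∈ closure Ω) → False := by
    intro w hnc hew hww hml
    have hnz : ∀ t : ℝ, e + t • w ≠ 0 := add_smul_ne_zero e w he0 hnc
    have hwe : bForm p q w e = 0 := by rw [bForm_symm]; exact hew
    set c := bForm p q u₀ w with hc
    have habs : ∀ᶠ t in 𝓝 (0:ℝ), |t * c| < 1 := by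
      have h1 : Filter.Tendsto (fun t : ℝ => |t * c|) (𝓝 0) (𝓝 |0 * c|) :=
        (continuous_abs.comp (continuous_id.mul continuous_const)).tendsto 0
      rw [zero_mul, abs_zero] at h1
      exact h1.eventually_lt_const one_pos
    have hmlneg : ∀ᶠ t in 𝓝 (0:ℝ), ∀ hh : e + (-t) • w ≠ 0,
        Projectivization.mk ℝ (e + (-t) • w) hh ∈ closure Ω := by
      have hneg : Filter.Tendsto (fun t : ℝ => -t) (𝓝 0) (𝓝 0) := by
        simpa using (continuous_neg.tendsto (0:ℝ))
      exact hneg.eventually hml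
    have hev2 : ∀ᶠ t in 𝓝[≠] (0:ℝ),
        ((∀ hh : e + t • w ≠ 0, Projectivization.mk ℝ (e + t • w) hh ∈ closure Ω) ∧
          (∀ hh : e + (-t) • w ≠ 0, Projectivization.mk ℝ (e + (-t) • w) hh ∈ closure Ω)) ∧
          |t * c| < 1 :=
      ((hml.and hmlneg).and habs).filter_mono nhdsWithin_le_nhds
    obtain ⟨t, ⟨⟨h1, h2⟩, h3⟩, ht0⟩ := (hev2.and eventually_mem_nhdsWithin).exists
    have ht0' : t ≠ 0 := ht0
    obtain ⟨hc1, hc2⟩ := abs_lt.1 h3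
    have hsp : (0:ℝ) < 1 + t * c := by linarith
    have hsm : (0:ℝ) < 1 + (-t) * c := by linarith [hc2]
    have hfS : ∀ s : ℝ, 0 < 1 + s * c →
        (∀ hh : e + s • w ≠ 0, Projectivization.mk ℝ (e + s • w) hh ∈ closure Ω) →
        ((1 + s * c)⁻¹ • (e + s • w)) ∈ liftSet p q Ω u₀ := by
      intro s hspos hclo
      have hcnz : (1 + s * c) ≠ 0 := ne_of_gt hspos
      have hv0 : (1 + s * c)⁻¹ • (e + s • w) ≠ 0 :=
        smul_ne_zero (inv_ne_zero hcnz) (hnz s)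
      refine ⟨hv0, ?_, ?_, ?_⟩
      · simp only [bForm_smul_left, bForm_smul_right, bForm_add_left, bForm_add_right,
          hQe, hww, hew, hwe]
        ring
      · rw [mk_smul_eq (e + s • w) (hnz s) _ (inv_ne_zero hcnz)]
        exact hclo (hnz s)
      · simp only [bForm_smul_right, bForm_add_right, hBu0e, ← hc]
        field_simp
    have hfp := hfS t hsp h1
    have hfm := hfS (-t) hsm h2
    have hseg : e ∈ openSegment ℝ ((1 + t * c)⁻¹ • (e + t • w))
        ((1 + (-t) * c)⁻¹ • (e + (-t) • w)) := by
      refine ⟨(1 + t * c)/2, (1 + (-t) * c)/2, by linarith, by linarith, by ring, ?_⟩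
      rw [smul_smul, smul_smul]
      have e1 : (1 + t * c)/2 * (1 + t * c)⁻¹ = 1/2 := by
        rw [div_mul_eq_mul_div, mul_inv_cancel₀ (ne_of_gt hsp)]
      have e2 : (1 + (-t) * c)/2 * (1 + (-t) * c)⁻¹ = 1/2 := by
        rw [div_mul_eq_mul_div, mul_inv_cancel₀ (ne_of_gt hsm)]
      rw [e1, e2]
      module
    have hboth := hext.2 (subset_convexHull ℝ _ hfp) (subset_convexHull ℝ _ hfm) hseg
    have h5 : e + t • w = (1 + t * c) • e := by
      have := congrArg (fun v => (1 + t * c) • v) hboth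
      rw [smul_inv_smul₀ (ne_of_gt hsp)] at this
      exact this
    have h6 : t • w = (t * c) • e := by
      have h5' : t • w = (1 + t * c) • e - e := by rw [← h5]; abel
      rw [h5']; module
    have h7 : w = c • e := by
      have h8 := congrArg (fun v => t⁻¹ • v) h6
      rw [inv_smul_smul₀ ht0', smul_smul] at h8
      rw [h8]
      congr 1
      field_simp
    exact hnc c h7
  -- e is not in Ω
  have hopen : IsOpen (Subtype.val ⁻¹' Ω : Set (einSet (bForm p q))) := hΩ.1.2.1
  have hnotΩ : Projectivization.mk ℝ e he0 ∉ Ω := by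
    intro hmem
    obtain ⟨w, hw0, hwu, hwe, hww⟩ := exists_null_perp p q hp hq e u₀ hQe hu₀iso hBu0e
    have hnc : ∀ c : ℝ, w ≠ c • e := by
      intro c hcw
      rw [hcw, bForm_smul_right, hBu0e, mul_one] at hwu
      rw [hwu, zero_smul] at hcw
      exact hw0 hcw
    have hnz : ∀ t : ℝ, e + t • w ≠ 0 := add_smul_ne_zero e w he0 hnc
    have hwe' : bForm p q w e = 0 := by rw [bForm_symm]; exact hwe
    have hQn : ∀ t : ℝ, bForm p q (e + t • w) (e + t • w) = 0 := by
      intro t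
      simp only [bForm_add_left, bForm_add_right, bForm_smul_left, bForm_smul_right,
        hQe, hww, hwe, hwe']
      ring
    have hcont : Continuous (fun t : ℝ => e + t • w) :=
      continuous_const.add (continuous_id.smul continuous_const)
    have hγ : Continuous (fun t : ℝ =>
        (⟨Projectivization.mk ℝ (e + t • w) (hnz t),
          (mem_einSet_mk _ _).2 (hQn t)⟩ : einSet (bForm p q))) :=
      (continuous_mk.comp (hcont.subtype_mk hnz)).subtype_mk _
    have h00 : Projectivization.mk ℝ (e + (0:ℝ) • w) (hnz 0) = Projectivization.mk ℝ e he0 :=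
      mk_congr _ _ _ _ (by simp)
    have hmem0 : (⟨Projectivization.mk ℝ (e + (0:ℝ) • w) (hnz 0),
        (mem_einSet_mk _ _).2 (hQn 0)⟩ : einSet (bForm p q)) ∈ Subtype.val ⁻¹' Ω := by
      show Projectivization.mk ℝ (e + (0:ℝ) • w) (hnz 0) ∈ Ω
      rw [h00]; exact hmem
    have hev : ∀ᶠ t in 𝓝 (0:ℝ), Projectivization.mk ℝ (e + t • w) (hnz t) ∈ Ω :=
      (hγ.tendsto 0).eventually (hopen.eventually_mem hmem0)
    exact key w hnc hwe hww (hev.mono (fun t ht hh => subset_closure ht))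
  refine ⟨he0, ⟨he0, hQe, hclos, hBu0e⟩, ⟨hclos, hnotΩ⟩, ⟨hclos, hnotΩ⟩, ?_⟩
  -- photon extremality
  rintro Pl ⟨hdim, hiso⟩ hrep ⟨U, hUopen, haU, hUsub⟩
  have hePl : e ∈ Pl := by
    obtain ⟨a, ha⟩ := exists_smul_rep e he0
    have h1 : ((a:ℝ)⁻¹ • (Projectivization.mk ℝ e he0).rep) ∈ Pl := Pl.smul_mem _ hrep
    rw [ha, inv_smul_smul₀ a.ne_zero] at h1
    exact h1
  obtain ⟨w, hwPl, hwns⟩ : ∃ w ∈ Pl, w ∉ Submodule.span ℝ {e} := by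
    by_contra hcon
    push_neg at hcon
    have hle : Pl ≤ Submodule.span ℝ {e} := hcon
    have h1 : Module.finrank ℝ Pl ≤ Module.finrank ℝ (Submodule.span ℝ ({e} : Set (Fin (p+q+2) → ℝ))) :=
      Submodule.finrank_mono hle
    rw [hdim, finrank_span_singleton he0] at h1
    omega
  have hnc : ∀ c : ℝ, w ≠ c • e := by
    intro c hcw
    exact hwns (by rw [hcw]; exact Submodule.smul_mem _ _ (Submodule.mem_span_singleton_self e))
  have hnz : ∀ t : ℝ, e + t • w ≠ 0 := add_smul_ne_zero e w he0 hnc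
  have hew : bForm p q e w = 0 := hiso e hePl w hwPl
  have hww : bForm p q w w = 0 := hiso w hwPl w hwPl
  have hcont : Continuous (fun t : ℝ => Projectivization.mk ℝ (e + t • w) (hnz t)) :=
    continuous_mk.comp ((continuous_const.add (continuous_id.smul continuous_const)).subtype_mk hnz)
  have h00 : Projectivization.mk ℝ (e + (0:ℝ) • w) (hnz 0) = Projectivization.mk ℝ e he0 :=
    mk_congr _ _ _ _ (by simp)
  have hev : ∀ᶠ t in 𝓝 (0:ℝ), Projectivization.mk ℝ (e + t • w) (hnz t) ∈ U := by
    have h1 : Filter.Tendsto (fun t : ℝ => Projectivization.mk ℝ (e + t • w) (hnz t)) (𝓝 0)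
        (𝓝 (Projectivization.mk ℝ e he0)) := by
      rw [← h00]; exact hcont.tendsto 0
    exact h1.eventually (hUopen.eventually_mem haU)
  apply key w hnc hew hww
  apply hev.mono
  intro t ht hh
  apply hUsub
  refine ⟨ht, ?_⟩
  show (Projectivization.mk ℝ (e + t • w) hh).rep ∈ Pl
  obtain ⟨a, ha⟩ := exists_smul_rep (e + t • w) hh
  rw [ha]
  exact Pl.smul_mem _ (Pl.add_mem hePl (Pl.smul_mem _ hwPl))

/-! ### The lift spans -/

lemma span_liftSet (p q : ℕ) (hp : 1 ≤ p) (hq : 1 ≤ q)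
    (Ω : Set (ℙ ℝ (Fin (p + q + 2) → ℝ)))
    (hΩ : IsProperDomain (bForm p q) Ω)
    (u₀ : Fin (p + q + 2) → ℝ) (hu₀ : u₀ ≠ 0) (hu₀iso : bForm p q u₀ u₀ = 0)
    (hmiss : closure Ω ∩ lightcone (bForm p q) (Projectivization.mk ℝ u₀ hu₀) = ∅) :
    Submodule.span ℝ (liftSet p q Ω u₀) = ⊤ := by
  obtain ⟨⟨hsub, hopen, hconn⟩, -⟩ := hΩ
  obtain ⟨⟨x, hxein⟩, hxΩ⟩ := hconn.nonempty
  have hr0 : x.rep ≠ 0 := x.rep_nonzero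
  have hQr : bForm p q x.rep x.rep = 0 := hxein
  set lam := bForm p q u₀ x.rep with hlam
  have hlam0 : lam ≠ 0 := by
    intro h0
    have hmem : x ∈ closure Ω ∩ lightcone (bForm p q) (Projectivization.mk ℝ u₀ hu₀) := by
      refine ⟨subset_closure hxΩ, hxein, ?_⟩
      obtain ⟨a, ha⟩ := exists_smul_rep u₀ hu₀
      rw [ha, bForm_smul_left, ← hlam, h0]
      ring
    rw [hmiss] at hmem
    exact hmem
  set e₀ : Fin (p+q+2) → ℝ := lam⁻¹ • x.rep with he₀def
  have he₀ : e₀ ≠ 0 := smul_ne_zero (inv_ne_zero hlam0) hr0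
  have hmk : Projectivization.mk ℝ e₀ he₀ = x :=
    (mk_smul_eq x.rep hr0 lam⁻¹ (inv_ne_zero hlam0) he₀).trans x.mk_rep
  have hQe₀ : bForm p q e₀ e₀ = 0 := by
    rw [he₀def, bForm_smul_left, bForm_smul_right, hQr]; ring
  have hBe₀ : bForm p q u₀ e₀ = 1 := by
    rw [he₀def, bForm_smul_right, ← hlam]
    field_simp
  have hBe₀' : bForm p q e₀ u₀ = 1 := by rw [bForm_symm]; exact hBe₀
  have he₀S : e₀ ∈ liftSet p q Ω u₀ :=
    ⟨he₀, hQe₀, by rw [hmk]; exact subset_closure hxΩ, hBe₀⟩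
  -- key deformation construction
  have key : ∀ z : Fin (p+q+2) → ℝ, bForm p q u₀ z = 0 → bForm p q e₀ z = 0 →
      ∃ t : ℝ, t ≠ 0 ∧
        (e₀ + t • z + (-(t^2 * bForm p q z z)/2) • u₀) ∈ liftSet p q Ω u₀ ∧
        (e₀ + (-t) • z + (-((-t)^2 * bForm p q z z)/2) • u₀) ∈ liftSet p q Ω u₀ := by
    intro z hz1 hz2
    have hz1' : bForm p q z u₀ = 0 := by rw [bForm_symm]; exact hz1
    have hz2' : bForm p q z e₀ = 0 := by rw [bForm_symm]; exact hz2
    set Qz := bForm p q z z with hQz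
    set nv : ℝ → (Fin (p+q+2) → ℝ) := fun t => e₀ + t • z + (-(t^2 * Qz)/2) • u₀ with hnv
    have hBn : ∀ t, bForm p q u₀ (nv t) = 1 := by
      intro t
      simp only [hnv, bForm_add_right, bForm_smul_right, hBe₀, hz1, hu₀iso]
      ring
    have hnz : ∀ t, nv t ≠ 0 := by
      intro t h0
      have := hBn t
      rw [h0, bForm_zero_right] at this
      norm_num at this
    have hQn : ∀ t, bForm p q (nv t) (nv t) = 0 := by
      intro t
      simp only [hnv, bForm_add_left, bForm_add_right, bForm_smul_left, bForm_smul_right,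
        hQe₀, hu₀iso, hz1, hz2, hz1', hz2', hBe₀, hBe₀', ← hQz]
      ring
    have hcont : Continuous nv := by
      apply Continuous.add
      · exact continuous_const.add (continuous_id.smul continuous_const)
      · refine Continuous.smul (f := fun t : ℝ => -(t^2 * Qz)/2) (g := fun _ : ℝ => u₀) ?_ continuous_const
        have : Continuous (fun t : ℝ => -(t^2 * Qz)/2) := by continuity
        exact this
    have hγ : Continuous (fun t : ℝ =>
        (⟨Projectivization.mk ℝ (nv t) (hnz t),
          (mem_einSet_mk _ _).2 (hQn t)⟩ : einSet (bForm p q))) :=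
      (continuous_mk.comp (hcont.subtype_mk hnz)).subtype_mk _
    have h00 : Projectivization.mk ℝ (nv 0) (hnz 0) = x := by
      rw [mk_congr (nv 0) e₀ (hnz 0) he₀ (by simp [hnv])]
      exact hmk
    have hmem0 : (⟨Projectivization.mk ℝ (nv 0) (hnz 0),
        (mem_einSet_mk _ _).2 (hQn 0)⟩ : einSet (bForm p q)) ∈ Subtype.val ⁻¹' Ω := by
      show Projectivization.mk ℝ (nv 0) (hnz 0) ∈ Ω
      rw [h00]; exact hxΩ
    have hev : ∀ᶠ t in 𝓝 (0:ℝ), Projectivization.mk ℝ (nv t) (hnz t) ∈ Ω :=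
      (hγ.tendsto 0).eventually (hopen.eventually_mem hmem0)
    have hevS : ∀ᶠ t in 𝓝 (0:ℝ), nv t ∈ liftSet p q Ω u₀ :=
      hev.mono (fun t ht => ⟨hnz t, hQn t, subset_closure ht, hBn t⟩)
    have hevneg : ∀ᶠ t in 𝓝 (0:ℝ), nv (-t) ∈ liftSet p q Ω u₀ := by
      have hneg : Filter.Tendsto (fun t : ℝ => -t) (𝓝 0) (𝓝 0) := by
        simpa using (continuous_neg.tendsto (0:ℝ))
      exact hneg.eventually hevS
    have hev2 : ∀ᶠ t in 𝓝[≠] (0:ℝ), nv t ∈ liftSet p q Ω u₀ ∧ nv (-t) ∈ liftSet p q Ω u₀ :=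
      (hevS.and hevneg).filter_mono nhdsWithin_le_nhds
    obtain ⟨t, ⟨hA, hB⟩, ht0⟩ := (hev2.and eventually_mem_nhdsWithin).exists
    exact ⟨t, ht0, hA, hB⟩
  -- u₀ lies in the span
  obtain ⟨xneg, hx1, hx2, hx3⟩ := bForm_exists_sign p q ⟨0, by omega⟩ ⟨1, by omega⟩
    (by simp [Fin.ext_iff]) (-1) (by simp) (by simp [hp]) e₀ u₀ hQe₀ hu₀iso hBe₀
  have hQxneg : bForm p q xneg xneg < 0 := by nlinarith [hx3]
  obtain ⟨t, ht0, hA, hB⟩ := key xneg hx1 hx2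
  have hu₀span : u₀ ∈ Submodule.span ℝ (liftSet p q Ω u₀) := by
    have ht2 : (0:ℝ) < t^2 := by positivity
    have hcnz : -(t^2 * bForm p q xneg xneg) ≠ 0 := by nlinarith
    have hiden : u₀ = (-(t^2 * bForm p q xneg xneg))⁻¹ •
        ((e₀ + t • xneg + (-(t^2 * bForm p q xneg xneg)/2) • u₀)
          + (e₀ + (-t) • xneg + (-((-t)^2 * bForm p q xneg xneg)/2) • u₀)
          - (2:ℝ) • e₀) := by
      rw [show ((e₀ + t • xneg + (-(t^2 * bForm p q xneg xneg)/2) • u₀)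
          + (e₀ + (-t) • xneg + (-((-t)^2 * bForm p q xneg xneg)/2) • u₀)
          - (2:ℝ) • e₀) = (-(t^2 * bForm p q xneg xneg)) • u₀ by module]
      rw [smul_smul, inv_mul_cancel₀ hcnz, one_smul]
    have hmem2 : (-(t^2 * bForm p q xneg xneg))⁻¹ •
        ((e₀ + t • xneg + (-(t^2 * bForm p q xneg xneg)/2) • u₀)
          + (e₀ + (-t) • xneg + (-((-t)^2 * bForm p q xneg xneg)/2) • u₀)
          - (2:ℝ) • e₀) ∈ Submodule.span ℝ (liftSet p q Ω u₀) :=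
      Submodule.smul_mem _ _ (Submodule.sub_mem _
        (Submodule.add_mem _ (Submodule.subset_span hA) (Submodule.subset_span hB))
        (Submodule.smul_mem _ _ (Submodule.subset_span he₀S)))
    rwa [← hiden] at hmem2
  -- all of V lies in the span
  have hVspan : ∀ z : Fin (p+q+2) → ℝ, bForm p q u₀ z = 0 → bForm p q e₀ z = 0 →
      z ∈ Submodule.span ℝ (liftSet p q Ω u₀) := by
    intro z hz1 hz2
    obtain ⟨s, hs0, hsA, -⟩ := key z hz1 hz2
    have hiden : z = s⁻¹ • ((e₀ + s • z + (-(s^2 * bForm p q z z)/2) • u₀) - e₀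
        + (s^2 * bForm p q z z/2) • u₀) := by
      rw [show ((e₀ + s • z + (-(s^2 * bForm p q z z)/2) • u₀) - e₀
        + (s^2 * bForm p q z z/2) • u₀) = s • z by module]
      rw [inv_smul_smul₀ hs0]
    rw [hiden]
    exact Submodule.smul_mem _ _ (Submodule.add_mem _
      (Submodule.sub_mem _ (Submodule.subset_span hsA) (Submodule.subset_span he₀S))
      (Submodule.smul_mem _ _ hu₀span))
  rw [eq_top_iff]
  rintro z -
  have hz1 : bForm p q u₀ (z - (bForm p q u₀ z) • e₀ - (bForm p q e₀ z) • u₀) = 0 := by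
    simp only [bForm_sub_right, bForm_smul_right, hBe₀, hu₀iso]
    ring
  have hz2 : bForm p q e₀ (z - (bForm p q u₀ z) • e₀ - (bForm p q e₀ z) • u₀) = 0 := by
    simp only [bForm_sub_right, bForm_smul_right, hQe₀, hBe₀']
    ring
  have hdec : z = (z - (bForm p q u₀ z) • e₀ - (bForm p q e₀ z) • u₀)
      + (bForm p q u₀ z) • e₀ + (bForm p q e₀ z) • u₀ := by module
  rw [hdec]
  exact Submodule.add_mem _ (Submodule.add_mem _ (hVspan _ hz1 hz2)
    (Submodule.smul_mem _ _ (Submodule.subset_span he₀S)))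
    (Submodule.smul_mem _ _ hu₀span)

end Stmt17Aux

/-- Extreme points of the convex hull of the lift of a proper domain
give photon-extremal boundary points, and they contain a basis of `ℝⁿ`. -/
theorem stmt_17 (p q : ℕ) (hp : 1 ≤ p) (hq : 1 ≤ q)
    (Ω : Set (ℙ ℝ (Fin (p + q + 2) → ℝ)))
    (hΩ : IsProperDomain (bForm p q) Ω)
    (u₀ : Fin (p + q + 2) → ℝ) (hu₀ : u₀ ≠ 0) (hu₀iso : bForm p q u₀ u₀ = 0)
    (hmiss : closure Ω ∩ lightcone (bForm p q) (Projectivization.mk ℝ u₀ hu₀) = ∅) :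
    IsCompact (liftSet p q Ω u₀) ∧
    (∀ e ∈ Set.extremePoints ℝ (convexHull ℝ (liftSet p q Ω u₀)),
      ∃ he : e ≠ 0, e ∈ liftSet p q Ω u₀ ∧
        Projectivization.mk ℝ e he ∈ closure Ω \ Ω ∧
        IsPhotonExtremal (bForm p q) Ω (Projectivization.mk ℝ e he)) ∧
    ∃ es : Fin (p + q + 2) → (Fin (p + q + 2) → ℝ),
      (∀ i, es i ∈ Set.extremePoints ℝ (convexHull ℝ (liftSet p q Ω u₀))) ∧
      LinearIndependent ℝ es ∧ Submodule.span ℝ (Set.range es) = ⊤ ∧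
      ∀ i, ∃ h : es i ≠ 0,
        IsPhotonExtremal (bForm p q) Ω (Projectivization.mk ℝ (es i) h) := by
  classical
  have hcomp : IsCompact (liftSet p q Ω u₀) :=
    Stmt17Aux.liftSet_isCompact p q Ω u₀ hu₀ hmiss
  refine ⟨hcomp, fun e he => Stmt17Aux.extreme_spec p q hp hq Ω hΩ u₀ hu₀ hu₀iso e he, ?_⟩
  have hspanS : Submodule.span ℝ (liftSet p q Ω u₀) = ⊤ :=
    Stmt17Aux.span_liftSet p q hp hq Ω hΩ u₀ hu₀ hu₀iso hmiss
  set EP := Set.extremePoints ℝ (convexHull ℝ (liftSet p q Ω u₀)) with hEP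
  have hSne : (liftSet p q Ω u₀).Nonempty := by
    by_contra hcon
    rw [Set.not_nonempty_iff_eq_empty] at hcon
    rw [hcon, Submodule.span_empty] at hspanS
    exact absurd hspanS bot_ne_top
  have hsubEP : liftSet p q Ω u₀ ⊆ (Submodule.span ℝ EP : Set (Fin (p+q+2) → ℝ)) := by
    have hKM := closure_convexHull_extremePoints
      (Stmt17Aux.isCompact_convexHull' hSne hcomp) (convex_convexHull ℝ _)
    intro v hv
    have hv1 : v ∈ convexHull ℝ (liftSet p q Ω u₀) := subset_convexHull ℝ _ hv
    rw [← hKM] at hv1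
    have hcc : convexHull ℝ EP ⊆ (Submodule.span ℝ EP : Set (Fin (p+q+2) → ℝ)) :=
      convexHull_min Submodule.subset_span (Submodule.span ℝ EP).convex
    have hcl : closure (convexHull ℝ EP) ⊆ (Submodule.span ℝ EP : Set (Fin (p+q+2) → ℝ)) := by
      rw [← (Submodule.closed_of_finiteDimensional (Submodule.span ℝ EP)).closure_eq]
      exact closure_mono hcc
    exact hcl hv1
  have hspanEP : Submodule.span ℝ EP = ⊤ := by
    rw [eq_top_iff, ← hspanS]
    exact Submodule.span_le.2 hsubEP
  obtain ⟨b, hbsub, hbspan, hbli⟩ := exists_linearIndependent ℝ EP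
  rw [hspanEP] at hbspan
  have hbfin : b.Finite := hbli.setFinite
  haveI := hbfin.fintype
  let hbbasis : Module.Basis b ℝ (Fin (p+q+2) → ℝ) :=
    Module.Basis.mk hbli (by rw [Subtype.range_coe, hbspan])
  have hcard : Fintype.card b = p + q + 2 := by
    have h1 := Module.finrank_eq_card_basis hbbasis
    rw [Module.finrank_fin_fun] at h1
    omega
  let eqv : Fin (p+q+2) ≃ b := (Fintype.equivFinOfCardEq hcard).symm
  have hrange : Set.range (fun i => ((eqv i : b) : Fin (p+q+2) → ℝ)) = b := by
    have h1 : (fun i => ((eqv i : b) : Fin (p+q+2) → ℝ))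
        = (Subtype.val : b → (Fin (p+q+2) → ℝ)) ∘ eqv := rfl
    rw [h1, Set.range_comp, Equiv.range_eq_univ, Set.image_univ, Subtype.range_coe]
  refine ⟨fun i => ((eqv i : b) : Fin (p+q+2) → ℝ), fun i => hbsub (eqv i).2, ?_, ?_, ?_⟩
  · exact hbli.comp eqv eqv.injective
  · rw [hrange, hbspan]
  · intro i
    obtain ⟨h, -, -, hpe⟩ := Stmt17Aux.extreme_spec p q hp hq Ω hΩ u₀ hu₀ hu₀iso _
      (hbsub (eqv i).2)
    exact ⟨h, hpe⟩
end
end
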